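/- arXiv:2106.02541 — 8 statements merged into one kernel-verified Lean document; each statement's English description precedes it below -/
import Mathlib

section
/- Let G be a finitely generated group, G₀ a normal finite-index subgroup of G, X a set, and ρ₀ : G₀ → Sym(X) a homomorphism. Suppose the G₀-action is canonical, i.e. there exists a homomorphism Ψ : Aut(G₀) → Sym(X) with Ψ(Ad(g)) = ρ₀(g) for every g ∈ G₀, where Ad(g) denotes conjugation by g. Then: (i) there exists a homomorphism ρ : G → Sym(X) whose restriction to G₀ equals ρ₀; and (ii) this G-action is nearly canonical: there exist a finite-index subgroup A of Aut(G) containing Inn(G) and a homomorphism Θ : A → Sym(X) such that Θ(Ad(g)) = ρ(g) for every g ∈ G. -/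
open Pointwise

/-- A bijection of types induces a multiplicative equivalence of permutation groups. -/
def permCongrMulEquiv {α β : Type*} (e : α ≃ β) : Equiv.Perm α ≃* Equiv.Perm β where
  toEquiv := e.permCongr
  map_mul' p q := by
    ext x
    simp [Equiv.permCongr_apply]

/-- A finitely generated group has finitely many homomorphisms to a finite monoid. -/
lemma finite_monoidHom_of_fg {G M : Type*} [Group G] [Monoid M] [Finite M]
    (hG : Group.FG G) : Finite (G →* M) := by
  obtain ⟨S, hS⟩ := hG.out
  refine Finite.of_injective (fun f : G →* M => (fun s : S => f s)) ?_
  intro f g h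
  refine MonoidHom.eq_of_eqOn_dense hS ?_
  intro x hx
  exact congrFun h ⟨x, hx⟩

/-- A finitely generated group has finitely many subgroups of a given finite index. -/
lemma finite_subgroup_index_eq {G : Type*} [Group G] (hG : Group.FG G) {n : ℕ}
    (hn : n ≠ 0) : Finite {H : Subgroup G // H.index = n} := by
  have hfin : Finite (G →* Equiv.Perm (Fin n)) := finite_monoidHom_of_fg hG
  have key : ∀ H : {H : Subgroup G // H.index = n},
      ∃ p : (G →* Equiv.Perm (Fin n)) × Fin n,
        ∀ g : G, g ∈ H.1 ↔ p.1 g p.2 = p.2 := by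
    rintro ⟨H, hH⟩
    have hcard : Nat.card (G ⧸ H) = n := by rw [← Subgroup.index_eq_card]; exact hH
    have : Finite (G ⧸ H) := Nat.finite_of_card_ne_zero (by rw [hcard]; exact hn)
    let e : (G ⧸ H) ≃ Fin n := Finite.equivFinOfCardEq hcard
    refine ⟨⟨(permCongrMulEquiv e).toMonoidHom.comp (MulAction.toPermHom G (G ⧸ H)),
      e ((1:G) : G ⧸ H)⟩, fun g => ?_⟩
    have h1 : g • ((1:G) : G ⧸ H) = (g : G ⧸ H) := by
      show ((g * 1 : G) : G ⧸ H) = (g : G ⧸ H)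
      rw [mul_one]
    simp only [MonoidHom.comp_apply, MulEquiv.coe_toMonoidHom, permCongrMulEquiv,
      MulEquiv.coe_mk, Equiv.permCongr_apply, Equiv.symm_apply_apply,
      MulAction.toPermHom_apply, MulAction.toPerm_apply, h1]
    rw [e.apply_eq_iff_eq, QuotientGroup.eq]
    simp
  choose p hp using key
  have hinj : Function.Injective p := by
    intro H₁ H₂ h
    apply Subtype.ext
    ext g
    rw [hp H₁ g, hp H₂ g, h]
  exact Finite.of_injective p hinj

/-- If `G₀` is a normal finite-index subgroup of a finitely generated group `G` and
`ρ₀ : G₀ → Sym(X)` is a canonical action (it factors through `Aut(G₀)` via conjugation),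
then it extends to an action `ρ` of `G` on `X` which is nearly canonical: `ρ` factors,
via conjugation, through a finite-index subgroup `A` of `Aut(G)` containing `Inn(G)`. -/
theorem nearly_canonical_extension {G : Type*} [Group G] (hG : Group.FG G)
    (G₀ : Subgroup G) [G₀.Normal] (hfi : G₀.FiniteIndex)
    {X : Type*} (ρ₀ : G₀ →* Equiv.Perm X)
    (Ψ : MulAut ↥G₀ →* Equiv.Perm X)
    (hΨ : ∀ g : G₀, Ψ (MulAut.conj g) = ρ₀ g) :
    ∃ ρ : G →* Equiv.Perm X,
      (∀ g : G₀, ρ g = ρ₀ g) ∧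
      ∃ A : Subgroup (MulAut G), A.FiniteIndex ∧
        (MulAut.conj : G →* MulAut G).range ≤ A ∧
        ∃ Θ : A →* Equiv.Perm X,
          ∀ (g : G) (hg : MulAut.conj g ∈ A), Θ ⟨MulAut.conj g, hg⟩ = ρ g := by
  classical
  -- the stabilizer of `G₀` in `Aut G` under the pointwise action
  set A : Subgroup (MulAut G) := MulAction.stabilizer (MulAut G) G₀ with hA
  have hmemA : ∀ φ : MulAut G, φ ∈ A ↔ G₀.map φ.toMonoidHom = G₀ := by
    intro φ
    rw [hA, MulAction.mem_stabilizer_iff, Subgroup.pointwise_smul_def]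
    rfl
  -- restriction homomorphism `A →* MulAut G₀`
  have hres : ∀ φ : A, G₀.map ((φ : MulAut G) : G →* G) = G₀ := fun φ => (hmemA _).mp φ.2
  let r : A →* MulAut ↥G₀ :=
    { toFun := fun φ =>
        ((MulEquiv.subgroupMap ((φ : MulAut G) : G ≃* G) G₀).trans
          (MulEquiv.subgroupCongr (hres φ)))
      map_one' := by
        ext x
        rfl
      map_mul' := by
        intro φ ψ
        ext x
        rfl }
  -- inner automorphisms lie in A
  have hconjA : ∀ g : G, MulAut.conj g ∈ A := by
    intro g
    rw [hA, MulAction.mem_stabilizer_iff]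
    exact Subgroup.Normal.conj_smul_eq_self g G₀
  let Θ : A →* Equiv.Perm X := Ψ.comp r
  let ρ : G →* Equiv.Perm X :=
    Θ.comp { toFun := fun g => (⟨MulAut.conj g, hconjA g⟩ : A)
             map_one' := by ext : 1; simp
             map_mul' := by intro a b; ext : 1; simp }
  refine ⟨ρ, ?_, A, ?_, ?_, Θ, ?_⟩
  · -- restriction to G₀
    intro g
    have hr : r ⟨MulAut.conj (g : G), hconjA g⟩ = MulAut.conj g := by
      ext x
      rfl
    show Ψ (r ⟨MulAut.conj (g : G), hconjA g⟩) = ρ₀ g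
    rw [hr, hΨ]
  · -- finite index
    have horb : MulAction.orbit (MulAut G) G₀ ⊆ {H : Subgroup G | H.index = G₀.index} := by
      rintro K ⟨φ, rfl⟩
      show (G₀.map (MulDistribMulAction.toMonoidEnd (MulAut G) G φ)).index = G₀.index
      exact Subgroup.index_map_eq G₀ φ.surjective
        (fun x hx => by
          have hx' : φ x = 1 := hx
          rw [show x = 1 from φ.injective (hx'.trans (map_one φ).symm)]
          exact G₀.one_mem)
    have hfin : {H : Subgroup G | H.index = G₀.index}.Finite := by
      rw [← Set.finite_coe_iff]
      exact finite_subgroup_index_eq hG hfi.index_ne_zero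
    have horbfin : (MulAction.orbit (MulAut G) G₀).Finite := hfin.subset horb
    constructor
    rw [hA, MulAction.index_stabilizer]
    exact (Set.ncard_pos horbfin).mpr (MulAction.nonempty_orbit G₀) |>.ne'
  · -- contains inner automorphisms
    rintro _ ⟨g, rfl⟩
    exact hconjA g
  · -- compatibility
    intro g hg
    rfl
end

section
/- Let φ be an automorphism of the free group F_n, let G = F_n ⋊_φ ℤ, and let s = (1, 1) ∈ G be the stable letter. Suppose w ∈ F_n (viewed as an element of G) is nontrivial, is not a proper power in F_n (i.e. if w = v^m with v ∈ F_n and m ∈ ℤ then m = 1 or m = −1), and commutes with s (equivalently, φ(w) = w). Then the subgroup ⟨w, s⟩ of G is equal to its own normalizer in G. -/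
open SemidirectProduct

/-- The range of the conjugation homomorphism is a normal subgroup of `MulAut G`. -/
instance MulAut.conj_range_normal (G : Type*) [Group G] :
    ((MulAut.conj : G →* MulAut G).range).Normal := by
  constructor
  rintro - ⟨g, rfl⟩ α
  refine ⟨α g, ?_⟩
  ext x
  simp [MulAut.conj_apply, MulAut.mul_apply, map_mul]

/-- The outer automorphism group `Out(G) = Aut(G)/Inn(G)`. -/
abbrev OutG (G : Type*) [Group G] : Type _ :=
  MulAut G ⧸ (MulAut.conj : G →* MulAut G).range

/-- The conjugacy length of an element of a free group: the minimal length of the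
reduced word of a conjugate. -/
noncomputable def conjLength {n : ℕ} (g : FreeGroup (Fin n)) : ℕ :=
  sInf {m : ℕ | ∃ v : FreeGroup (Fin n), FreeGroup.norm (v * g * v⁻¹) = m}

/-- `φ` is polynomially growing of degree `d`: every element grows at most like `k ^ d`
under iteration, and some element grows at least like `k ^ d`. -/
def PolyGrowth {n : ℕ} (φ : MulAut (FreeGroup (Fin n))) (d : ℕ) : Prop :=
  (∀ g : FreeGroup (Fin n), ∃ C : ℝ, ∀ k : ℕ, 1 ≤ k →
      (conjLength ((φ ^ k) g) : ℝ) ≤ C * (k : ℝ) ^ d) ∧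
  ∃ g₀ : FreeGroup (Fin n), ∃ A : ℝ, 0 < A ∧ ∀ k : ℕ, 1 ≤ k →
      A * (k : ℝ) ^ d ≤ (conjLength ((φ ^ k) g₀) : ℝ)

/-- The free-by-cyclic group `F_n ⋊_φ ℤ`, where the generator `1` of `ℤ` acts by `φ`. -/
abbrev FreeByCyclic (n : ℕ) (φ : MulAut (FreeGroup (Fin n))) : Type :=
  FreeGroup (Fin n) ⋊[zpowersHom (MulAut (FreeGroup (Fin n))) φ] Multiplicative ℤ

/-!
Since `φ` fixes `w`, the subgroup `⟨w, s⟩` is `⟨w⟩ ⋊ ℤ`, and an element of `F_n ⋊_φ ℤ`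
normalizes it exactly when its `F_n`-part normalizes `⟨w⟩`. So it suffices that `⟨w⟩` is
self-normalizing in `F_n`. Subgroups of free groups are free and abelian free groups are cyclic,
so the centralizer of `w` is `⟨w⟩`. If `u` normalizes `⟨w⟩`, then `u w u⁻¹ = w ^ a` and
`u⁻¹ w u = w ^ b` with `w ^ (a b) = w`, so `a = ±1` by torsion-freeness; `a = 1` is the
centralizer case, and `a = -1` is impossible for `u ≠ 1`.
-/

namespace FreeGroup

theorem eq_of_commute_of {α : Type*} {a b : α} (h : Commute (of a) (of b)) : a = b := by
  classical
  by_contra hab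
  -- Send `a` and `b` to two non-commuting transpositions of `Fin 3`.
  have h' := congrArg
    (lift fun x => if x = a then Equiv.swap (0 : Fin 3) 1 else Equiv.swap 1 2) h.eq
  rw [_root_.map_mul, _root_.map_mul, lift_apply_of, lift_apply_of, if_pos rfl,
    if_neg (Ne.symm hab)] at h'
  exact absurd h' (by decide)

theorem isCyclic_of_isMulCommutative {α : Type*} [IsMulCommutative (FreeGroup α)] :
    IsCyclic (FreeGroup α) := by
  have : Subsingleton α := ⟨fun a b => eq_of_commute_of (mul_comm' _ _)⟩
  cases isEmpty_or_nonempty α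
  · infer_instance
  · have := uniqueOfSubsingleton (Classical.arbitrary α)
    infer_instance

end FreeGroup

theorem IsFreeGroup.isCyclic_of_isMulCommutative (G : Type*) [Group G] [IsFreeGroup G]
    [IsMulCommutative G] : IsCyclic G := by
  let e := IsFreeGroup.toFreeGroup G
  have : IsMulCommutative (FreeGroup (IsFreeGroup.Generators G)) :=
    .of_comm fun x y => by simpa using congrArg e (mul_comm' (e.symm x) (e.symm y))
  exact e.isCyclic.mpr FreeGroup.isCyclic_of_isMulCommutative

namespace FreeGroup

variable {α : Type*} {u w : FreeGroup α}

theorem ne_one_of_forall_eq_zpow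
    (hnp : ∀ (v : FreeGroup α) (m : ℤ), w = v ^ m → m = 1 ∨ m = -1) : w ≠ 1 := by
  rintro rfl
  simpa using hnp 1 0 (zpow_zero 1).symm

theorem zpow_right_injective (hw : w ≠ 1) : Function.Injective (w ^ · : ℤ → FreeGroup α) :=
  injective_zpow_iff_not_isOfFinOrder.mpr (not_isOfFinOrder_of_isMulTorsionFree hw)

theorem mem_zpowers_of_commute
    (hnp : ∀ (v : FreeGroup α) (m : ℤ), w = v ^ m → m = 1 ∨ m = -1) (hc : Commute u w) :
    u ∈ Subgroup.zpowers w := by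
  -- `⟨u, w⟩` is abelian and, by Nielsen–Schreier, free; hence it is cyclic.
  let H := Subgroup.closure ({u, w} : Set (FreeGroup α))
  have : IsMulCommutative H := Subgroup.isMulCommutative_closure <| by
    rintro x (rfl | rfl) y (rfl | rfl)
    exacts [rfl, hc.eq, hc.symm.eq, rfl]
  have := IsFreeGroup.isCyclic_of_isMulCommutative H
  obtain ⟨z, hz⟩ := IsCyclic.exists_generator (α := H)
  obtain ⟨p, hp⟩ := hz ⟨u, Subgroup.subset_closure (by simp)⟩
  obtain ⟨q, hq⟩ := hz ⟨w, Subgroup.subset_closure (by simp)⟩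
  have hu : u = (z : FreeGroup α) ^ p := by simpa [Subtype.ext_iff] using hp.symm
  have hw : w = (z : FreeGroup α) ^ q := by simpa [Subtype.ext_iff] using hq.symm
  have hzw : Subgroup.zpowers (z : FreeGroup α) = Subgroup.zpowers w := by
    rcases hnp _ _ hw with rfl | rfl <;> simp [hw, Subgroup.zpowers_inv]
  exact hzw ▸ hu ▸ Subgroup.zpow_mem_zpowers _ p

theorem mem_zpowers_of_conj_mem_zpowers
    (hnp : ∀ (v : FreeGroup α) (m : ℤ), w = v ^ m → m = 1 ∨ m = -1)
    (h₁ : MulAut.conj u w ∈ Subgroup.zpowers w)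
    (h₂ : (MulAut.conj u)⁻¹ w ∈ Subgroup.zpowers w) :
    u ∈ Subgroup.zpowers w := by
  have hinj := zpow_right_injective (ne_one_of_forall_eq_zpow hnp)
  obtain ⟨a, ha⟩ := Subgroup.mem_zpowers_iff.mp h₁
  obtain ⟨b, hb⟩ := Subgroup.mem_zpowers_iff.mp h₂
  have hba : w ^ (b * a) = w ^ (1 : ℤ) := by
    rw [zpow_mul, hb, ← map_zpow, ha, MulAut.inv_apply_self, zpow_one]
  rcases Int.mul_eq_one_iff_eq_one_or_neg_one.mp (hinj hba) with ⟨-, rfl⟩ | ⟨-, rfl⟩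
  · rw [zpow_one, MulAut.conj_apply] at ha
    exact mem_zpowers_of_commute hnp (eq_mul_inv_iff_mul_eq.mp ha).symm
  · -- Conjugation by `u` inverts `w`, so it both fixes and inverts `u ^ 2 ∈ ⟨w⟩`.
    have hu2 : Commute (u ^ 2) w := by
      rw [Commute, SemiconjBy, ← mul_inv_eq_iff_eq_mul, ← MulAut.conj_apply, map_pow, pow_two,
        MulAut.mul_apply, ← ha, map_zpow, ← ha, zpow_neg_one, zpow_neg_one, inv_inv]
    obtain ⟨p, hp⟩ := Subgroup.mem_zpowers_iff.mp (mem_zpowers_of_commute hnp hu2)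
    have hpp : w ^ (-p) = w ^ p := by
      rw [neg_eq_neg_one_mul, zpow_mul, ha, ← map_zpow, hp, MulAut.conj_apply]
      group
    have hp0 : p = 0 := by linarith [hinj hpp]
    rw [hp0, zpow_zero, eq_comm, sq_eq_one] at hp
    exact hp ▸ Subgroup.one_mem _

theorem normalizer_zpowers
    (hnp : ∀ (v : FreeGroup α) (m : ℤ), w = v ^ m → m = 1 ∨ m = -1) :
    Subgroup.normalizer (Subgroup.zpowers w : Set (FreeGroup α)) = Subgroup.zpowers w := by
  refine le_antisymm (fun u hu => mem_zpowers_of_conj_mem_zpowers hnp ?_ ?_) Subgroup.le_normalizer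
  · exact (hu w).mp (Subgroup.mem_zpowers w)
  · simpa using (hu (u⁻¹ * w * u)).mpr (by simp [mul_assoc, Subgroup.mem_zpowers w])

end FreeGroup

namespace SemidirectProduct

variable {N G : Type*} [Group N] [Group G] {ψ : G →* MulAut N}

/-- `H ⋊ G` as a subgroup of `N ⋊[ψ] G`. -/
def leftSubgroup (H : Subgroup N) (hH : ∀ g, ∀ x ∈ H, ψ g x ∈ H) : Subgroup (N ⋊[ψ] G) where
  carrier := {x | x.left ∈ H}
  one_mem' := H.one_mem
  mul_mem' hx hy := H.mul_mem hx (hH _ _ hy)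
  inv_mem' hx := hH _ _ (H.inv_mem hx)

@[simp]
theorem mem_leftSubgroup {H : Subgroup N} {hH : ∀ g, ∀ x ∈ H, ψ g x ∈ H} {x : N ⋊[ψ] G} :
    x ∈ leftSubgroup H hH ↔ x.left ∈ H :=
  Iff.rfl

theorem normalizer_leftSubgroup {H : Subgroup N} (hH : ∀ g, ∀ x ∈ H, ψ g x ∈ H)
    (hself : Subgroup.normalizer (H : Set N) = H) :
    Subgroup.normalizer (leftSubgroup H hH : Set (N ⋊[ψ] G)) = leftSubgroup H hH := by
  refine le_antisymm (fun g hg => ?_) Subgroup.le_normalizer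
  have hinl : inl g.left ∈ Subgroup.normalizer (leftSubgroup H hH : Set (N ⋊[ψ] G)) := by
    rw [← inl_left_mul_inr_right g] at hg
    refine (Subgroup.mul_mem_cancel_right _ (Subgroup.le_normalizer ?_)).mp hg
    simp
  have hleft : g.left ∈ Subgroup.normalizer (H : Set N) := fun x => by
    simpa [← map_inv, ← map_mul] using hinl (inl x)
  exact mem_leftSubgroup.mpr (hself ▸ hleft)

theorem closure_inl_inr_eq_leftSubgroup {ψ : Multiplicative ℤ →* MulAut N} {w : N}
    (hw : ∀ t, ψ t w = w) :
    Subgroup.closure ({inl w, inr (Multiplicative.ofAdd 1)} : Set (N ⋊[ψ] Multiplicative ℤ)) =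
      leftSubgroup (Subgroup.zpowers w) (by rintro t - ⟨k, rfl⟩; simp [hw]) := by
  refine le_antisymm ?_ fun x hx => ?_
  · rw [Subgroup.closure_le]
    rintro g (rfl | rfl) <;> simp [Subgroup.mem_zpowers]
  · obtain ⟨k, hk⟩ := Subgroup.mem_zpowers_iff.mp (mem_leftSubgroup.mp hx)
    have hright : x.right = Multiplicative.ofAdd 1 ^ x.right.toAdd := by simp [← ofAdd_zsmul]
    rw [← inl_left_mul_inr_right x, ← hk, hright, map_zpow, map_zpow]
    exact mul_mem (zpow_mem (Subgroup.subset_closure (by simp)) _)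
      (zpow_mem (Subgroup.subset_closure (by simp)) _)

end SemidirectProduct

theorem closure_w_s_self_normalizing_general (n : ℕ) (φ : MulAut (FreeGroup (Fin n)))
    (w : FreeGroup (Fin n))
    (hnp : ∀ (v : FreeGroup (Fin n)) (m : ℤ), w = v ^ m → m = 1 ∨ m = -1)
    (hfix : φ w = w) :
    Subgroup.normalizer ((Subgroup.closure
        ({SemidirectProduct.inl w, SemidirectProduct.inr (Multiplicative.ofAdd 1)} :
          Set (FreeByCyclic n φ))) : Set (FreeByCyclic n φ))
      = Subgroup.closure
          ({SemidirectProduct.inl w, SemidirectProduct.inr (Multiplicative.ofAdd 1)} :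
            Set (FreeByCyclic n φ)) := by
  have hψ : ∀ t, zpowersHom (MulAut (FreeGroup (Fin n))) φ t w = w := fun t =>
    (MulAction.stabilizer (MulAut (FreeGroup (Fin n))) w).zpow_mem hfix t.toAdd
  rw [closure_inl_inr_eq_leftSubgroup hψ]
  exact normalizer_leftSubgroup _ (FreeGroup.normalizer_zpowers hnp)

/-- If `w ∈ F_n` is nontrivial, not a proper power, and is fixed by `φ` (so commutes with
the stable letter `s`), then `⟨w, s⟩ ≤ F_n ⋊_φ ℤ` is its own normalizer. -/
theorem closure_w_s_self_normalizing (n : ℕ) (φ : MulAut (FreeGroup (Fin n)))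
    (w : FreeGroup (Fin n)) (hw : w ≠ 1)
    (hnp : ∀ (v : FreeGroup (Fin n)) (m : ℤ), w = v ^ m → m = 1 ∨ m = -1)
    (hfix : φ w = w) :
    Subgroup.normalizer ((Subgroup.closure
        ({SemidirectProduct.inl w, SemidirectProduct.inr (Multiplicative.ofAdd 1)} :
          Set (FreeByCyclic n φ))) : Set (FreeByCyclic n φ))
      = Subgroup.closure
          ({SemidirectProduct.inl w, SemidirectProduct.inr (Multiplicative.ofAdd 1)} :
            Set (FreeByCyclic n φ)) :=
  closure_w_s_self_normalizing_general n φ w hnp hfix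
end

section
/- Let φ be an automorphism of a free group F, let G = F ⋊_φ ℤ with stable letter s = (1,1), and let x = (w, m) ∈ G be an element whose ℤ-coordinate m is nonzero. Then the normalizer in G of the cyclic subgroup ⟨x⟩ is equal to the centralizer of x in G. -/
/-!
If `g` normalizes `⟨x⟩` then `g x g⁻¹ = x ^ k` for some `k`. A homomorphism `f` to an abelian
group kills conjugation, so `f x = f x ^ k`; when `f x` has infinite order this forces `k = 1`,
i.e. `g` commutes with `x`. For `F ⋊_φ ℤ` take `f` to be the projection to `ℤ`, where `x`
maps to `m ≠ 0`.
-/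

section

variable {G H : Type*} [Group G] [CommGroup H]

theorem eq_one_of_conj_eq_zpow (f : G →* H) {x g : G} (hx : ¬IsOfFinOrder (f x)) {k : ℤ}
    (h : g * x * g⁻¹ = x ^ k) : k = 1 := by
  have hfx : f x ^ k = f x ^ (1 : ℤ) := by
    simpa [mul_inv_cancel_comm] using (congrArg f h).symm
  exact injective_zpow_iff_not_isOfFinOrder.mpr hx hfx

namespace Subgroup

theorem centralizer_singleton_le_normalizer_zpowers (x : G) :
    centralizer {x} ≤ normalizer (zpowers x : Set G) := by
  rw [← centralizer_closure, ← zpowers_eq_closure]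
  exact centralizer_le_normalizer _

theorem normalizer_zpowers_le_centralizer (f : G →* H) {x : G} (hx : ¬IsOfFinOrder (f x)) :
    normalizer (zpowers x : Set G) ≤ centralizer {x} := by
  intro g hg
  obtain ⟨k, hk : x ^ k = g * x * g⁻¹⟩ := (hg x).mp (mem_zpowers x)
  rw [eq_one_of_conj_eq_zpow f hx hk.symm, zpow_one] at hk
  rw [mem_centralizer_singleton_iff]
  exact mul_inv_eq_iff_eq_mul.mp hk.symm

theorem normalizer_zpowers_eq_centralizer_of_not_isOfFinOrder (f : G →* H) {x : G}
    (hx : ¬IsOfFinOrder (f x)) : normalizer (zpowers x : Set G) = centralizer {x} :=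
  (normalizer_zpowers_le_centralizer f hx).antisymm (centralizer_singleton_le_normalizer_zpowers x)

end Subgroup

end

/-- In a free-by-cyclic group `F ⋊_φ ℤ`, the normalizer of the cyclic subgroup generated
by an element `(w, m)` with nonzero `ℤ`-coordinate equals its centralizer. -/
theorem normalizer_eq_centralizer_of_stable_exponent_ne_zero
    {α : Type*} (φ : MulAut (FreeGroup α)) (w : FreeGroup α) (m : ℤ) (hm : m ≠ 0) :
    Subgroup.normalizer ((Subgroup.zpowers ((⟨w, Multiplicative.ofAdd m⟩ :
        FreeGroup α ⋊[zpowersHom (MulAut (FreeGroup α)) φ] Multiplicative ℤ))) : Set _)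
      = Subgroup.centralizer {(⟨w, Multiplicative.ofAdd m⟩ :
          FreeGroup α ⋊[zpowersHom (MulAut (FreeGroup α)) φ] Multiplicative ℤ)} :=
  Subgroup.normalizer_zpowers_eq_centralizer_of_not_isOfFinOrder SemidirectProduct.rightHom
    (not_isOfFinOrder_of_isMulTorsionFree (by simpa using hm))
end

section
/- Let A be a virtually cyclic group, i.e. A has a cyclic subgroup of finite index. Then Out(A) is finite. -/
private lemma finite_mulAut_aux (G : Type*) [Group G] [Finite G] : Finite (MulAut G) :=
  Finite.of_injective (fun (e : MulAut G) => (e : G → G)) DFunLike.coe_injective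

private lemma conj_zpow_aux {A : Type*} [Group A] (x y : A) (n : ℤ) :
    x⁻¹ * y ^ n * x = (x⁻¹ * y * x) ^ n := by
  simpa [MulAut.conj_apply] using map_zpow (MulAut.conj x⁻¹) y n

/-- The outer automorphism group of a virtually cyclic group is finite. -/
theorem out_finite_of_virtually_cyclic {A : Type*} [Group A]
    (C : Subgroup A) (hC : IsCyclic ↥C) (hfi : C.FiniteIndex) :
    Finite (OutG A) := by
  classical
  haveI := hC
  by_cases hfin : Finite A
  · haveI : Finite (MulAut A) := finite_mulAut_aux A
    exact Quotient.finite _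
  -- Notation for Inn
  set I : Subgroup (MulAut A) := (MulAut.conj : A →* MulAut A).range with hI
  -- Step 1: the characteristic finite-index cyclic subgroup K
  set N := C.normalCore with hNdef
  have hNC : N ≤ C := C.normalCore_le
  haveI : N.Normal := C.normalCore_normal
  haveI : N.FiniteIndex := Subgroup.finiteIndex_normalCore C
  set m := N.index with hm
  have hm0 : m ≠ 0 := Subgroup.FiniteIndex.index_ne_zero
  haveI : NeZero m := ⟨hm0⟩
  set K := Subgroup.closure (Set.range (fun a : A => a ^ m)) with hKdef
  have hKN : K ≤ N := by
    rw [hKdef, Subgroup.closure_le]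
    rintro - ⟨a, rfl⟩
    exact N.pow_index_mem a
  have hchar : ∀ φ : MulAut A, K.map (φ : A →* A) = K := by
    intro φ
    rw [hKdef, MonoidHom.map_closure]
    congr 1
    ext x
    constructor
    · rintro ⟨-, ⟨a, rfl⟩, rfl⟩
      exact ⟨φ a, by simp⟩
    · rintro ⟨a, rfl⟩
      exact ⟨(φ.symm a) ^ m, ⟨φ.symm a, rfl⟩, by simp⟩
  haveI hKnormal : K.Normal := by
    constructor
    intro x hx a
    have h := hchar (MulAut.conj a)
    rw [← h]
    exact Subgroup.mem_map.mpr ⟨x, hx, by simp⟩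
  -- finite index of K
  haveI : IsCyclic ↥N := Subgroup.isCyclic_of_le hNC
  obtain ⟨g₀, hg₀⟩ := IsCyclic.exists_generator (α := ↥N)
  have hsurj : Function.Surjective
      (fun r : ZMod m =>
        (QuotientGroup.mk (g₀ ^ r.val) : ↥N ⧸ Subgroup.zpowers (g₀ ^ m))) := by
    intro x
    obtain ⟨y, rfl⟩ := QuotientGroup.mk_surjective x
    obtain ⟨s, hs⟩ := Subgroup.mem_zpowers_iff.mp (hg₀ y)
    have h1 : 0 ≤ s % (m : ℤ) := Int.emod_nonneg s (by exact_mod_cast hm0)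
    have h2 : s % (m : ℤ) < (m : ℤ) :=
      Int.emod_lt_of_pos s (by exact_mod_cast Nat.pos_of_ne_zero hm0)
    set r : ℕ := (s % (m : ℤ)).toNat with hrdef
    have hrZ : (r : ℤ) = s % (m : ℤ) := Int.toNat_of_nonneg h1
    have hrm : r < m := by omega
    refine ⟨(r : ZMod m), ?_⟩
    have hval : ((r : ZMod m)).val = r := ZMod.val_natCast_of_lt hrm
    simp only [hval]
    rw [← hs, QuotientGroup.eq]
    have hmod := Int.emod_def s (m : ℤ)
    refine Subgroup.mem_zpowers_iff.mpr ⟨s / (m : ℤ), ?_⟩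
    have e1 : ((g₀ ^ m) ^ (s / (m : ℤ)) : ↥N) = g₀ ^ ((m : ℤ) * (s / (m : ℤ))) := by
      rw [← zpow_natCast g₀ m, ← zpow_mul]
    have e2 : ((g₀ ^ r)⁻¹ * g₀ ^ s : ↥N) = g₀ ^ (s - (r : ℤ)) := by
      rw [← zpow_natCast g₀ r, ← zpow_neg, ← zpow_add]
      congr 1
      omega
    rw [e1, e2]
    congr 1
    omega
  have hfinN : Finite (↥N ⧸ Subgroup.zpowers (g₀ ^ m)) := Finite.of_surjective _ hsurj
  have hzfi : (Subgroup.zpowers (g₀ ^ m)).index ≠ 0 :=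
    (Subgroup.finiteIndex_of_finite_quotient (H := Subgroup.zpowers (g₀ ^ m))).index_ne_zero
  have hsubOf : Subgroup.zpowers (g₀ ^ m) ≤ K.subgroupOf N := by
    rw [Subgroup.zpowers_le, Subgroup.mem_subgroupOf]
    show ((g₀ ^ m : ↥N) : A) ∈ K
    rw [SubgroupClass.coe_pow]
    exact Subgroup.subset_closure ⟨(g₀ : A), rfl⟩
  have hdvd := Subgroup.index_dvd_of_le hsubOf
  have hrelind : (K.subgroupOf N).index ≠ 0 := by
    intro h0
    rw [h0, zero_dvd_iff] at hdvd
    exact hzfi hdvd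
  haveI hKfi : K.FiniteIndex := by
    refine ⟨?_⟩
    rw [← Subgroup.relIndex_mul_index hKN]
    exact Nat.mul_ne_zero hrelind hm0
  set Q := A ⧸ K with hQdef
  haveI : Finite Q := Subgroup.finite_quotient_of_finiteIndex (H := K)
  haveI fintQ : Fintype Q := Fintype.ofFinite Q
  -- K is infinite cyclic, generated by c of infinite order
  have hKinf : Infinite ↥K := by
    by_contra h
    haveI : Finite ↥K := not_infinite_iff_finite.mp h
    exact hfin (Finite.of_equiv _ (Subgroup.groupEquivQuotientProdSubgroup (s := K)).symm)
  haveI : IsCyclic ↥K := Subgroup.isCyclic_of_le (hKN.trans hNC)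
  obtain ⟨c₀, hc₀⟩ := IsCyclic.exists_generator (α := ↥K)
  set c : A := (c₀ : A) with hcdef
  have hcK : c ∈ K := c₀.2
  have hKz : K = Subgroup.zpowers c := by
    ext x
    constructor
    · intro hx
      obtain ⟨s, hs⟩ := Subgroup.mem_zpowers_iff.mp (hc₀ ⟨x, hx⟩)
      refine Subgroup.mem_zpowers_iff.mpr ⟨s, ?_⟩
      have := congrArg (Subtype.val) hs
      simpa using this
    · intro hx
      exact Subgroup.zpowers_le.mpr hcK hx
  have hcord : orderOf c = 0 := by
    have h1 : Infinite ↥(Subgroup.zpowers c) := hKz ▸ hKinf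
    rw [← Nat.card_zpowers]
    exact Nat.card_eq_zero_of_infinite
  have cinj : Function.Injective fun s : ℤ => c ^ s :=
    injective_zpow_iff_not_isOfFinOrder.mpr (orderOf_eq_zero_iff.mp hcord)
  have cinj' : ∀ {s t : ℤ}, c ^ s = c ^ t → s = t := fun h => cinj h
  have exν : ∀ x, x ∈ K → ∃ s : ℤ, c ^ s = x := by
    intro x hx
    exact Subgroup.mem_zpowers_iff.mp (hKz ▸ hx)
  set ν : A → ℤ := fun x => if hx : x ∈ K then (exν x hx).choose else 0 with hνdef
  have hν : ∀ x (hx : x ∈ K), c ^ (ν x) = x := by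
    intro x hx
    simp only [hνdef, dif_pos hx]
    exact (exν x hx).choose_spec
  -- the sign character ε
  have hKmem_conj : ∀ a : A, a⁻¹ * c * a ∈ K := by
    intro a
    simpa using hKnormal.conj_mem c hcK a⁻¹
  set ε : A → ℤ := fun a => ν (a⁻¹ * c * a) with hεdef
  have hε : ∀ a : A, a⁻¹ * c * a = c ^ (ε a) := fun a => (hν _ (hKmem_conj a)).symm
  have hε1 : ε (1 : A) = 1 := by
    apply cinj'
    rw [← hε 1]
    simp
  have hεmul : ∀ a b : A, ε (a * b) = ε a * ε b := by
    intro a b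
    apply cinj'
    rw [← hε (a * b)]
    have h1 : (a * b)⁻¹ * c * (a * b) = b⁻¹ * (a⁻¹ * c * a) * b := by group
    rw [h1, hε a, conj_zpow_aux b c (ε a), hε b, ← zpow_mul, mul_comm (ε b) (ε a)]
  have hεpm : ∀ a : A, ε a = 1 ∨ ε a = -1 := by
    intro a
    have h : ε a⁻¹ * ε a = 1 := by
      rw [← hεmul, inv_mul_cancel, hε1]
    rcases Int.mul_eq_one_iff_eq_one_or_neg_one.mp h with ⟨_, h2⟩ | ⟨_, h2⟩
    · exact Or.inl h2
    · exact Or.inr h2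
  have hεK : ∀ k, k ∈ K → ε k = 1 := by
    intro k hk
    obtain ⟨s, hs⟩ := exν k hk
    apply cinj'
    rw [← hε k, ← hs]
    group
  -- the action on the quotient
  have congr_heq : ∀ φ : MulAut A, K.map (φ : A →* A) = K := hchar
  set Φq : MulAut A →* MulAut Q :=
    { toFun := fun φ => QuotientGroup.congr K K φ (hchar φ),
      map_one' := by
        ext q
        induction q using QuotientGroup.induction_on with
        | H a => simp [QuotientGroup.congr_mk]
      map_mul' := by
        intro φ ψ
        ext q
        induction q using QuotientGroup.induction_on with
        | H a => rfl } with hΦqdef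
  have hΦqmk : ∀ (φ : MulAut A) (a : A),
      Φq φ (QuotientGroup.mk a) = QuotientGroup.mk (φ a) := by
    intro φ a
    rfl
  -- the stabilizer of c
  set stab : Subgroup (MulAut A) := MulAction.stabilizer (MulAut A) c with hstabdef
  have horb : (MulAction.orbit (MulAut A) c).Finite := by
    apply Set.Finite.subset ((Set.finite_singleton c⁻¹).insert c)
    rintro - ⟨φ, rfl⟩
    have hφcK : φ c ∈ K := by
      rw [← hchar φ]
      exact Subgroup.mem_map.mpr ⟨c, hcK, rfl⟩
    obtain ⟨s, hs⟩ := exν _ hφcK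
    have h2 : Subgroup.zpowers (φ c) = K := by
      rw [← hchar φ, hKz, MonoidHom.map_zpowers]
      rfl
    have hcz : c ∈ Subgroup.zpowers (φ c) := h2.symm ▸ hcK
    obtain ⟨t, ht⟩ := Subgroup.mem_zpowers_iff.mp hcz
    rw [← hs, ← zpow_mul] at ht
    have hst : s * t = 1 := cinj' (by rw [ht, zpow_one])
    have hsmul : φ • c = φ c := rfl
    simp only [Set.mem_insert_iff, Set.mem_singleton_iff]
    rcases Int.mul_eq_one_iff_eq_one_or_neg_one.mp hst with ⟨h3, _⟩ | ⟨h3, _⟩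
    · left
      rw [hsmul, ← hs, h3, zpow_one]
    · right
      rw [hsmul, ← hs, h3]
      simp
  haveI : stab.FiniteIndex := by
    have hfq : Finite (MulAut A ⧸ stab) := by
      haveI : Finite (MulAction.orbit (MulAut A) c) := horb.to_subtype
      exact Finite.of_equiv _ (MulAction.orbitEquivQuotientStabilizer (MulAut A) c)
    exact Subgroup.finiteIndex_of_finite_quotient (H := stab)
  haveI : (Φq.ker).FiniteIndex := by
    have hfq : Finite (MulAut A ⧸ Φq.ker) := by
      haveI : Finite (MulAut Q) := finite_mulAut_aux Q
      exact Finite.of_injective _ (QuotientGroup.kerLift_injective Φq)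
    exact Subgroup.finiteIndex_of_finite_quotient (H := Φq.ker)
  set J : Subgroup (MulAut A) := Φq.ker ⊓ stab with hJdef
  haveI : J.FiniteIndex := inferInstance
  haveI : Finite (MulAut A ⧸ J) := Subgroup.finite_quotient_of_finiteIndex (H := J)
  -- basic facts about members of J
  have hJfix : ∀ φ : MulAut A, φ ∈ J → ∀ x ∈ K, φ x = x := by
    intro φ hφ x hx
    have hc' : φ c = c := (Subgroup.mem_inf.mp hφ).2
    obtain ⟨s, hs⟩ := exν x hx
    rw [← hs, map_zpow, hc']
  have hJK : ∀ φ : MulAut A, φ ∈ J → ∀ a : A, a⁻¹ * φ a ∈ K := by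
    intro φ hφ a
    have h1 : Φq φ = 1 := (Subgroup.mem_inf.mp hφ).1
    have h2 : (QuotientGroup.mk (φ a) : Q) = QuotientGroup.mk a := by
      rw [← hΦqmk φ a, h1]
      rfl
    exact QuotientGroup.eq.mp h2.symm
  set nf : MulAut A → A → ℤ := fun φ a => ν (a⁻¹ * φ a) with hnfdef
  have hnf : ∀ φ, φ ∈ J → ∀ a, c ^ (nf φ a) = a⁻¹ * φ a := by
    intro φ hφ a
    exact hν _ (hJK φ hφ a)
  -- cocycle identity
  have hcoc : ∀ φ, φ ∈ J → ∀ a b : A, nf φ (a * b) = ε b * nf φ a + nf φ b := by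
    intro φ hφ a b
    apply cinj'
    rw [hnf φ hφ (a * b)]
    have e1 : c ^ (ε b * nf φ a + nf φ b)
        = (b⁻¹ * (a⁻¹ * φ a) * b) * (b⁻¹ * φ b) := by
      rw [zpow_add]
      congr 1
      · rw [zpow_mul, ← hε b, ← conj_zpow_aux, hnf φ hφ a]
      · exact hnf φ hφ b
    rw [e1, map_mul]
    group
  have hnfK : ∀ φ, φ ∈ J → ∀ a, ∀ k, k ∈ K → nf φ (a * k) = nf φ a := by
    intro φ hφ a k hk
    rw [hcoc φ hφ a k, hεK k hk, one_mul]
    have h0 : nf φ k = 0 := by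
      apply cinj'
      rw [hnf φ hφ k, hJfix φ hφ k hk]
      simp
    rw [h0, add_zero]
  -- descend to the finite quotient Q
  have hresp : ∀ φ : ↥J, ∀ a b : A,
      (QuotientGroup.leftRel K) a b → nf φ.1 a = nf φ.1 b := by
    intro φ a b hab
    have h1 : a⁻¹ * b ∈ K := (QuotientGroup.leftRel_apply).mp hab
    have h2 := hnfK φ.1 φ.2 a (a⁻¹ * b) h1
    rw [mul_inv_cancel_left] at h2
    exact h2.symm
  set wf : ↥J → Q → ℤ := fun φ q => Quotient.liftOn' q (nf φ.1) (hresp φ) with hwfdef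
  have hwfmk : ∀ (φ : ↥J) (a : A), wf φ (QuotientGroup.mk a) = nf φ.1 a := fun φ a => rfl
  set S : ↥J → ℤ := fun φ => ∑ q : Q, wf φ q with hSdef
  -- epsilon descends as well
  have hεresp : ∀ a b : A, (QuotientGroup.leftRel K) a b → ε a = ε b := by
    intro a b hab
    have h1 : a⁻¹ * b ∈ K := (QuotientGroup.leftRel_apply).mp hab
    have h2 : b = a * (a⁻¹ * b) := by group
    rw [h2, hεmul, hεK _ h1, mul_one]
  set εbar : Q → ℤ := fun q => Quotient.liftOn' q ε hεresp with hεbardef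
  have hεbarmk : ∀ a : A, εbar (QuotientGroup.mk a) = ε a := fun a => rfl
  -- the key averaged identity
  have hm'0 : (Fintype.card Q : ℤ) ≠ 0 := by
    exact_mod_cast Fintype.card_ne_zero
  have hL4 : ∀ φ : ↥J, ∀ b : A,
      (Fintype.card Q : ℤ) * nf φ.1 b = (1 - ε b) * S φ := by
    intro φ b
    have key : ∀ q : Q, wf φ (q * QuotientGroup.mk b) = ε b * wf φ q + nf φ.1 b := by
      intro q
      induction q using QuotientGroup.induction_on with
      | H a =>
        have : (QuotientGroup.mk a : Q) * QuotientGroup.mk b = QuotientGroup.mk (a * b) := rfl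
        rw [this, hwfmk, hwfmk]
        exact hcoc φ.1 φ.2 a b
    have hsum : ∑ q : Q, wf φ (q * QuotientGroup.mk b) = S φ := by
      simpa only [hSdef, Equiv.coe_mulRight] using
        Equiv.sum_comp (Equiv.mulRight (QuotientGroup.mk b : Q)) (wf φ)
    have hsum2 : ∑ q : Q, (ε b * wf φ q + nf φ.1 b)
        = ε b * S φ + (Fintype.card Q : ℤ) * nf φ.1 b := by
      rw [Finset.sum_add_distrib, ← Finset.mul_sum, Finset.sum_const, Finset.card_univ,
        nsmul_eq_mul]
    have heq : S φ = ε b * S φ + (Fintype.card Q : ℤ) * nf φ.1 b := by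
      conv_lhs => rw [← hsum]
      rw [Finset.sum_congr rfl (fun q _ => key q), hsum2]
    linarith [heq]
  -- S is an injective homomorphism-like invariant
  have hSinj : ∀ φ ψ : ↥J, S φ = S ψ → φ = ψ := by
    intro φ ψ h
    have hn : ∀ a, nf φ.1 a = nf ψ.1 a := by
      intro a
      have h1 := hL4 φ a
      have h2 := hL4 ψ a
      rw [h] at h1
      exact mul_left_cancel₀ hm'0 (h1.trans h2.symm)
    have hval : φ.1 = ψ.1 := by
      ext a
      have e1 : φ.1 a = a * c ^ nf φ.1 a := by
        rw [hnf _ φ.2 a]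
        group
      have e2 : ψ.1 a = a * c ^ nf ψ.1 a := by
        rw [hnf _ ψ.2 a]
        group
      rw [e1, e2, hn a]
    exact Subtype.ext hval
  have hSadd : ∀ φ ψ : ↥J, S (φ * ψ) = S φ + S ψ := by
    intro φ ψ
    have hpt : ∀ a : A, nf (φ * ψ : ↥J).1 a = nf φ.1 a + nf ψ.1 a := by
      intro a
      apply cinj'
      rw [hnf _ (φ * ψ).2 a, zpow_add, hnf _ φ.2 a, hnf _ ψ.2 a]
      have h1 : (φ * ψ : ↥J).1 a = φ.1 (ψ.1 a) := rfl
      rw [h1]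
      calc a⁻¹ * (φ.1 (ψ.1 a))
          = a⁻¹ * (φ.1 (a * (a⁻¹ * ψ.1 a))) := by rw [mul_inv_cancel_left]
        _ = a⁻¹ * (φ.1 a * (a⁻¹ * ψ.1 a)) := by
            rw [map_mul, hJfix φ.1 φ.2 _ (hJK ψ.1 ψ.2 a)]
        _ = (a⁻¹ * φ.1 a) * (a⁻¹ * ψ.1 a) := by group
    have hq : ∀ q : Q, wf (φ * ψ) q = wf φ q + wf ψ q := by
      intro q
      induction q using QuotientGroup.induction_on with
      | H a => rw [hwfmk, hwfmk, hwfmk]; exact hpt a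
    simp only [hSdef]
    rw [← Finset.sum_add_distrib]
    exact Finset.sum_congr rfl (fun q _ => hq q)
  have hS1 : S 1 = 0 := by
    have hq : ∀ q : Q, wf 1 q = 0 := by
      intro q
      induction q using QuotientGroup.induction_on with
      | H a =>
        rw [hwfmk]
        apply cinj'
        rw [hnf _ (1 : ↥J).2 a]
        show a⁻¹ * (1 : MulAut A) a = c ^ (0 : ℤ)
        simp
    simp only [hSdef]
    rw [Finset.sum_congr rfl (fun q _ => hq q), Finset.sum_const, smul_zero]
  -- conjugations by powers of c lie in J
  have hct : ∀ t : ℤ, MulAut.conj (c ^ t) ∈ J := by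
    intro t
    rw [hJdef, Subgroup.mem_inf]
    constructor
    · rw [MonoidHom.mem_ker]
      ext q
      induction q using QuotientGroup.induction_on with
      | H a =>
        rw [hΦqmk]
        show QuotientGroup.mk (MulAut.conj (c ^ t) a) = QuotientGroup.mk a
        rw [QuotientGroup.eq]
        have h1 : (c : A) ^ t ∈ K := K.zpow_mem hcK t
        have h2 : a⁻¹ * (c ^ t)⁻¹ * a ∈ K := by
          simpa using hKnormal.conj_mem _ (K.inv_mem h1) a⁻¹
        have h3 : (MulAut.conj (c ^ t) a)⁻¹ * a = c ^ t * (a⁻¹ * (c ^ t)⁻¹ * a) := by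
          rw [MulAut.conj_apply]
          group
        rw [h3]
        exact K.mul_mem h1 h2
    · show MulAut.conj (c ^ t) • c = c
      show MulAut.conj (c ^ t) c = c
      rw [MulAut.conj_apply]
      group
  have hnct : ∀ t : ℤ, ∀ a : A, nf (MulAut.conj (c ^ t)) a = (ε a - 1) * t := by
    intro t a
    apply cinj'
    rw [hnf _ (hct t) a]
    have h1 : a⁻¹ * (c ^ t) * a = c ^ (ε a * t) := by
      rw [zpow_mul, ← hε a]
      exact conj_zpow_aux a c t
    calc a⁻¹ * (MulAut.conj (c ^ t)) a
        = (a⁻¹ * c ^ t * a) * (c ^ t)⁻¹ := by rw [MulAut.conj_apply]; group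
      _ = c ^ (ε a * t) * (c ^ t)⁻¹ := by rw [h1]
      _ = c ^ ((ε a - 1) * t) := by
          rw [← zpow_neg, ← zpow_add]
          congr 1
          ring
  set E : ℤ := ∑ q : Q, (εbar q - 1) with hEdef
  have hSct : ∀ t : ℤ, S ⟨MulAut.conj (c ^ t), hct t⟩ = E * t := by
    intro t
    have hq : ∀ q : Q, wf ⟨MulAut.conj (c ^ t), hct t⟩ q = (εbar q - 1) * t := by
      intro q
      induction q using QuotientGroup.induction_on with
      | H a =>
        rw [hwfmk, hεbarmk]
        exact hnct t a
    simp only [hSdef]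
    rw [Finset.sum_congr rfl (fun q _ => hq q), ← Finset.sum_mul]
  -- the projection to Out(A) restricted to J has finite range
  set ρJ : ↥J →* MulAut A ⧸ I := (QuotientGroup.mk' I).comp J.subtype with hρJdef
  have hfinrange : Finite ↥ρJ.range := by
    by_cases hεtriv : ∀ a : A, ε a = 1
    · -- K central : J is trivial
      have htriv : ∀ φ : ↥J, φ = 1 := by
        intro φ
        apply hSinj
        rw [hS1]
        have hz : ∀ a, nf φ.1 a = 0 := by
          intro a
          have h := hL4 φ a
          rw [hεtriv a] at h
          simp only [sub_self, zero_mul] at h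
          rcases mul_eq_zero.mp h with h' | h'
          · exact absurd h' hm'0
          · exact h'
        have hq : ∀ q : Q, wf φ q = 0 := by
          intro q
          induction q using QuotientGroup.induction_on with
          | H a => rw [hwfmk]; exact hz a
        simp only [hSdef]
        rw [Finset.sum_congr rfl (fun q _ => hq q), Finset.sum_const, smul_zero]
      haveI : Subsingleton ↥J := ⟨fun a b => (htriv a).trans (htriv b).symm⟩
      exact Finite.of_surjective ρJ.rangeRestrict ρJ.rangeRestrict_surjective
    · push_neg at hεtriv
      obtain ⟨a₀, ha₀⟩ := hεtriv
      have ha₀' : ε a₀ = -1 := (hεpm a₀).resolve_left ha₀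
      have hterm : εbar (QuotientGroup.mk a₀) - 1 = -2 := by
        rw [hεbarmk, ha₀']
        ring
      have hEneg : E < 0 := by
        have hle : ∀ q : Q, εbar q - 1 ≤ 0 := by
          intro q
          induction q using QuotientGroup.induction_on with
          | H a =>
            rw [hεbarmk]
            rcases hεpm a with h | h <;> simp [h]
        have h2 : ∑ q ∈ (Finset.univ.erase (QuotientGroup.mk a₀ : Q)), (εbar q - 1) ≤ 0 :=
          Finset.sum_nonpos (fun q _ => hle q)
        have h3 : ∑ q ∈ (Finset.univ.erase (QuotientGroup.mk a₀ : Q)), (εbar q - 1)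
            + (εbar (QuotientGroup.mk a₀) - 1) = E := by
          rw [hEdef]
          exact Finset.sum_erase_add _ _ (Finset.mem_univ _)
        omega
      set n : ℕ := E.natAbs with hndef
      haveI : NeZero n := ⟨Int.natAbs_ne_zero.mpr hEneg.ne⟩
      set Shom : ↥J →* Multiplicative ℤ :=
        { toFun := fun φ => Multiplicative.ofAdd (S φ),
          map_one' := by
            show Multiplicative.ofAdd (S 1) = 1
            rw [hS1]
            rfl,
          map_mul' := by
            intro φ ψ
            show Multiplicative.ofAdd (S (φ * ψ))
              = Multiplicative.ofAdd (S φ) * Multiplicative.ofAdd (S ψ)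
            rw [hSadd]
            rfl } with hShomdef
      set χ : ↥J →* Multiplicative (ZMod n) :=
        (AddMonoidHom.toMultiplicative (Int.castAddHom (ZMod n))).comp Shom with hχdef
      have hker : χ.ker ≤ ρJ.ker := by
        intro φ hφ
        have h1 : ((S φ : ℤ) : ZMod n) = 0 := by
          have h0 := MonoidHom.mem_ker.mp hφ
          exact h0
        have h2 : (n : ℤ) ∣ S φ := (ZMod.intCast_zmod_eq_zero_iff_dvd _ _).mp h1
        have h3 : E ∣ S φ := (Int.natAbs_dvd).mp h2
        obtain ⟨t, ht⟩ := h3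
        have h4 : φ = ⟨MulAut.conj (c ^ t), hct t⟩ := hSinj _ _ (by rw [ht, hSct t])
        rw [MonoidHom.mem_ker, h4]
        show (QuotientGroup.mk' I) (MulAut.conj (c ^ t)) = 1
        rw [QuotientGroup.mk'_apply, QuotientGroup.eq_one_iff]
        exact ⟨c ^ t, rfl⟩
      haveI h1 : Finite (↥J ⧸ χ.ker) :=
        Finite.of_injective _ (QuotientGroup.kerLift_injective χ)
      have h2 : Function.Surjective
          (QuotientGroup.map χ.ker ρJ.ker (MonoidHom.id _) hker) := by
        intro x
        obtain ⟨φ, rfl⟩ := QuotientGroup.mk_surjective x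
        exact ⟨QuotientGroup.mk φ, rfl⟩
      haveI h3 : Finite (↥J ⧸ ρJ.ker) := Finite.of_surjective _ h2
      exact Finite.of_equiv _ (QuotientGroup.quotientKerEquivRange ρJ).toEquiv
  -- assemble : Out(A) has finite subgroup of finite index
  set Hbar : Subgroup (MulAut A ⧸ I) := ρJ.range with hHbardef
  haveI : Finite ↥Hbar := hfinrange
  haveI hFq : Finite ((MulAut A ⧸ I) ⧸ Hbar) := by
    set F : MulAut A → ((MulAut A ⧸ I) ⧸ Hbar) :=
      fun φ => QuotientGroup.mk (QuotientGroup.mk φ) with hFdef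
    have hFresp : ∀ x y : MulAut A, (QuotientGroup.leftRel J) x y → F x = F y := by
      intro x y hxy
      have hxy' : x⁻¹ * y ∈ J := (QuotientGroup.leftRel_apply).mp hxy
      apply (QuotientGroup.eq (s := Hbar)).mpr
      have hmul : (QuotientGroup.mk x : MulAut A ⧸ I)⁻¹ * QuotientGroup.mk y
          = QuotientGroup.mk (x⁻¹ * y) := by
        rw [← QuotientGroup.mk_inv, ← QuotientGroup.mk_mul]
      rw [hmul]
      exact ⟨⟨x⁻¹ * y, hxy'⟩, rfl⟩
    set F' : (MulAut A ⧸ J) → ((MulAut A ⧸ I) ⧸ Hbar) :=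
      fun x => Quotient.liftOn' x F hFresp with hF'def
    have hF'surj : Function.Surjective F' := by
      intro z
      obtain ⟨w, rfl⟩ := QuotientGroup.mk_surjective z
      obtain ⟨φ, rfl⟩ := QuotientGroup.mk_surjective w
      exact ⟨QuotientGroup.mk φ, rfl⟩
    exact Finite.of_surjective F' hF'surj
  exact Finite.of_equiv _ (Subgroup.groupEquivQuotientProdSubgroup (s := Hbar)).symm
end

section
/- Let H be a group, let F be a free subgroup of finite index in H, and let h ∈ F be a nontrivial element. Then the cyclic subgroup ⟨h⟩ has finite index in its normalizer N_H(⟨h⟩); in particular, N_H(⟨h⟩) is virtually cyclic. -/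
open Subgroup

/-- The exponent-sum homomorphism counting occurrences of a fixed generator. -/
private noncomputable def expHom {S : Type*} (s : S) : FreeGroup S →* Multiplicative ℤ :=
  letI := Classical.decEq S
  FreeGroup.lift (fun t => Multiplicative.ofAdd (if t = s then (1 : ℤ) else 0))

private lemma expHom_of_self {S : Type*} (s : S) :
    (expHom s (FreeGroup.of s)).toAdd = 1 := by
  classical
  simp [expHom, FreeGroup.lift_apply_of]

private lemma expHom_of_ne {S : Type*} {s t : S} (h : t ≠ s) :
    (expHom s (FreeGroup.of t)).toAdd = 0 := by
  classical
  simp [expHom, FreeGroup.lift_apply_of, h]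

private lemma freeGroup_subsingleton_mem_zpowers {S : Type*} [Subsingleton S] (s : S)
    (x : FreeGroup S) : x ∈ Subgroup.zpowers (FreeGroup.of s) := by
  refine FreeGroup.induction_on x (one_mem _) (fun t => ?_) (fun t ht => inv_mem ht)
    (fun a b ha hb => mul_mem ha hb)
  rw [Subsingleton.elim t s]
  exact Subgroup.mem_zpowers _

private lemma freeGroup_isEmpty_eq_one {S : Type*} [IsEmpty S] (x : FreeGroup S) : x = 1 := by
  refine FreeGroup.induction_on x rfl (fun t => (IsEmpty.false t).elim)
    (fun t ht => by rw [ht]; simp) (fun a b ha hb => by rw [ha, hb, one_mul])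

private lemma subsingleton_of_freeGroup_comm {S : Type*}
    (hc : ∀ a b : FreeGroup S, a * b = b * a) : Subsingleton S := by
  classical
  by_contra hS
  obtain ⟨s, t, hst⟩ := (not_subsingleton_iff_nontrivial.mp hS).exists_pair_ne
  let f : S → Equiv.Perm (Fin 3) := fun u =>
    if u = s then Equiv.swap 0 1 else if u = t then Equiv.swap 1 2 else 1
  have hfs : f s = Equiv.swap 0 1 := by simp [f]
  have hft : f t = Equiv.swap 1 2 := by simp [f, hst.symm]
  have := congrArg (FreeGroup.lift f) (hc (FreeGroup.of s) (FreeGroup.of t))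
  rw [map_mul, map_mul, FreeGroup.lift_apply_of, FreeGroup.lift_apply_of, hfs, hft] at this
  exact absurd this (by decide)

/-- In a commutative free group: everything is a power of a fixed element, and the group is
torsion-free. -/
private lemma isFreeGroup_comm_struct {G : Type*} [Group G] [IsFreeGroup G]
    (hc : ∀ a b : G, a * b = b * a) :
    ∃ z : G, (∀ x : G, x ∈ Subgroup.zpowers z) ∧
      ∀ (x : G) (n : ℤ), x ^ n = 1 → x = 1 ∨ n = 0 := by
  let e : G ≃* FreeGroup (IsFreeGroup.Generators G) := IsFreeGroup.toFreeGroup G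
  have hc' : ∀ a b : FreeGroup (IsFreeGroup.Generators G), a * b = b * a := by
    intro a b
    apply e.symm.injective
    rw [map_mul, map_mul, hc]
  haveI : Subsingleton (IsFreeGroup.Generators G) := subsingleton_of_freeGroup_comm hc'
  cases isEmpty_or_nonempty (IsFreeGroup.Generators G) with
  | inl he =>
    have h1 : ∀ x : G, x = 1 := by
      intro x
      have := freeGroup_isEmpty_eq_one (e x)
      have := congrArg e.symm this
      simpa using this
    exact ⟨1, fun x => by rw [h1 x]; exact one_mem _, fun x n _ => Or.inl (h1 x)⟩
  | inr hne =>
    obtain ⟨s⟩ := hne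
    refine ⟨e.symm (FreeGroup.of s), fun x => ?_, fun x n hx => ?_⟩
    · obtain ⟨k, hk⟩ := Subgroup.mem_zpowers_iff.mp
        (freeGroup_subsingleton_mem_zpowers s (e x))
      exact Subgroup.mem_zpowers_iff.mpr ⟨k, by
        apply e.injective
        rw [map_zpow, MulEquiv.apply_symm_apply, hk]⟩
    · obtain ⟨k, hk⟩ := Subgroup.mem_zpowers_iff.mp
        (freeGroup_subsingleton_mem_zpowers s (e x))
      have hxn : (FreeGroup.of s : FreeGroup _) ^ (k * n) = 1 := by
        rw [zpow_mul, hk, ← map_zpow, hx, map_one]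
      have hkn : k * n = 0 := by
        have := congrArg (fun y => (expHom s y).toAdd) hxn
        simpa [map_zpow, expHom_of_self] using this
      rcases mul_eq_zero.mp hkn with hk0 | hn0
      · left
        apply e.injective
        rw [map_one, ← hk, hk0, zpow_zero]
      · exact Or.inr hn0

/-- Free groups are torsion-free. -/
private lemma isFreeGroup_torsionfree {G : Type*} [Group G] [IsFreeGroup G]
    (g : G) (n : ℤ) (hg : g ^ n = 1) (hn : n ≠ 0) : g = 1 := by
  have comm : ∀ a b : ↥(Subgroup.zpowers g), a * b = b * a := by
    rintro ⟨a, ha⟩ ⟨b, hb⟩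
    obtain ⟨i, rfl⟩ := Subgroup.mem_zpowers_iff.mp ha
    obtain ⟨j, rfl⟩ := Subgroup.mem_zpowers_iff.mp hb
    apply Subtype.ext
    show g ^ i * g ^ j = g ^ j * g ^ i
    rw [← zpow_add, ← zpow_add, add_comm]
  obtain ⟨z, _, htf⟩ := isFreeGroup_comm_struct comm
  have : (⟨g, Subgroup.mem_zpowers g⟩ : ↥(Subgroup.zpowers g)) ^ n = 1 := by
    apply Subtype.ext
    simpa using hg
  rcases htf _ n this with h1 | h0
  · exact congrArg Subtype.val h1
  · exact absurd h0 hn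

/-- A free group with a nontrivial central element is commutative. -/
private lemma isFreeGroup_comm_of_central {G : Type*} [Group G] [IsFreeGroup G]
    (c : G) (hc : ∀ g : G, c * g = g * c) (hc1 : c ≠ 1) : ∀ a b : G, a * b = b * a := by
  classical
  let S := IsFreeGroup.Generators G
  let e : G ≃* FreeGroup S := IsFreeGroup.toFreeGroup G
  set c' : FreeGroup S := e c with hc'def
  have hc'cent : ∀ y : FreeGroup S, c' * y = y * c' := by
    intro y
    have := hc (e.symm y)
    have := congrArg e this
    simpa using this
  have hc'1 : c' ≠ 1 := by
    intro hh1
    apply hc1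
    have h0 : e.symm c' = e.symm 1 := congrArg e.symm hh1
    rwa [hc'def, MulEquiv.symm_apply_apply, map_one] at h0
  -- key claim: c' is a power of each generator
  have key : ∀ u : S, c' ∈ Subgroup.zpowers (FreeGroup.of u) := by
    intro u
    set A : Subgroup (FreeGroup S) := Subgroup.closure {c', FreeGroup.of u} with hA
    have hcA : c' ∈ A := Subgroup.subset_closure (by simp)
    have huA : FreeGroup.of u ∈ A := Subgroup.subset_closure (by simp)
    have commA : ∀ a b : ↥A, a * b = b * a := by
      have hpair : ∀ x ∈ ({c', FreeGroup.of u} : Set (FreeGroup S)),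
          ∀ y ∈ ({c', FreeGroup.of u} : Set (FreeGroup S)), x * y = y * x := by
        rintro x hx y hy
        rcases hx with rfl | hx <;> rcases hy with rfl | hy
        · rfl
        · rw [Set.mem_singleton_iff] at hy; rw [hy]; exact hc'cent _
        · rw [Set.mem_singleton_iff] at hx; rw [hx]; exact (hc'cent _).symm
        · rw [Set.mem_singleton_iff] at hx hy; rw [hx, hy]
      letI := Subgroup.closureCommGroupOfComm hpair
      exact fun a b => mul_comm a b
    obtain ⟨z, hz, _⟩ := isFreeGroup_comm_struct commA
    obtain ⟨k, hk⟩ := Subgroup.mem_zpowers_iff.mp (hz ⟨FreeGroup.of u, huA⟩)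
    obtain ⟨m, hm⟩ := Subgroup.mem_zpowers_iff.mp (hz ⟨c', hcA⟩)
    have hk' : (z : FreeGroup S) ^ k = FreeGroup.of u := by
      have := congrArg Subtype.val hk
      simpa using this
    have hm' : (z : FreeGroup S) ^ m = c' := by
      have := congrArg Subtype.val hm
      simpa using this
    -- k is a unit
    have hku : (expHom u (z : FreeGroup S)).toAdd * k = 1 := by
      have := congrArg (fun y => (expHom u y).toAdd) hk'
      simpa [map_zpow, expHom_of_self, mul_comm] using this
    rcases Int.isUnit_iff.mp (IsUnit.of_mul_eq_one (a := k) _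
        (by rw [mul_comm]; exact hku)) with hk1 | hk1
    · rw [hk1, zpow_one] at hk'
      exact Subgroup.mem_zpowers_iff.mpr ⟨m, by rw [← hk', hm']⟩
    · rw [hk1] at hk'
      have hz' : (z : FreeGroup S) = (FreeGroup.of u)⁻¹ := by
        rw [← hk']; simp
      exact Subgroup.mem_zpowers_iff.mpr ⟨-m, by rw [← hm', hz']; simp [zpow_neg]⟩
  -- now deduce the generators form a subsingleton
  haveI : Subsingleton S := by
    by_contra hS
    obtain ⟨s, t, hst⟩ := (not_subsingleton_iff_nontrivial.mp hS).exists_pair_ne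
    obtain ⟨a, ha⟩ := Subgroup.mem_zpowers_iff.mp (key s)
    obtain ⟨b, hb⟩ := Subgroup.mem_zpowers_iff.mp (key t)
    have h1 := congrArg (fun y => (expHom t y).toAdd) ha
    have h2 := congrArg (fun y => (expHom t y).toAdd) hb
    simp only [map_zpow, expHom_of_ne hst, expHom_of_self, toAdd_zpow, smul_eq_mul,
      mul_zero, mul_one] at h1 h2
    have hb0 : b = 0 := by omega
    rw [hb0, zpow_zero] at hb
    exact hc'1 hb.symm
  -- subsingleton generators: the free group is commutative
  have hcomm' : ∀ a b : FreeGroup S, a * b = b * a := by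
    cases isEmpty_or_nonempty S with
    | inl he =>
      intro a b
      rw [freeGroup_isEmpty_eq_one a, freeGroup_isEmpty_eq_one b]
    | inr hne =>
      obtain ⟨s⟩ := hne
      intro a b
      obtain ⟨i, hi⟩ := Subgroup.mem_zpowers_iff.mp (freeGroup_subsingleton_mem_zpowers s a)
      obtain ⟨j, hj⟩ := Subgroup.mem_zpowers_iff.mp (freeGroup_subsingleton_mem_zpowers s b)
      rw [← hi, ← hj, ← zpow_add, ← zpow_add, add_comm]
  intro a b
  apply e.injective
  rw [map_mul, map_mul, hcomm']

/-- In a free group, a nontrivial cyclic subgroup has finite index in the centralizer of its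
generator. -/
private lemma centralizer_relIndex_ne_zero {G : Type*} [Group G] [IsFreeGroup G]
    (c : G) (hc : c ≠ 1) :
    (Subgroup.zpowers c).relIndex (Subgroup.centralizer {c}) ≠ 0 := by
  set Cc := Subgroup.centralizer {c} with hCc
  have hcC : c ∈ Cc := Subgroup.mem_centralizer_iff.mpr (by
    rintro y hy
    rw [Set.mem_singleton_iff] at hy
    rw [hy])
  set c' : ↥Cc := ⟨c, hcC⟩ with hc'def
  have hcentral : ∀ g : ↥Cc, c' * g = g * c' := by
    rintro ⟨g, hg⟩
    apply Subtype.ext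
    exact Subgroup.mem_centralizer_iff.mp hg c rfl
  have hc'1 : c' ≠ 1 := fun hh => hc (congrArg Subtype.val hh)
  have comm := isFreeGroup_comm_of_central c' hcentral hc'1
  obtain ⟨z, hz, _⟩ := isFreeGroup_comm_struct comm
  obtain ⟨n, hn⟩ := Subgroup.mem_zpowers_iff.mp (hz c')
  have hn0 : n ≠ 0 := by
    rintro rfl
    rw [zpow_zero] at hn
    exact hc'1 hn.symm
  have hsub : (Subgroup.zpowers c).subgroupOf Cc = Subgroup.zpowers c' := by
    ext x
    simp only [Subgroup.mem_subgroupOf, Subgroup.mem_zpowers_iff]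
    constructor
    · rintro ⟨k, hk⟩
      exact ⟨k, Subtype.ext (by simpa using hk)⟩
    · rintro ⟨k, hk⟩
      exact ⟨k, by simpa using congrArg Subtype.val hk⟩
  show ((Subgroup.zpowers c).subgroupOf Cc).index ≠ 0
  rw [hsub]
  -- the quotient by zpowers c' is finite since everything is a power of z and c' = z^n
  set k0 : ℤ := |n| with hk0
  have hk0pos : 0 < k0 := abs_pos.mpr hn0
  have hzk0 : z ^ k0 ∈ Subgroup.zpowers c' := by
    rcases abs_choice n with habs | habs
    · rw [hk0, habs, hn]; exact Subgroup.mem_zpowers _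
    · rw [hk0, habs, zpow_neg, hn]; exact inv_mem (Subgroup.mem_zpowers _)
  haveI : Finite (↥Cc ⧸ Subgroup.zpowers c') := by
    apply Finite.of_surjective
      (fun k : Fin k0.toNat => (QuotientGroup.mk (z ^ ((k : ℕ) : ℤ)) : ↥Cc ⧸ Subgroup.zpowers c'))
    intro q
    induction q using QuotientGroup.induction_on with
    | H x =>
      obtain ⟨m, rfl⟩ := Subgroup.mem_zpowers_iff.mp (hz x)
      set r : ℤ := m % k0 with hr
      have hr0 : 0 ≤ r := Int.emod_nonneg m (ne_of_gt hk0pos)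
      have hrlt : r < k0 := Int.emod_lt_of_pos m hk0pos
      refine ⟨⟨r.toNat, ?_⟩, ?_⟩
      · omega
      · apply (QuotientGroup.eq).mpr
        have hcoe : ((r.toNat : ℕ) : ℤ) = r := Int.toNat_of_nonneg hr0
        show (z ^ ((r.toNat : ℕ) : ℤ))⁻¹ * z ^ m ∈ Subgroup.zpowers c'
        rw [hcoe, ← zpow_neg, ← zpow_add]
        have : -r + m = k0 * (m / k0) := by
          have := Int.mul_ediv_add_emod m k0
          omega
        rw [this, zpow_mul]
        exact zpow_mem hzk0 _
  exact Subgroup.index_ne_zero_of_finite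

private lemma centralizer_le_normalizer_zpowers {H : Type*} [Group H] (h : H) :
    Subgroup.centralizer {h} ≤ Subgroup.normalizer (Subgroup.zpowers h : Set H) := by
  intro g hg
  have hgh : h * g = g * h := Subgroup.mem_centralizer_iff.mp hg h rfl
  have hconj : ∀ k : ℤ, g * h ^ k * g⁻¹ = h ^ k := by
    intro k
    have h1 : g * h * g⁻¹ = h := by
      rw [← hgh]; group
    calc g * h ^ k * g⁻¹ = (g * h * g⁻¹) ^ k := by
          rw [conj_zpow]
      _ = h ^ k := by rw [h1]
  rw [Subgroup.mem_normalizer_iff]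
  intro x
  constructor
  · intro hx
    obtain ⟨k, rfl⟩ := Subgroup.mem_zpowers_iff.mp hx
    exact ⟨k, (hconj k).symm⟩
  · intro hx
    obtain ⟨k, hk⟩ := Subgroup.mem_zpowers_iff.mp hx
    refine ⟨k, ?_⟩
    have h2 : g⁻¹ * h ^ k * g = h ^ k := by
      conv_lhs => rw [← hconj k]
      group
    calc h ^ k = g⁻¹ * h ^ k * g := h2.symm
      _ = g⁻¹ * (g * x * g⁻¹) * g := by rw [hk]
      _ = x := by group

/-- If `F` is a free finite-index subgroup of `H` and `h ∈ F` is nontrivial, then `⟨h⟩` has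
finite index in its normalizer `N_H(⟨h⟩)`; in particular the normalizer is virtually cyclic. -/
theorem zpowers_finiteIndex_in_normalizer {H : Type*} [Group H]
    (F : Subgroup H) [IsFreeGroup ↥F] (hfi : F.FiniteIndex)
    (h : H) (hh : h ∈ F) (hne : h ≠ 1) :
    ((Subgroup.zpowers h).subgroupOf (Subgroup.normalizer (Subgroup.zpowers h : Set H))).FiniteIndex ∧
    ∃ C : Subgroup ↥(Subgroup.normalizer (Subgroup.zpowers h : Set H)), IsCyclic ↥C ∧ C.FiniteIndex := by
  classical
  set Z := Subgroup.zpowers h with hZdef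
  set N := Subgroup.normalizer (Z : Set H) with hNdef
  set C := Subgroup.centralizer {h} with hCdef
  have hCN : C ≤ N := centralizer_le_normalizer_zpowers h
  have hhC : h ∈ C := Subgroup.mem_centralizer_iff.mpr (by
    rintro y hy; rw [Set.mem_singleton_iff] at hy; rw [hy])
  -- h generates a torsion-free cyclic group
  have htf : ∀ n : ℤ, h ^ n = 1 → n = 0 := by
    intro n hn
    by_contra hn0
    have h1 : (⟨h, hh⟩ : ↥F) ^ n = 1 := by
      apply Subtype.ext
      push_cast
      exact hn
    exact hne (congrArg Subtype.val (isFreeGroup_torsionfree _ n h1 hn0))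
  have hsq : h⁻¹ ≠ h := by
    intro e
    have h2 : h ^ (2 : ℤ) = 1 := by
      have : h * h = 1 := mul_eq_one_iff_eq_inv.mpr e.symm
      rw [show (2 : ℤ) = 1 + 1 from rfl, zpow_add, zpow_one, this]
    have := htf 2 h2
    omega
  -- conjugation dichotomy on the normalizer
  have dich : ∀ g : H, g ∈ N → g * h * g⁻¹ = h ∨ g * h * g⁻¹ = h⁻¹ := by
    intro g hg
    have h1 : g * h * g⁻¹ ∈ Z := (Subgroup.mem_normalizer_iff.mp hg h).mp (Subgroup.mem_zpowers h)
    have h2 : g⁻¹ * h * g ∈ Z := by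
      have hg' : g⁻¹ ∈ N := inv_mem hg
      have := (Subgroup.mem_normalizer_iff.mp hg' h).mp (Subgroup.mem_zpowers h)
      simpa using this
    obtain ⟨k, hk⟩ := Subgroup.mem_zpowers_iff.mp h1
    obtain ⟨m, hm⟩ := Subgroup.mem_zpowers_iff.mp h2
    have hginv : (g⁻¹ * h * g) ^ k = g⁻¹ * h ^ k * g := by
      have := conj_zpow (i := k) (a := g⁻¹) (b := h)
      simpa using this
    have hcomp : h ^ (m * k) = h := by
      calc h ^ (m * k) = (h ^ m) ^ k := by rw [zpow_mul]
        _ = (g⁻¹ * h * g) ^ k := by rw [hm]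
        _ = g⁻¹ * h ^ k * g := hginv
        _ = g⁻¹ * (g * h * g⁻¹) * g := by rw [hk]
        _ = h := by group
    have hmk1 : m * k = 1 := by
      have hz : h ^ (m * k - 1) = 1 := by
        rw [zpow_sub, hcomp, zpow_one]
        simp
      have := htf _ hz
      omega
    rcases Int.isUnit_iff.mp (IsUnit.of_mul_eq_one (a := k) m (by rw [mul_comm]; exact hmk1))
        with h1' | h1'
    · left; rw [← hk, h1', zpow_one]
    · right; rw [← hk, h1', zpow_neg, zpow_one]
  -- the orientation homomorphism ε : N →* ℤˣ whose kernel lies in the centralizer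
  let ε : ↥N →* ℤˣ :=
  { toFun := fun g => if (g : H) * h * (g : H)⁻¹ = h then 1 else -1
    map_one' := by simp
    map_mul' := fun a b => by
      have hinv : (a : H) * h⁻¹ * (a : H)⁻¹ = ((a : H) * h * (a : H)⁻¹)⁻¹ := by group
      have hab : ((a * b : ↥N) : H) * h * ((a * b : ↥N) : H)⁻¹
          = (a : H) * ((b : H) * h * (b : H)⁻¹) * (a : H)⁻¹ := by
        push_cast
        group
      by_cases hb : (b : H) * h * (b : H)⁻¹ = h
      · rw [hb] at hab
        by_cases ha : (a : H) * h * (a : H)⁻¹ = h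
        · simp only [if_pos (hab.trans ha), if_pos ha, if_pos hb, mul_one]
        · simp only [if_neg (fun hcon => ha (hab.symm.trans hcon)), if_neg ha, if_pos hb,
            mul_one]
      · have hb' : (b : H) * h * (b : H)⁻¹ = h⁻¹ := (dich b b.2).resolve_left hb
        rw [hb'] at hab
        by_cases ha : (a : H) * h * (a : H)⁻¹ = h
        · have habinv : ((a * b : ↥N) : H) * h * ((a * b : ↥N) : H)⁻¹ = h⁻¹ := by
            rw [hab, hinv, ha]
          have hcon' : ((a * b : ↥N) : H) * h * ((a * b : ↥N) : H)⁻¹ ≠ h := fun hcon =>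
            hsq (habinv.symm.trans hcon)
          simp only [if_neg hcon', if_pos ha, if_neg hb, one_mul]
        · have ha' : (a : H) * h * (a : H)⁻¹ = h⁻¹ := (dich a a.2).resolve_left ha
          have hcond : ((a * b : ↥N) : H) * h * ((a * b : ↥N) : H)⁻¹ = h := by
            rw [hab, hinv, ha', inv_inv]
          simp only [if_pos hcond, if_neg ha, if_neg hb]
          decide }
  have hker : ε.ker ≤ C.subgroupOf N := by
    intro g hg
    rw [MonoidHom.mem_ker] at hg
    have hgh : (g : H) * h * (g : H)⁻¹ = h := by
      by_contra hcon
      have : ε g = -1 := if_neg hcon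
      rw [hg] at this
      exact absurd this (by decide)
    rw [Subgroup.mem_subgroupOf]
    apply Subgroup.mem_centralizer_iff.mpr
    rintro y hy
    rw [Set.mem_singleton_iff] at hy
    subst hy
    calc y * (g : H) = ((g : H) * y * (g : H)⁻¹) * (g : H) := by rw [hgh]
      _ = (g : H) * y := by group
  have hCrel : C.relIndex N ≠ 0 := by
    haveI : Finite (ε.range) := Subtype.finite
    haveI : ε.ker.FiniteIndex := Subgroup.finiteIndex_ker ε
    have hdvd : (C.subgroupOf N).index ∣ ε.ker.index := Subgroup.index_dvd_of_le hker
    intro hzero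
    have hzero' : (C.subgroupOf N).index = 0 := hzero
    rw [hzero'] at hdvd
    exact Subgroup.FiniteIndex.index_ne_zero (zero_dvd_iff.mp hdvd)
  have hZC : Z ≤ C := Subgroup.zpowers_le.mpr hhC
  have hZCF : Z ≤ C ⊓ F := le_inf hZC (Subgroup.zpowers_le.mpr hh)
  have hCFN : C ⊓ F ≤ N := inf_le_left.trans hCN
  have hFC : F.relIndex C ≠ 0 := by
    haveI := hfi
    exact Subgroup.FiniteIndex.index_ne_zero (H := F.subgroupOf C)
  have hCFrel : (C ⊓ F).relIndex N ≠ 0 := by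
    rw [← Subgroup.relIndex_mul_relIndex (C ⊓ F) C N inf_le_left hCN]
    exact mul_ne_zero (by rw [Subgroup.inf_relIndex_left]; exact hFC) hCrel
  have h3 : Z.relIndex (C ⊓ F) ≠ 0 := by
    have e1 : Z.subgroupOf F = Subgroup.zpowers (⟨h, hh⟩ : ↥F) := by
      ext x
      rw [Subgroup.mem_subgroupOf, hZdef, Subgroup.mem_zpowers_iff, Subgroup.mem_zpowers_iff]
      constructor
      · rintro ⟨k, hk⟩; exact ⟨k, Subtype.ext (by simpa using hk)⟩
      · rintro ⟨k, hk⟩; exact ⟨k, by simpa using congrArg Subtype.val hk⟩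
    have e2 : (C ⊓ F).subgroupOf F = Subgroup.centralizer {(⟨h, hh⟩ : ↥F)} := by
      ext x
      rw [Subgroup.mem_subgroupOf, Subgroup.mem_inf, Subgroup.mem_centralizer_iff]
      constructor
      · rintro ⟨hc, -⟩ y hy
        rw [Set.mem_singleton_iff] at hy; subst hy
        exact Subtype.ext (Subgroup.mem_centralizer_iff.mp hc h rfl)
      · intro hx
        refine ⟨Subgroup.mem_centralizer_iff.mpr ?_, x.2⟩
        rintro y hy; rw [Set.mem_singleton_iff] at hy; subst hy
        exact congrArg Subtype.val (hx _ rfl)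
    rw [← Subgroup.relIndex_subgroupOf (show C ⊓ F ≤ F from inf_le_right), e1, e2]
    exact centralizer_relIndex_ne_zero _ (fun hx => hne (congrArg Subtype.val hx))
  have main : (Z.subgroupOf N).index ≠ 0 := by
    have hmul := Subgroup.relIndex_mul_relIndex Z (C ⊓ F) N hZCF hCFN
    show Z.relIndex N ≠ 0
    rw [← hmul]
    exact mul_ne_zero h3 hCFrel
  refine ⟨⟨main⟩, Z.subgroupOf N, ?_, ⟨main⟩⟩
  haveI : IsCyclic ↥Z := by
    refine ⟨⟨h, Subgroup.mem_zpowers h⟩, ?_⟩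
    rintro ⟨x, hx⟩
    obtain ⟨k, hk⟩ := Subgroup.mem_zpowers_iff.mp hx
    exact Subgroup.mem_zpowers_iff.mpr ⟨k, Subtype.ext (by simpa using hk)⟩
  exact isCyclic_of_surjective _
    (Subgroup.subgroupOfEquivOfLe Subgroup.le_normalizer).symm.surjective
end

section
/- Let φ be an automorphism of F_n, let G = F_n ⋊_φ ℤ, and let H ≤ G be a subgroup which is virtually abelian (H has an abelian subgroup of finite index). Then the image in Out(H) of the conjugation homomorphism N_G(H) → Aut(H) (sending x to the automorphism h ↦ x h x⁻¹ of H) is finite. -/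
open SemidirectProduct

set_option linter.unusedSectionVars false
set_option maxHeartbeats 1000000

namespace FBCAux


open List

/-! ### List power and Fine–Wilf -/

variable {α : Type*}

def flat (k : ℕ) (L : List α) : List α := (List.replicate k L).flatten

@[simp] lemma flat_zero (L : List α) : flat 0 L = [] := rfl

@[simp] lemma flat_succ (k : ℕ) (L : List α) : flat (k+1) L = L ++ flat k L := by
  simp [flat, List.replicate_succ]

lemma flat_one (L : List α) : flat 1 L = L := by simp

@[simp] lemma flat_length (k : ℕ) (L : List α) : (flat k L).length = k * L.length := by
  induction k with
  | zero => simp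
  | succ k ih => simp [ih, Nat.succ_mul, Nat.add_comm]

lemma flat_add (a b : ℕ) (L : List α) : flat (a+b) L = flat a L ++ flat b L := by
  induction a with
  | zero => simp
  | succ a ih => simp [Nat.succ_add, ih]

lemma flat_getElem? (k : ℕ) (L : List α) (hL : L ≠ []) (i : ℕ) (hi : i < k * L.length) :
    (flat k L)[i]? = L[i % L.length]? := by
  induction k generalizing i with
  | zero => omega
  | succ k ih =>
    rw [flat_succ]
    rcases lt_or_ge i L.length with h | h
    · rw [List.getElem?_append_left h, Nat.mod_eq_of_lt h]
    · rw [List.getElem?_append_right h, ih (i - L.length) (by simp [Nat.succ_mul] at hi; omega)]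
      congr 1
      have hL0 : 0 < L.length := List.length_pos_iff.2 hL
      conv_rhs => rw [show i = (i - L.length) + L.length by omega]
      rw [Nat.add_mod_right]

/-- `l` has period `p`. -/
def Per (l : List α) (p : ℕ) : Prop := ∀ i, i + p < l.length → l[i]? = l[i + p]?

lemma per_zero (l : List α) : Per l 0 := fun i _ => by simp

lemma per_flat (k : ℕ) (L : List α) (hL : L ≠ []) : Per (flat k L) L.length := by
  intro i hi
  rw [flat_length] at hi
  rw [flat_getElem? k L hL i (by omega), flat_getElem? k L hL (i + L.length) hi,
    Nat.add_mod_right]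

lemma per_sub {l : List α} {p q : ℕ} (hpq : p < q) (hn : p + q ≤ l.length)
    (hp : Per l p) (hq : Per l q) : Per l (q - p) := by
  intro i hi
  rcases lt_or_ge (i + q) l.length with h | h
  · have h1 : (i + (q - p)) + p < l.length := by omega
    have hthis := hp (i + (q - p)) h1
    rw [show i + (q - p) + p = i + q by omega] at hthis
    exact (hq i h).trans hthis.symm
  · have hip : p ≤ i := by omega
    have h1 := hp (i - p) (by omega)
    rw [show i - p + p = i by omega] at h1
    have h2 := hq (i - p) (by omega)
    rw [show i - p + q = i + (q - p) by omega] at h2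
    rw [← h1, h2]

lemma fine_wilf : ∀ (N : ℕ) {l : List α} {p q : ℕ}, p + q ≤ N → p + q ≤ l.length →
    Per l p → Per l q → Per l (Nat.gcd p q) := by
  intro N
  induction N with
  | zero =>
    intro l p q hN _ _ _
    have : p = 0 ∧ q = 0 := by omega
    simpa [this.1, this.2] using per_zero l
  | succ N ih =>
    intro l p q hN hn hp hq
    rcases Nat.eq_zero_or_pos p with rfl | hp0
    · simpa using hq
    rcases Nat.eq_zero_or_pos q with rfl | hq0
    · simpa using hp
    rcases lt_trichotomy p q with h | rfl | h
    · have hsub := per_sub h hn hp hq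
      have : Nat.gcd p (q - p) = Nat.gcd p q := by
        conv_rhs => rw [show q = (q - p) + p by omega]
        rw [Nat.gcd_add_self_right]
      rw [← this]
      exact ih (by omega) (by omega) hp hsub
    · simpa [Nat.gcd_self] using hp
    · have hsub := per_sub h (by omega) hq hp
      have : Nat.gcd (p - q) q = Nat.gcd p q := by
        conv_rhs => rw [show p = (p - q) + q by omega]
        rw [Nat.gcd_add_self_left]
      rw [← this]
      exact ih (by omega) (by omega) hsub hq

lemma per_mod {l : List α} {p : ℕ} (hp : 0 < p) (h : Per l p) :
    ∀ i, i < l.length → l[i]? = l[i % p]? := by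
  intro i
  induction i using Nat.strong_induction_on with
  | _ i IH =>
    intro hi
    rcases lt_or_ge i p with h' | h'
    · rw [Nat.mod_eq_of_lt h']
    · have h1 := h (i - p) (by omega)
      rw [show i - p + p = i by omega] at h1
      rw [← h1, IH (i - p) (by omega) (by omega)]
      congr 1
      conv_rhs => rw [show i = (i - p) + p by omega]
      rw [Nat.add_mod_right]

lemma eq_flat_of_per {l : List α} {r : ℕ} (hr : 0 < r) (hrl : r ∣ l.length)
    (h : Per l r) : l = flat (l.length / r) (l.take r) := by
  have hlen : r ≤ l.length ∨ l.length = 0 := by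
    rcases hrl with ⟨c, hc⟩
    rcases Nat.eq_zero_or_pos c with rfl | hc0
    · right; omega
    · left; calc r = r * 1 := by omega
        _ ≤ r * c := Nat.mul_le_mul_left r hc0
        _ = l.length := hc.symm
  rcases hlen with hlen | hlen
  · have htake : (l.take r).length = r := by simp [hlen]
    apply List.ext_getElem?
    intro i
    rcases lt_or_ge i l.length with hi | hi
    · rw [flat_getElem? _ _ (by intro hnil; simp [hnil] at htake; omega) i
        (by rw [htake, Nat.div_mul_cancel hrl]; exact hi)]
      rw [htake, List.getElem?_take_of_lt (Nat.mod_lt _ hr)]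
      exact per_mod hr h i hi
    · rw [List.getElem?_eq_none hi, List.getElem?_eq_none]
      rw [flat_length, htake, Nat.div_mul_cancel hrl]; exact hi
  · have : l = [] := List.length_eq_zero_iff.1 hlen
    simp [this, flat]

/-- Lyndon–Schützenberger for lists: two lists whose (≥2)-fold repetitions agree commute. -/
theorem ls_lists {S T : List α} {d b : ℕ} (hd : 2 ≤ d) (hb : 2 ≤ b)
    (h : flat d S = flat b T) : S ++ T = T ++ S := by
  rcases eq_or_ne S [] with rfl | hS
  · have : T = [] := by
      have := congrArg List.length h
      simp at this
      rcases this with h0 | h0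
      · omega
      · exact h0
    simp [this]
  rcases eq_or_ne T [] with rfl | hT
  · have : S = [] := by
      have := congrArg List.length h
      simp at this
      rcases this with h0 | h0
      · omega
      · exact h0
    simp [this]
  have hS0 : 0 < S.length := List.length_pos_iff.2 hS
  have hT0 : 0 < T.length := List.length_pos_iff.2 hT
  have hlen : (flat d S).length = d * S.length := flat_length d S
  have hlen' : (flat d S).length = b * T.length := by rw [h, flat_length]
  have hpS : Per (flat d S) S.length := per_flat d S hS
  have hpT : Per (flat d S) T.length := by rw [h]; exact per_flat b T hT
  have hbound : S.length + T.length ≤ (flat d S).length := by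
    have h1 : 2 * S.length ≤ (flat d S).length := by rw [hlen]; exact Nat.mul_le_mul_right _ hd
    have h2 : 2 * T.length ≤ (flat d S).length := by rw [hlen']; exact Nat.mul_le_mul_right _ hb
    omega
  set r := Nat.gcd S.length T.length with hr
  have hr0 : 0 < r := Nat.gcd_pos_of_pos_left _ hS0
  have hper : Per (flat d S) r := fine_wilf (S.length + T.length) le_rfl hbound hpS hpT
  have hrS : r ∣ S.length := Nat.gcd_dvd_left _ _
  have hrT : r ∣ T.length := Nat.gcd_dvd_right _ _
  -- prefix facts
  have hdecS : flat d S = S ++ flat (d-1) S := by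
    conv_lhs => rw [show d = (d-1)+1 by omega, flat_succ]
  have hdecT : flat b T = T ++ flat (b-1) T := by
    conv_lhs => rw [show b = (b-1)+1 by omega, flat_succ]
  have hSpref : S = (flat d S).take S.length := by
    rw [hdecS, List.take_left]
  have hTpref : T = (flat d S).take T.length := by
    rw [h, hdecT, List.take_left]
  have hperpre : ∀ (m : ℕ), m ≤ (flat d S).length → Per ((flat d S).take m) r := by
    intro m hm i hi
    simp only [List.length_take] at hi
    have him : i + r < m := lt_of_lt_of_le hi (min_le_left _ _)
    rw [List.getElem?_take_of_lt (by omega), List.getElem?_take_of_lt (by omega)]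
    exact hper i (by omega)
  have hSper : Per S r := by rw [hSpref]; exact hperpre _ (by omega)
  have hTper : Per T r := by rw [hTpref]; exact hperpre _ (by omega)
  have hSf := eq_flat_of_per hr0 hrS hSper
  have hTf := eq_flat_of_per hr0 hrT hTper
  have hPeq : S.take r = T.take r := by
    rw [hSpref, hTpref, List.take_take, List.take_take,
      min_eq_left (Nat.le_of_dvd hS0 hrS), min_eq_left (Nat.le_of_dvd hT0 hrT)]
  rw [hSf, hTf, hPeq, ← flat_add, ← flat_add, Nat.add_comm]


/-! ### Reduced words -/

open FreeGroup

variable {X : Type*} [DecidableEq X]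

/-- `b` cancels against `a` when following it. -/
def Canc (a b : X × Bool) : Prop := a.1 = b.1 ∧ b.2 = !a.2

instance : DecidableEq (X × Bool) := instDecidableEqProd

/-- A word is reduced. -/
def RedW (L : List (X × Bool)) : Prop := L.Chain' (fun a b => ¬ Canc a b)

lemma redW_nil : RedW ([] : List (X × Bool)) := List.isChain_nil

lemma not_canc_self (a : X × Bool) : ¬ Canc a a := by
  rintro ⟨-, h2⟩
  simp at h2

lemma not_step_of_redW {L M : List (X × Bool)} (h : RedW L) : ¬ FreeGroup.Red.Step L M := by
  intro hs
  induction hs with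
  | not =>
    rename_i L₁ L₂ x b
    obtain ⟨-, h2, -⟩ := List.isChain_append.1 h
    exact (List.isChain_cons_cons.1 h2).1 ⟨rfl, rfl⟩

lemma reduce_eq_self_of_redW {L : List (X × Bool)} (h : RedW L) : FreeGroup.reduce L = L := by
  have hr : FreeGroup.Red L (FreeGroup.reduce L) := FreeGroup.reduce.red
  rcases Relation.ReflTransGen.cases_head hr with heq | ⟨M, hstep, -⟩
  · exact heq.symm
  · exact absurd hstep (not_step_of_redW h)

lemma exists_of_not_chain' {R : α → α → Prop} :
    ∀ {l : List α}, ¬ l.Chain' R → ∃ l₁ a b l₂, l = l₁ ++ a :: b :: l₂ ∧ ¬ R a b := by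
  intro l
  induction l with
  | nil => intro h; exact absurd List.isChain_nil h
  | cons x xs ih =>
    intro h
    cases xs with
    | nil => exact absurd (List.isChain_singleton x) h
    | cons y rest =>
      by_cases hR : R x y
      · have : ¬ (y :: rest).Chain' R := fun hc => h (List.isChain_cons_cons.2 ⟨hR, hc⟩)
        obtain ⟨l₁, a, b, l₂, heq, hr⟩ := ih this
        exact ⟨x :: l₁, a, b, l₂, by rw [heq]; rfl, hr⟩
      · exact ⟨[], x, y, rest, rfl, hR⟩

lemma redW_toWord (g : FreeGroup X) : RedW g.toWord := by
  by_contra hc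
  obtain ⟨l₁, a, b, l₂, heq, hr⟩ := exists_of_not_chain' hc
  obtain ⟨h1, h2⟩ := not_not.1 hr
  have hb : b = (a.1, !a.2) := Prod.ext h1.symm h2
  exact FreeGroup.reduce.not (x := a.1) (b := a.2) (L₂ := l₁) (L₃ := l₂)
    (by rw [FreeGroup.reduce_toWord, heq, hb])

/-- Cyclically reduced word. -/
def CycW (L : List (X × Bool)) : Prop := RedW (L ++ L)

lemma CycW.redW {L : List (X × Bool)} (h : CycW L) : RedW L := (List.isChain_append.1 h).1

lemma cycW_nil : CycW ([] : List (X × Bool)) := by simp [CycW, RedW, List.Chain']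

lemma cycW_iff {L : List (X × Bool)} :
    CycW L ↔ RedW L ∧ ∀ a ∈ L.getLast?, ∀ b ∈ L.head?, ¬ Canc a b := by
  constructor
  · intro h
    obtain ⟨h1, -, h3⟩ := List.isChain_append.1 h
    exact ⟨h1, h3⟩
  · rintro ⟨h1, h2⟩
    exact List.isChain_append.2 ⟨h1, h1, h2⟩

lemma invRev_cons (x : X × Bool) (l : List (X × Bool)) :
    FreeGroup.invRev (x :: l) = FreeGroup.invRev l ++ [(x.1, !x.2)] := by
  simp [FreeGroup.invRev]

lemma head?_flat {L : List (X × Bool)} {k : ℕ} (hk : 1 ≤ k) :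
    (flat k L).head? = L.head? := by
  rcases eq_or_ne L [] with rfl | hL
  · simp [flat]
  · rw [show k = (k-1)+1 by omega, flat_succ, List.head?_append_of_ne_nil _ hL]

lemma getLast?_flat {L : List (X × Bool)} {k : ℕ} (hk : 1 ≤ k) :
    (flat k L).getLast? = L.getLast? := by
  rcases eq_or_ne L [] with rfl | hL
  · simp [flat]
  · induction k with
    | zero => omega
    | succ k ihk =>
      rw [flat_succ]
      rcases Nat.eq_zero_or_pos k with rfl | hk0
      · simp [flat]
      · have hfl : flat k L ≠ [] := by
          intro hnil
          have := congrArg List.length hnil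
          simp at this
          rcases this with h | h
          · omega
          · exact absurd h hL
        rw [List.getLast?_append_of_ne_nil _ hfl, ihk hk0]

lemma redW_flat {L : List (X × Bool)} (h : CycW L) (k : ℕ) : RedW (flat k L) := by
  induction k with
  | zero => exact redW_nil
  | succ k ih =>
    rw [flat_succ]
    refine List.isChain_append.2 ⟨h.redW, ih, ?_⟩
    intro a ha b hb
    rcases Nat.eq_zero_or_pos k with rfl | hk
    · simp [flat] at hb
    · rw [head?_flat hk] at hb
      exact (cycW_iff.1 h).2 a ha b hb

lemma toWord_mk_pow {L : List (X × Bool)} (h : CycW L) (k : ℕ) :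
    ((FreeGroup.mk L) ^ k).toWord = flat k L := by
  rw [FreeGroup.pow_mk, FreeGroup.toWord_mk]
  exact reduce_eq_self_of_redW (redW_flat h k)

/-- Every reduced word decomposes as `e ++ L ++ invRev e` with `L` cyclically reduced. -/
lemma exists_cyc_decomp_word :
    ∀ (N : ℕ) (w : List (X × Bool)), w.length ≤ N → RedW w →
      ∃ e L, w = e ++ L ++ FreeGroup.invRev e ∧ CycW L := by
  intro N
  induction N with
  | zero =>
    intro w hw _
    have : w = [] := List.length_eq_zero_iff.1 (by omega)
    exact ⟨[], [], by simp [this, FreeGroup.invRev], cycW_nil⟩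
  | succ N ih =>
    intro w hw hred
    by_cases hcyc : CycW w
    · exact ⟨[], w, by simp [FreeGroup.invRev], hcyc⟩
    · rcases eq_or_ne w [] with rfl | hne
      · exact absurd cycW_nil hcyc
      have hjunc : ∃ a ∈ w.getLast?, ∃ b ∈ w.head?, Canc a b := by
        by_contra hj
        push_neg at hj
        exact hcyc (cycW_iff.2 ⟨hred, fun a ha b hb => hj a ha b hb⟩)
      obtain ⟨a, ha, b, hb, hab⟩ := hjunc
      have hwlast : w.dropLast ++ [a] = w := List.dropLast_append_getLast? a ha
      rcases eq_or_ne w.dropLast [] with hdl | hdl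
      · -- w = [a], so b = a
        rw [hdl] at hwlast
        simp at hwlast
        rw [← hwlast] at hb
        simp at hb
        rw [hb] at hab
        exact absurd hab (not_canc_self b)
      · have hhead : w.dropLast.head? = some b := by
          rw [← hwlast] at hb
          rwa [List.head?_append_of_ne_nil _ hdl] at hb
        obtain ⟨mid, hmid⟩ : ∃ mid, w.dropLast = b :: mid := by
          cases hdl' : w.dropLast with
          | nil => exact absurd hdl' hdl
          | cons c tl =>
            rw [hdl'] at hhead
            simp at hhead
            exact ⟨tl, by rw [hhead]⟩
        have hwdec : w = b :: (mid ++ [a]) := by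
          rw [← hwlast, hmid]; simp
        have hmidred : RedW mid := by
          have h1 : RedW (mid ++ [a]) := by
            have := List.IsChain.tail hred
            rwa [hwdec] at this
          exact h1.prefix ⟨[a], rfl⟩
        have hmidlen : mid.length ≤ N := by
          have := congrArg List.length hwdec
          simp at this
          omega
        obtain ⟨e, L, hdec, hcycL⟩ := ih mid hmidlen hmidred
        have hba : a = (b.1, !b.2) := by
          obtain ⟨h1, h2⟩ := hab
          refine Prod.ext h1 ?_
          rw [h2]; simp
        refine ⟨b :: e, L, ?_, hcycL⟩
        rw [hwdec, hdec, invRev_cons, ← hba]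
        simp

lemma exists_cyc_decomp (g : FreeGroup X) :
    ∃ e L, g.toWord = e ++ L ++ FreeGroup.invRev e ∧ CycW L :=
  exists_cyc_decomp_word g.toWord.length g.toWord le_rfl (redW_toWord g)

lemma mk_decomp {e L : List (X × Bool)} {g : FreeGroup X}
    (h : g.toWord = e ++ L ++ FreeGroup.invRev e) :
    g = FreeGroup.mk e * FreeGroup.mk L * (FreeGroup.mk e)⁻¹ := by
  rw [FreeGroup.inv_mk, FreeGroup.mul_mk, FreeGroup.mul_mk, ← h, FreeGroup.mk_toWord]


/-! ### Group-level consequences for free groups -/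

lemma toWord_conj_pow {e L : List (X × Bool)} {g : FreeGroup X}
    (h : g.toWord = e ++ L ++ FreeGroup.invRev e) (hcyc : CycW L) (hL : L ≠ [])
    (k : ℕ) (hk : 1 ≤ k) :
    (g ^ k).toWord = e ++ flat k L ++ FreeGroup.invRev e := by
  have hgw : RedW (e ++ L ++ FreeGroup.invRev e) := h ▸ redW_toWord g
  have hdec := mk_decomp h
  have hpow : g ^ k = FreeGroup.mk e * (FreeGroup.mk L) ^ k * (FreeGroup.mk e)⁻¹ := by
    rw [hdec]
    rw [show FreeGroup.mk e * FreeGroup.mk L * (FreeGroup.mk e)⁻¹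
        = (MulAut.conj (FreeGroup.mk e)) (FreeGroup.mk L) from rfl]
    rw [← map_pow]
    rfl
  have hflatne : flat k L ≠ [] := by
    intro hnil
    have := congrArg List.length hnil
    simp at this
    rcases this with h0 | h0
    · omega
    · exact absurd h0 hL
  have hred2 : RedW (e ++ flat k L ++ FreeGroup.invRev e) := by
    obtain ⟨heL2, hInv, hj1⟩ := List.isChain_append.1 hgw
    obtain ⟨hE, hLc, hj2⟩ := List.isChain_append.1 heL2
    refine List.isChain_append.2 ⟨List.isChain_append.2 ⟨hE, redW_flat hcyc k, ?_⟩, hInv, ?_⟩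
    · intro x hx y hy
      rw [head?_flat hk] at hy
      exact hj2 x hx y hy
    · intro x hx y hy
      apply hj1 x _ y hy
      rw [List.getLast?_append_of_ne_nil _ hflatne] at hx
      rw [getLast?_flat hk] at hx
      rw [List.getLast?_append_of_ne_nil _ hL]
      exact hx
  rw [hpow, FreeGroup.inv_mk, FreeGroup.pow_mk, FreeGroup.mul_mk, FreeGroup.mul_mk,
    FreeGroup.toWord_mk]
  exact reduce_eq_self_of_redW (by rw [show e ++ (List.replicate k L).flatten ++
    FreeGroup.invRev e = e ++ flat k L ++ FreeGroup.invRev e from rfl]; exact hred2)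

lemma ne_one_of_decomp_ne_nil {e L : List (X × Bool)} {g : FreeGroup X}
    (h : g.toWord = e ++ L ++ FreeGroup.invRev e) (hg : g ≠ 1) : L ≠ [] := by
  intro hnil
  apply hg
  have := mk_decomp h
  rw [hnil] at this
  simp only [FreeGroup.mul_mk, List.append_nil] at this
  rw [this, mul_inv_cancel]

/-- Free groups are torsion-free (positive power version). -/
lemma freegroup_pow_ne_one {g : FreeGroup X} (hg : g ≠ 1) {k : ℕ} (hk : 1 ≤ k) :
    g ^ k ≠ 1 := by
  obtain ⟨e, L, h, hcyc⟩ := exists_cyc_decomp g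
  have hL := ne_one_of_decomp_ne_nil h hg
  intro h1
  have := toWord_conj_pow h hcyc hL k hk
  rw [h1] at this
  have hlen := congrArg List.length this
  simp [FreeGroup.toWord_one] at hlen
  have hL0 : 0 < L.length := List.length_pos_iff.2 hL
  have hk0 : 0 < k * L.length := Nat.mul_pos (by omega) hL0
  omega

lemma freegroup_zpow_ne_one {g : FreeGroup X} (hg : g ≠ 1) {k : ℤ} (hk : k ≠ 0) :
    g ^ k ≠ 1 := by
  rcases lt_or_gt_of_ne hk with h | h
  · intro h1
    have : g ^ (-k) = 1 := by
      rw [zpow_neg, h1, inv_one]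
    rw [show (-k) = ((-k).toNat : ℤ) by omega, zpow_natCast] at this
    exact freegroup_pow_ne_one hg (by omega) this
  · intro h1
    rw [show k = (k.toNat : ℤ) by omega, zpow_natCast] at h1
    exact freegroup_pow_ne_one hg (by omega) h1

lemma freegroup_zpow_inj {g : FreeGroup X} (hg : g ≠ 1) {i j : ℤ} (h : g ^ i = g ^ j) :
    i = j := by
  by_contra hij
  have : g ^ (i - j) = 1 := by
    rw [zpow_sub, h, mul_inv_cancel]
  exact freegroup_zpow_ne_one hg (by omega) this

/-- A root of an element with cyclically reduced word is itself cyclically reduced. -/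
lemma cycW_of_pow_cycW {d g : FreeGroup X} {k : ℕ} (hk : 1 ≤ k) (h : d ^ k = g)
    (hg : g ≠ 1) (hcyc : CycW g.toWord) : CycW d.toWord := by
  obtain ⟨e, L, hd, hcycL⟩ := exists_cyc_decomp d
  have hd1 : d ≠ 1 := by rintro rfl; rw [one_pow] at h; exact hg h.symm
  have hL := ne_one_of_decomp_ne_nil hd hd1
  have htw : g.toWord = e ++ flat k L ++ FreeGroup.invRev e := by
    rw [← h]; exact toWord_conj_pow hd hcycL hL k hk
  rcases eq_or_ne e [] with rfl | he
  · rw [hd]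
    simpa [FreeGroup.invRev] using hcycL
  · exfalso
    obtain ⟨x, xs, rfl⟩ : ∃ x xs, e = x :: xs := by
      cases e with
      | nil => exact absurd rfl he
      | cons x xs => exact ⟨x, xs, rfl⟩
    -- toWord g starts with x and ends with (x.1, !x.2); contradicts CycW
    have hhead : g.toWord.head? = some x := by rw [htw]; simp
    have hlast : g.toWord.getLast? = some (x.1, !x.2) := by
      rw [htw]
      show (((x :: xs) ++ flat k L) ++ FreeGroup.invRev (x :: xs)).getLast? = _
      rw [List.getLast?_append_of_ne_nil _ (by simp [invRev_cons]), invRev_cons,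
        List.getLast?_concat]
    have := (cycW_iff.1 hcyc).2 _ hlast _ hhead
    exact this ⟨rfl, by simp⟩

/-- Lyndon–Schützenberger for free groups, natural-exponent core. -/
lemma freegroup_commute_core (u v : FreeGroup X) (m k : ℕ) (hm : 1 ≤ m) (hk : 1 ≤ k)
    (h : u ^ m = v ^ k) (hne : u ^ m ≠ 1) : Commute u v := by
  rcases eq_or_lt_of_le hm with hm1 | hm2
  · rw [← hm1, pow_one] at h
    rw [h]
    exact (Commute.refl v).pow_left k
  rcases eq_or_lt_of_le hk with hk1 | hk2
  · rw [← hk1, pow_one] at h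
    rw [← h]
    exact ((Commute.refl u).pow_left m).symm
  -- now m, k ≥ 2
  obtain ⟨e, L, hdec, hcycL⟩ := exists_cyc_decomp (u ^ m)
  set c := FreeGroup.mk e with hc
  have hL : L ≠ [] := ne_one_of_decomp_ne_nil hdec hne
  have hg0red : RedW L := hcycL.redW
  have hg0 : (FreeGroup.mk L).toWord = L := by
    rw [FreeGroup.toWord_mk]; exact reduce_eq_self_of_redW hg0red
  have hg0ne : FreeGroup.mk L ≠ 1 := by
    intro h1
    rw [h1] at hg0
    exact hL (hg0.symm.trans FreeGroup.toWord_one)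
  have hgdec : u ^ m = c * FreeGroup.mk L * c⁻¹ := mk_decomp hdec
  set u' := c⁻¹ * u * c with hu'
  set v' := c⁻¹ * v * c with hv'
  have hu'm : u' ^ m = FreeGroup.mk L := by
    rw [hu', show (c⁻¹ * u * c) = (MulAut.conj c⁻¹) u by simp [MulAut.conj_apply],
      ← map_pow, hgdec]
    simp [MulAut.conj_apply]; group
  have hv'k : v' ^ k = FreeGroup.mk L := by
    rw [hv', show (c⁻¹ * v * c) = (MulAut.conj c⁻¹) v by simp [MulAut.conj_apply],
      ← map_pow, ← h, hgdec]
    simp [MulAut.conj_apply]; group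
  have hcycg0 : CycW (FreeGroup.mk L).toWord := by rw [hg0]; exact hcycL
  have hcu : CycW u'.toWord := cycW_of_pow_cycW hm hu'm hg0ne hcycg0
  have hcv : CycW v'.toWord := cycW_of_pow_cycW hk hv'k hg0ne hcycg0
  have hflat : flat m u'.toWord = flat k v'.toWord := by
    have h1 : (u' ^ m).toWord = flat m u'.toWord := by
      conv_lhs => rw [show u' = FreeGroup.mk u'.toWord from (FreeGroup.mk_toWord).symm]
      exact toWord_mk_pow hcu m
    have h2 : (v' ^ k).toWord = flat k v'.toWord := by
      conv_lhs => rw [show v' = FreeGroup.mk v'.toWord from (FreeGroup.mk_toWord).symm]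
      exact toWord_mk_pow hcv k
    rw [← h1, ← h2, hu'm, hv'k]
  have hcomm' : u' * v' = v' * u' := by
    have := ls_lists hm2 hk2 hflat
    calc u' * v' = FreeGroup.mk u'.toWord * FreeGroup.mk v'.toWord := by
          rw [FreeGroup.mk_toWord, FreeGroup.mk_toWord]
      _ = FreeGroup.mk (u'.toWord ++ v'.toWord) := FreeGroup.mul_mk
      _ = FreeGroup.mk (v'.toWord ++ u'.toWord) := by rw [this]
      _ = v' * u' := by rw [← FreeGroup.mul_mk, FreeGroup.mk_toWord, FreeGroup.mk_toWord]
  have : Commute u' v' := hcomm'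
  have hmapped := this.map (MulAut.conj c).toMonoidHom
  simp only [MulEquiv.coe_toMonoidHom, MulAut.conj_apply] at hmapped
  rw [hu', hv'] at hmapped
  have hcu' : c * (c⁻¹ * u * c) * c⁻¹ = u := by group
  have hcv' : c * (c⁻¹ * v * c) * c⁻¹ = v := by group
  rwa [hcu', hcv'] at hmapped

/-- Lyndon–Schützenberger: elements with a common nontrivial power commute. -/
theorem freegroup_commute_of_zpow_eq {u v : FreeGroup X} {m k : ℤ}
    (h : u ^ m = v ^ k) (hne : u ^ m ≠ 1) : Commute u v := by
  have hm : m ≠ 0 := by rintro rfl; simp at hne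
  have hk : k ≠ 0 := by rintro rfl; rw [h] at hne; simp at hne
  rcases lt_or_gt_of_ne hm with hm' | hm' <;> rcases lt_or_gt_of_ne hk with hk' | hk'
  · have h' : u⁻¹ ^ (-m).toNat = v⁻¹ ^ (-k).toNat := by
      rw [← zpow_natCast, ← zpow_natCast, show ((-m).toNat : ℤ) = -m by omega,
        show ((-k).toNat : ℤ) = -k by omega, inv_zpow, inv_zpow, zpow_neg, zpow_neg]
      simp [h]
    have := freegroup_commute_core u⁻¹ v⁻¹ (-m).toNat (-k).toNat (by omega) (by omega) h'
      (by rw [← zpow_natCast, show ((-m).toNat : ℤ) = -m by omega, inv_zpow, zpow_neg]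
          simpa using hne)
    simpa using (this.inv_left).inv_right
  · have h' : u⁻¹ ^ (-m).toNat = v ^ k.toNat := by
      rw [← zpow_natCast, ← zpow_natCast, show ((-m).toNat : ℤ) = -m by omega,
        show (k.toNat : ℤ) = k by omega, inv_zpow, zpow_neg]
      simp [h]
    have := freegroup_commute_core u⁻¹ v (-m).toNat k.toNat (by omega) (by omega) h'
      (by rw [← zpow_natCast, show ((-m).toNat : ℤ) = -m by omega, inv_zpow, zpow_neg]
          simpa using hne)
    simpa using this.inv_left
  · have h' : u ^ m.toNat = v⁻¹ ^ (-k).toNat := by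
      rw [← zpow_natCast, ← zpow_natCast, show (m.toNat : ℤ) = m by omega,
        show ((-k).toNat : ℤ) = -k by omega, inv_zpow, zpow_neg]
      simp [h]
    have := freegroup_commute_core u v⁻¹ m.toNat (-k).toNat (by omega) (by omega) h'
      (by rw [← zpow_natCast, show (m.toNat : ℤ) = m by omega]; exact hne)
    simpa using this.inv_right
  · have h' : u ^ m.toNat = v ^ k.toNat := by
      rw [← zpow_natCast, ← zpow_natCast, show (m.toNat : ℤ) = m by omega,
        show (k.toNat : ℤ) = k by omega]
      exact h
    exact freegroup_commute_core u v m.toNat k.toNat (by omega) (by omega) h'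
      (by rw [← zpow_natCast, show (m.toNat : ℤ) = m by omega]; exact hne)


/-! ### Abelian free groups are cyclic -/

lemma freegroup_of_not_commute {Y : Type*} {x y : Y} (hxy : x ≠ y) :
    ¬ Commute (FreeGroup.of x) (FreeGroup.of y) := by
  classical
  intro hcomm
  set c1 : Equiv.Perm (Fin 3) := Equiv.swap 0 1 with hc1
  set c2 : Equiv.Perm (Fin 3) := Equiv.swap 1 2 with hc2
  set f : Y → Equiv.Perm (Fin 3) := fun z => if z = x then c1 else if z = y then c2 else 1
  have h1 : FreeGroup.lift f (FreeGroup.of x) = c1 := by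
    rw [FreeGroup.lift_apply_of]; simp [f]
  have h2 : FreeGroup.lift f (FreeGroup.of y) = c2 := by
    rw [FreeGroup.lift_apply_of]; simp [f, hxy.symm]
  have := hcomm.map (FreeGroup.lift f)
  rw [h1, h2] at this
  have : c1 * c2 = c2 * c1 := this
  rw [hc1, hc2] at this
  exact absurd this (by decide)

/-- An abelian group which is free is cyclic. -/
lemma exists_generator_of_isFreeGroup_comm (Γ : Type*) [Group Γ] [IsFreeGroup Γ]
    (hab : ∀ x y : Γ, Commute x y) : ∃ g : Γ, ∀ x : Γ, ∃ i : ℤ, x = g ^ i := by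
  classical
  set e := IsFreeGroup.toFreeGroup Γ with he
  by_cases hX : ∀ x y : IsFreeGroup.Generators Γ, x = y
  · rcases isEmpty_or_nonempty (IsFreeGroup.Generators Γ) with hE | hE
    · refine ⟨1, fun x => ⟨0, ?_⟩⟩
      have : ∀ z : FreeGroup (IsFreeGroup.Generators Γ), z = 1 := by
        intro z
        induction z using FreeGroup.induction_on with
        | C1 => rfl
        | of t => exact (hE.false t).elim
        | inv_of t ht => rw [ht]; simp
        | mul a b ha hb => rw [ha, hb]; simp
      have hx : e x = 1 := this (e x)
      have := congrArg e.symm hx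
      simp at this
      rw [this]; simp
    · obtain ⟨x₀⟩ := hE
      refine ⟨e.symm (FreeGroup.of x₀), fun x => ?_⟩
      have : ∀ z : FreeGroup (IsFreeGroup.Generators Γ),
          ∃ i : ℤ, z = (FreeGroup.of x₀) ^ i := by
        intro z
        induction z using FreeGroup.induction_on with
        | C1 => exact ⟨0, by simp⟩
        | of t => exact ⟨1, by rw [hX t x₀, zpow_one]⟩
        | inv_of t ht =>
          obtain ⟨i, hi⟩ := ht
          exact ⟨-i, by rw [hi]; simp⟩
        | mul a b ha hb =>
          obtain ⟨i, hi⟩ := ha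
          obtain ⟨j, hj⟩ := hb
          exact ⟨i + j, by rw [hi, hj, zpow_add]⟩
      obtain ⟨i, hi⟩ := this (e x)
      refine ⟨i, ?_⟩
      have := congrArg e.symm hi
      simp only [MulEquiv.symm_apply_apply] at this
      rw [this, map_zpow]
  · push_neg at hX
    obtain ⟨x, y, hxy⟩ := hX
    exfalso
    apply freegroup_of_not_commute hxy
    have := hab (e.symm (FreeGroup.of x)) (e.symm (FreeGroup.of y))
    have h2 := this.map (e.toMonoidHom)
    simpa using h2

/-- Any abelian subgroup of a free group admits a generator. -/
lemma subgroup_cyclic_of_comm {S : Subgroup (FreeGroup X)}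
    (h : ∀ x y : ↥S, Commute x y) : ∃ g : ↥S, ∀ x : ↥S, ∃ i : ℤ, x = g ^ i :=
  exists_generator_of_isFreeGroup_comm ↥S h

/-- Two commuting elements of a free group have a common root. -/
lemma freegroup_common_root {u v : FreeGroup X} (h : Commute u v) :
    ∃ w : FreeGroup X, ∃ i j : ℤ, u = w ^ i ∧ v = w ^ j := by
  classical
  set S := Subgroup.closure ({u, v} : Set (FreeGroup X)) with hS
  have hcomm : ∀ a ∈ S, ∀ b ∈ S, Commute a b := by
    have hbase : ∀ a ∈ ({u, v} : Set (FreeGroup X)), ∀ b ∈ ({u, v} : Set (FreeGroup X)),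
        Commute a b := by
      rintro a (rfl | rfl) b (rfl | rfl)
      · exact Commute.refl _
      · exact h
      · exact h.symm
      · exact Commute.refl _
    intro a ha b hb
    induction ha using Subgroup.closure_induction with
    | mem x hx =>
      induction hb using Subgroup.closure_induction with
      | mem y hy => exact hbase x hx y hy
      | one => exact Commute.one_right x
      | mul y z _ _ hy hz => exact hy.mul_right hz
      | inv y _ hy => exact hy.inv_right
    | one => exact Commute.one_left b
    | mul x z _ _ hx hz => exact hx.mul_left hz
    | inv x _ hx => exact hx.inv_left
  have hcomm' : ∀ x y : ↥S, Commute x y := by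
    intro x y
    have := hcomm x x.2 y y.2
    exact Subtype.ext this
  obtain ⟨g, hg⟩ := subgroup_cyclic_of_comm hcomm'
  have hu : u ∈ S := Subgroup.subset_closure (by simp)
  have hv : v ∈ S := Subgroup.subset_closure (by simp)
  obtain ⟨i, hi⟩ := hg ⟨u, hu⟩
  obtain ⟨j, hj⟩ := hg ⟨v, hv⟩
  refine ⟨(g : FreeGroup X), i, j, ?_, ?_⟩
  · have := congrArg (Subtype.val) hi
    simpa using this
  · have := congrArg (Subtype.val) hj
    simpa using this

/-- Commuting with a common nontrivial element is transitive in a free group. -/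
lemma freegroup_commute_trans {a b z : FreeGroup X} (hz : z ≠ 1)
    (ha : Commute a z) (hb : Commute b z) : Commute a b := by
  obtain ⟨w, i, c, hwa, hwz⟩ := freegroup_common_root ha
  obtain ⟨w', j, d, hwb, hwz'⟩ := freegroup_common_root hb
  have hc : c ≠ 0 := by rintro rfl; rw [hwz] at hz; simp at hz
  have hd : d ≠ 0 := by rintro rfl; rw [hwz'] at hz; simp at hz
  have hww' : Commute w w' := by
    apply freegroup_commute_of_zpow_eq (m := c) (k := d)
    · rw [← hwz, ← hwz']
    · rw [← hwz]; exact hz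
  rw [hwa, hwb]
  exact (hww'.zpow_left i).zpow_right j

/-- If suitable powers commute, so do the elements. -/
lemma freegroup_commute_of_pow_commute {a b : FreeGroup X} {k l : ℕ}
    (hk : 1 ≤ k) (hl : 1 ≤ l) (h : Commute (a ^ k) (b ^ l)) : Commute a b := by
  rcases eq_or_ne a 1 with rfl | ha
  · exact Commute.one_left b
  rcases eq_or_ne b 1 with rfl | hb
  · exact Commute.one_right a
  have hak : a ^ k ≠ 1 := freegroup_pow_ne_one ha hk
  have hbl : b ^ l ≠ 1 := freegroup_pow_ne_one hb hl
  have h1 : Commute a (b ^ l) :=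
    freegroup_commute_trans hak (Commute.refl a |>.pow_right k) h.symm
  exact freegroup_commute_trans hbl h1 (Commute.refl b |>.pow_right l)


end FBCAux


namespace FBCAux

/-! ### Generic group lemmas -/

lemma finite_mulAut_of_gen {Γ : Type*} [Group Γ] (g : Γ)
    (hg : ∀ x : Γ, ∃ i : ℤ, x = g ^ i) : Finite (MulAut Γ) := by
  rcases finite_or_infinite Γ with hF | hI
  · exact Finite.of_injective (fun ψ : MulAut Γ => (ψ : Γ → Γ))
      (fun ψ₁ ψ₂ h => by ext x; exact congrFun h x)
  · have hord : ¬ IsOfFinOrder g := by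
      intro hfin
      have : Finite ↥(Subgroup.zpowers g) := hfin.finite_zpowers
      have hsur : Function.Surjective (fun z : ↥(Subgroup.zpowers g) => (z : Γ)) := by
        intro x
        obtain ⟨i, hi⟩ := hg x
        exact ⟨⟨x, hi ▸ zpow_mem (Subgroup.mem_zpowers g) i⟩, rfl⟩
      have : Finite Γ := Finite.of_surjective _ hsur
      exact not_finite Γ
    have hzinj : Function.Injective fun i : ℤ => g ^ i :=
      injective_zpow_iff_not_isOfFinOrder.2 hord
    have himg : ∀ ψ : MulAut Γ, ψ g = g ∨ ψ g = g⁻¹ := by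
      intro ψ
      obtain ⟨i, hi⟩ := hg (ψ g)
      obtain ⟨j, hj⟩ := hg (ψ⁻¹ g)
      have hfix : g = g ^ (i * j) := by
        have h1 : ψ⁻¹ (ψ g) = g := by simp
        rw [hi, map_zpow, hj, ← zpow_mul, mul_comm j i] at h1
        exact h1.symm
      have hji : i * j = 1 :=
        hzinj (show (fun i : ℤ => g ^ i) (i * j) = (fun i : ℤ => g ^ i) 1 by
          simp only [zpow_one]; exact hfix.symm)
      rcases Int.mul_eq_one_iff_eq_one_or_neg_one.1 hji with ⟨h1, -⟩ | ⟨h1, -⟩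
      · left; rw [hi, h1, zpow_one]
      · right; rw [hi, h1]; simp
    have hfin2 : Finite ↥({g, g⁻¹} : Set Γ) :=
      (Set.toFinite ({g, g⁻¹} : Set Γ)).to_subtype
    refine Finite.of_injective (fun ψ : MulAut Γ =>
      (⟨ψ g, by rcases himg ψ with h | h <;> simp [h]⟩ : ↥({g, g⁻¹} : Set Γ))) ?_
    intro ψ₁ ψ₂ h
    simp only [Subtype.mk.injEq] at h
    ext x
    obtain ⟨i, hi⟩ := hg x
    rw [hi, map_zpow, map_zpow, h]

lemma exists_pow_mem_of_finiteIndex {Γ : Type*} [Group Γ] (A : Subgroup Γ) [A.FiniteIndex]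
    (h : Γ) : ∃ k : ℕ, 0 < k ∧ h ^ k ∈ A := by
  have : Finite (Γ ⧸ A) := A.finite_quotient_of_finiteIndex
  obtain ⟨i, j, hij, heq⟩ := Finite.exists_ne_map_eq_of_infinite
    (fun i : ℤ => (QuotientGroup.mk (h ^ i) : Γ ⧸ A))
  have hmem : h ^ (j - i) ∈ A := by
    have := QuotientGroup.eq.1 heq
    rwa [← zpow_neg, ← zpow_add, show -i + j = j - i by ring] at this
  rcases lt_or_gt_of_ne hij with hlt | hlt
  · refine ⟨(j - i).toNat, by omega, ?_⟩
    rwa [← zpow_natCast, show (((j - i).toNat : ℤ)) = j - i by omega]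
  · refine ⟨(i - j).toNat, by omega, ?_⟩
    have : (h ^ (j - i))⁻¹ ∈ A := inv_mem hmem
    rwa [← zpow_neg, show -(j - i) = i - j by ring, ← zpow_natCast,
      show (((i - j).toNat : ℤ)) = i - j by omega] at *

end FBCAux

namespace FBCAux

/-! ### Transport to the kernel of `rightHom` on `FreeByCyclic` -/

variable {n : ℕ} {φ : MulAut (FreeGroup (Fin n))}

open SemidirectProduct

local notation "GG" => FreeByCyclic n φ

abbrev pG : FreeByCyclic n φ →* Multiplicative ℤ := SemidirectProduct.rightHom

lemma mem_ker_iff {g : GG} : g ∈ (pG (n := n) (φ := φ)).ker ↔ ∃ w, inl w = g := by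
  rw [← SemidirectProduct.range_inl_eq_ker_rightHom]
  exact Iff.rfl

lemma ker_zpow_ne_one {g : GG} (hg : g ∈ (pG (n := n) (φ := φ)).ker) (hg1 : g ≠ 1)
    {i : ℤ} (hi : i ≠ 0) : g ^ i ≠ 1 := by
  obtain ⟨w, rfl⟩ := mem_ker_iff.1 hg
  have hw : w ≠ 1 := fun h => hg1 (by rw [h, map_one])
  intro h1
  rw [← map_zpow] at h1
  have : w ^ i = 1 := inl_injective (by rw [h1, map_one])
  exact freegroup_zpow_ne_one hw hi this

lemma ker_zpow_inj {g : GG} (hg : g ∈ (pG (n := n) (φ := φ)).ker) (hg1 : g ≠ 1)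
    {i j : ℤ} (h : g ^ i = g ^ j) : i = j := by
  by_contra hij
  have : g ^ (i - j) = 1 := by rw [zpow_sub, h, mul_inv_cancel]
  exact ker_zpow_ne_one hg hg1 (by omega) this

lemma ker_commute_root {a b : GG} (ha : a ∈ (pG (n := n) (φ := φ)).ker)
    (hb : b ∈ (pG (n := n) (φ := φ)).ker) (h : Commute a b) :
    ∃ w ∈ (pG (n := n) (φ := φ)).ker, ∃ i j : ℤ, a = w ^ i ∧ b = w ^ j := by
  obtain ⟨wa, rfl⟩ := mem_ker_iff.1 ha
  obtain ⟨wb, rfl⟩ := mem_ker_iff.1 hb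
  have hcomm : Commute wa wb := by
    have := h
    unfold Commute SemiconjBy at this
    rw [← map_mul, ← map_mul] at this
    exact inl_injective this
  obtain ⟨w, i, j, hwa, hwb⟩ := freegroup_common_root hcomm
  exact ⟨inl w, mem_ker_iff.2 ⟨w, rfl⟩, i, j, by rw [← map_zpow, hwa], by rw [← map_zpow, hwb]⟩

lemma ker_commute_of_zpow_eq {u v : GG} (hu : u ∈ (pG (n := n) (φ := φ)).ker)
    (hv : v ∈ (pG (n := n) (φ := φ)).ker) {i j : ℤ} (h : u ^ i = v ^ j)
    (hne : u ^ i ≠ 1) : Commute u v := by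
  obtain ⟨wu, rfl⟩ := mem_ker_iff.1 hu
  obtain ⟨wv, rfl⟩ := mem_ker_iff.1 hv
  rw [← map_zpow, ← map_zpow] at h
  have h' : wu ^ i = wv ^ j := inl_injective h
  have hne' : wu ^ i ≠ 1 := by
    intro h1
    rw [← map_zpow, h1, map_one] at hne
    exact hne rfl
  have := freegroup_commute_of_zpow_eq h' hne'
  unfold Commute SemiconjBy at this ⊢
  rw [← map_mul, ← map_mul, this]

lemma ker_commute_of_pow_commute {a b : GG} (ha : a ∈ (pG (n := n) (φ := φ)).ker)
    (hb : b ∈ (pG (n := n) (φ := φ)).ker) {k l : ℕ} (hk : 1 ≤ k) (hl : 1 ≤ l)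
    (h : Commute (a ^ k) (b ^ l)) : Commute a b := by
  obtain ⟨wa, rfl⟩ := mem_ker_iff.1 ha
  obtain ⟨wb, rfl⟩ := mem_ker_iff.1 hb
  have hcomm : Commute (wa ^ k) (wb ^ l) := by
    unfold Commute SemiconjBy at h
    rw [← map_pow, ← map_pow, ← map_mul, ← map_mul] at h
    exact inl_injective h
  have := freegroup_commute_of_pow_commute hk hl hcomm
  unfold Commute SemiconjBy at this ⊢
  rw [← map_mul, ← map_mul, this]

/-- A subgroup of the kernel whose elements pairwise commute has a generator. -/
lemma ker_subgroup_gen (K : Subgroup GG) (hK : K ≤ (pG (n := n) (φ := φ)).ker)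
    (hcomm : ∀ u v : GG, u ∈ K → v ∈ K → Commute u v) :
    ∃ a, a ∈ K ∧ ∀ g ∈ K, ∃ i : ℤ, g = a ^ i := by
  classical
  set S : Subgroup (FreeGroup (Fin n)) := K.comap (inl : _ →* GG) with hS
  have hScomm : ∀ x y : ↥S, Commute x y := by
    rintro ⟨x, hx⟩ ⟨y, hy⟩
    have := hcomm (inl x) (inl y) hx hy
    unfold Commute SemiconjBy at this
    rw [← map_mul, ← map_mul] at this
    have hxy := inl_injective this
    exact Subtype.ext hxy
  obtain ⟨g, hg⟩ := subgroup_cyclic_of_comm hScomm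
  refine ⟨inl (g : FreeGroup (Fin n)), g.2, ?_⟩
  intro x hx
  obtain ⟨w, rfl⟩ := mem_ker_iff.1 (hK hx)
  obtain ⟨i, hi⟩ := hg ⟨w, hx⟩
  refine ⟨i, ?_⟩
  have := congrArg Subtype.val hi
  simp only [SubgroupClass.coe_zpow] at this
  rw [this, map_zpow]

/-- The key rigidity lemma: if `x` commutes with `a ≠ 1` in the fibre and conjugates `t`
(nontrivial in `ℤ`) to `a ^ m * t`, then `m = 0`. -/
lemma hard_m_eq_zero {a t x : GG} (ha : a ∈ (pG (n := n) (φ := φ)).ker) (ha1 : a ≠ 1)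
    (ht : SemidirectProduct.rightHom t ≠ 1) (hta : Commute t a) (hxa : Commute x a)
    {m : ℤ} (hxt : x * t * x⁻¹ = a ^ m * t) : m = 0 := by
  set τ : ℤ := Multiplicative.toAdd (SemidirectProduct.rightHom t) with hτ
  set s : ℤ := Multiplicative.toAdd (SemidirectProduct.rightHom x) with hs
  have hτ0 : τ ≠ 0 := fun h => ht (by
    have : SemidirectProduct.rightHom t = Multiplicative.ofAdd 0 := by
      rw [← h]; rfl
    simpa using this)
  -- conjugation of t by powers of x
  have hinv : x⁻¹ * t * x = a ^ (-m) * t := by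
    have h1 : t = x⁻¹ * (a ^ m * t) * x := by rw [← hxt]; group
    have h2 : x⁻¹ * (a ^ m * t) * x = a ^ m * (x⁻¹ * t * x) := by
      have hce := ((hxa.inv_left).zpow_right m).eq
      rw [show x⁻¹ * (a ^ m * t) * x = (x⁻¹ * a ^ m) * (t * x) by group, hce]
      group
    rw [h2] at h1
    have : a ^ (-m) * t = a ^ (-m) * (a ^ m * (x⁻¹ * t * x)) := by rw [← h1]
    rw [this, ← mul_assoc, ← zpow_add]
    simp
  have hstep : ∀ k : ℤ, x ^ k * t * (x ^ k)⁻¹ = a ^ (m * k) * t := by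
    intro k
    induction k using Int.induction_on with
    | zero => simp
    | succ k ih =>
      have hx1 : x ^ ((k : ℤ) + 1) = x * x ^ (k : ℤ) := by
        rw [zpow_add, zpow_one]; exact ((Commute.refl x).zpow_left k).eq
      rw [hx1]
      rw [show (x * x ^ (k:ℤ)) * t * (x * x ^ (k:ℤ))⁻¹
          = x * (x ^ (k:ℤ) * t * (x ^ (k:ℤ))⁻¹) * x⁻¹ by group, ih]
      have hcomm := (hxa.zpow_right (m * k)).eq
      rw [show x * (a ^ (m * (k:ℤ)) * t) * x⁻¹ = (x * a ^ (m * (k:ℤ))) * t * x⁻¹ by group,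
        hcomm, show a ^ (m * (k:ℤ)) * x * t * x⁻¹ = a ^ (m * (k:ℤ)) * (x * t * x⁻¹) by group,
        hxt, ← mul_assoc, ← zpow_add, show m * (k:ℤ) + m = m * ((k:ℤ) + 1) by ring]
    | pred k ih =>
      have hx1 : x ^ (-(k : ℤ) - 1) = x⁻¹ * x ^ (-(k : ℤ)) := by
        rw [sub_eq_add_neg, zpow_add, zpow_neg_one]; exact (((Commute.refl x).inv_right).zpow_left (-(k:ℤ))).eq
      rw [hx1]
      rw [show (x⁻¹ * x ^ (-(k:ℤ))) * t * (x⁻¹ * x ^ (-(k:ℤ)))⁻¹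
          = x⁻¹ * (x ^ (-(k:ℤ)) * t * (x ^ (-(k:ℤ)))⁻¹) * x by group, ih]
      have hcomm := ((hxa.inv_left).zpow_right (m * (-k))).eq
      rw [show x⁻¹ * (a ^ (m * (-(k:ℤ))) * t) * x = (x⁻¹ * a ^ (m * (-(k:ℤ)))) * t * x by group,
        hcomm,
        show a ^ (m * (-(k:ℤ))) * x⁻¹ * t * x = a ^ (m * (-(k:ℤ))) * (x⁻¹ * t * x) by group,
        hinv, ← mul_assoc, ← zpow_add, show m * (-(k:ℤ)) + -m = m * (-(k:ℤ) - 1) by ring]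
  set y : GG := x ^ τ * t ^ (-s) with hy
  have hyker : y ∈ (pG (n := n) (φ := φ)).ker := by
    have : SemidirectProduct.rightHom y = 1 := by
      rw [hy, map_mul, map_zpow, map_zpow]
      refine Multiplicative.toAdd.injective ?_
      rw [toAdd_mul, toAdd_zpow, toAdd_zpow, ← hs, ← hτ, toAdd_one]
      simp only [smul_eq_mul]
      ring
    exact this
  have hya : Commute y a := (hxa.zpow_left τ).mul_left (hta.zpow_left (-s))
  obtain ⟨w, hwker, α, β, hyw, haw⟩ := ker_commute_root hyker ha hya
  have hβ : β ≠ 0 := by rintro rfl; rw [zpow_zero] at haw; exact ha1 haw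
  have hw1 : w ≠ 1 := by rintro rfl; rw [one_zpow] at haw; exact ha1 haw
  -- u := t w t⁻¹ equals w
  set u : GG := t * w * t⁻¹ with hu
  have huker : u ∈ (pG (n := n) (φ := φ)).ker :=
    (MonoidHom.normal_ker _).conj_mem w hwker t
  have hta' : t * a * t⁻¹ = a := by
    have := hta.eq
    rw [this]; group
  have huβ : u ^ β = a := by
    rw [hu, show t * w * t⁻¹ = (MulAut.conj t) w from rfl, ← map_zpow, ← haw,
      MulAut.conj_apply, hta']
  have haβ : w ^ β ≠ 1 := by rw [← haw]; exact ha1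
  have hls : Commute u w := ker_commute_of_zpow_eq huker hwker
    (by rw [huβ, haw]) (by rw [huβ]; exact ha1)
  obtain ⟨v, hvker, γ, δ, huv, hwv⟩ := ker_commute_root huker hwker hls
  have hv1 : v ≠ 1 := by rintro rfl; rw [one_zpow] at hwv; exact hw1 hwv
  have hγδ : γ = δ := by
    have h1 : v ^ (γ * β) = v ^ (δ * β) := by
      rw [zpow_mul, zpow_mul, ← huv, ← hwv, huβ, haw]
    have := ker_zpow_inj hvker hv1 h1
    exact by
      have hβ' : β ≠ 0 := hβ
      exact mul_right_cancel₀ hβ' this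
  have huw : u = w := by rw [huv, hwv, hγδ]
  -- now compute y t y⁻¹ two ways
  have hyt : y * t * y⁻¹ = a ^ (m * τ) * t := by
    rw [hy, show (x ^ τ * t ^ (-s)) * t * (x ^ τ * t ^ (-s))⁻¹
      = x ^ τ * (t ^ (-s) * t * (t ^ (-s))⁻¹) * (x ^ τ)⁻¹ by group]
    have : t ^ (-s) * t * (t ^ (-s))⁻¹ = t := by group
    rw [this, hstep τ]
  have hyt2 : y * t * y⁻¹ = t := by
    have hconj : t * w⁻¹ * t⁻¹ = w⁻¹ := by
      have : t * w * t⁻¹ = w := by rw [← hu, huw]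
      rw [show t * w⁻¹ * t⁻¹ = (t * w * t⁻¹)⁻¹ by group, this]
    have hconjα : t * w ^ (-α) * t⁻¹ = w ^ (-α) := by
      rw [show t * w ^ (-α) * t⁻¹ = (MulAut.conj t) (w ^ (-α)) from rfl, map_zpow,
        MulAut.conj_apply, show t * w * t⁻¹ = w by rw [← hu, huw]]
    rw [hyw, show w ^ α * t * (w ^ α)⁻¹ = w ^ α * (t * w ^ (-α) * t⁻¹) * t by
      rw [zpow_neg]; group, hconjα, ← zpow_add]
    simp
  have : a ^ (m * τ) = 1 := by
    have := hyt.symm.trans hyt2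
    have h2 := congrArg (fun z => z * t⁻¹) this
    simpa using h2
  by_contra hm
  exact ker_zpow_ne_one ha ha1 (by
    intro h0
    rcases mul_eq_zero.1 h0 with h | h
    · exact hm h
    · exact hτ0 h) this

end FBCAux


namespace FBCAux

lemma set_finite_of_gen {Γ : Type*} [Group Γ] (g : Γ) (hgen : ∀ x : Γ, ∃ i : ℤ, x = g ^ i)
    (s : Set (OutG Γ)) : s.Finite := by
  haveI := finite_mulAut_of_gen g hgen
  haveI : Finite (OutG Γ) := Quotient.finite _
  exact Set.toFinite s

end FBCAux

/-- If `H` is a virtually abelian subgroup of a free-by-cyclic group `G = F_n ⋊_φ ℤ`, then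
the image in `Out(H)` of the conjugation action of the normalizer `N_G(H)` is finite. -/
theorem normalizer_induces_finite_outer (n : ℕ) (φ : MulAut (FreeGroup (Fin n)))
    (H : Subgroup (FreeByCyclic n φ))
    (A : Subgroup ↥H) (habel : ∀ a b : ↥A, a * b = b * a) (hAfi : A.FiniteIndex) :
    { q : OutG ↥H | ∃ ψ : MulAut ↥H,
        (∃ x ∈ Subgroup.normalizer (H : Set (FreeByCyclic n φ)), ∀ h : ↥H, (ψ h : FreeByCyclic n φ) = x * h * x⁻¹) ∧
        QuotientGroup.mk ψ = q }.Finite := by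
  classical
  set T : Set (MulAut ↥H) := {ψ | ∃ x ∈ Subgroup.normalizer (H : Set (FreeByCyclic n φ)), ∀ h : ↥H,
      (ψ h : FreeByCyclic n φ) = x * h * x⁻¹} with hT
  have hgoal : { q : OutG ↥H | ∃ ψ : MulAut ↥H, (∃ x ∈ Subgroup.normalizer (H : Set (FreeByCyclic n φ)), ∀ h : ↥H,
      (ψ h : FreeByCyclic n φ) = x * h * x⁻¹) ∧ QuotientGroup.mk ψ = q }
      = QuotientGroup.mk '' T := by
    ext q
    constructor
    · rintro ⟨ψ, h1, h2⟩; exact ⟨ψ, h1, h2⟩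
    · rintro ⟨ψ, h1, h2⟩; exact ⟨ψ, h1, h2⟩
  rw [hgoal]
  -- coercion helpers
  have hcoe_pow : ∀ (u : ↥H) (k : ℕ), ((u ^ k : ↥H) : FreeByCyclic n φ) = (u : FreeByCyclic n φ) ^ k := by
    intro u k; push_cast; rfl
  have hcoe_zpow : ∀ (u : ↥H) (k : ℤ), ((u ^ k : ↥H) : FreeByCyclic n φ) = (u : FreeByCyclic n φ) ^ k := by
    intro u k; push_cast; rfl
  have hcoe_ne_one : ∀ u : ↥H, u ≠ 1 → (u : FreeByCyclic n φ) ≠ 1 := by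
    intro u hu h1
    exact hu (OneMemClass.coe_eq_one.1 h1)
  -- elements of H in the kernel pairwise commute
  have hHcomm : ∀ u v : ↥H, (u : FreeByCyclic n φ) ∈ (FBCAux.pG (n := n) (φ := φ)).ker →
      (v : FreeByCyclic n φ) ∈ (FBCAux.pG (n := n) (φ := φ)).ker → Commute u v := by
    intro u v hu hv
    obtain ⟨k, hk, hkA⟩ := FBCAux.exists_pow_mem_of_finiteIndex A u
    obtain ⟨l, hl, hlA⟩ := FBCAux.exists_pow_mem_of_finiteIndex A v
    have hcommA : Commute ((u : FreeByCyclic n φ) ^ k) ((v : FreeByCyclic n φ) ^ l) := by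
      have h1 := habel ⟨u ^ k, hkA⟩ ⟨v ^ l, hlA⟩
      have h2 := congrArg (fun z : ↥A => ((z : ↥H) : FreeByCyclic n φ)) h1
      simp only [Subgroup.coe_mul] at h2
      rw [show (((⟨u ^ k, hkA⟩ : ↥A) : ↥H) : FreeByCyclic n φ) = (u : FreeByCyclic n φ) ^ k from hcoe_pow u k,
        show (((⟨v ^ l, hlA⟩ : ↥A) : ↥H) : FreeByCyclic n φ) = (v : FreeByCyclic n φ) ^ l from hcoe_pow v l] at h2
      exact h2
    have := FBCAux.ker_commute_of_pow_commute hu hv hk hl hcommA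
    exact Subtype.ext this
  -- T is closed under inverses and products
  have hTinv : ∀ ψ : MulAut ↥H, ψ ∈ T → ψ⁻¹ ∈ T := by
    rintro ψ ⟨x, hx, hψ⟩
    refine ⟨x⁻¹, inv_mem hx, ?_⟩
    intro h
    have hmem : x⁻¹ * (h : FreeByCyclic n φ) * x ∈ H := by
      have := (Subgroup.mem_normalizer_iff.1 (inv_mem hx) (h : FreeByCyclic n φ)).1 h.2
      rwa [inv_inv] at this
    set h' : ↥H := ⟨x⁻¹ * (h : FreeByCyclic n φ) * x, hmem⟩ with hh'
    have hψh' : ψ h' = h := by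
      apply Subtype.ext
      rw [hψ h']
      show x * (x⁻¹ * (h : FreeByCyclic n φ) * x) * x⁻¹ = h
      group
    have : ψ⁻¹ h = h' := by
      rw [← hψh']
      simp
    rw [this, inv_inv]
  have hTmul : ∀ ψ₁ ψ₂ : MulAut ↥H, ψ₁ ∈ T → ψ₂ ∈ T → ψ₁ * ψ₂ ∈ T := by
    rintro ψ₁ ψ₂ ⟨x₁, hx₁, hψ₁⟩ ⟨x₂, hx₂, hψ₂⟩
    refine ⟨x₁ * x₂, mul_mem hx₁ hx₂, ?_⟩
    intro h
    have : (ψ₁ * ψ₂) h = ψ₁ (ψ₂ h) := rfl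
    rw [this, hψ₁ (ψ₂ h), hψ₂ h]
    group
  -- conjugation preserves the projection
  have hpconj : ∀ (x g : FreeByCyclic n φ), SemidirectProduct.rightHom (x * g * x⁻¹)
      = SemidirectProduct.rightHom g := by
    intro x g
    rw [map_mul, map_mul, map_inv, mul_comm (SemidirectProduct.rightHom x), mul_assoc]
    simp
  by_cases hq1 : ∀ h : ↥H, (h : FreeByCyclic n φ) ∈ (FBCAux.pG (n := n) (φ := φ)).ker
  · -- H lies in the free fibre: H is cyclic
    obtain ⟨aG, haK, hgen⟩ := FBCAux.ker_subgroup_gen H (fun g hg => hq1 ⟨g, hg⟩)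
      (by
        intro u v hu hv
        have := hHcomm ⟨u, hu⟩ ⟨v, hv⟩ (hq1 ⟨u, hu⟩) (hq1 ⟨v, hv⟩)
        have h2 := congrArg (fun z : ↥H => (z : FreeByCyclic n φ)) this.eq
        exact (by simpa using h2 : u * v = v * u))
    refine FBCAux.set_finite_of_gen (⟨aG, haK⟩ : ↥H) ?_ _
    intro x
    obtain ⟨i, hi⟩ := hgen (x : FreeByCyclic n φ) x.2
    exact ⟨i, by apply Subtype.ext; rw [hcoe_zpow]; exact hi⟩
  · push_neg at hq1
    obtain ⟨h₀, hh₀⟩ := hq1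
    -- the range of the projection restricted to H
    set R : AddSubgroup ℤ :=
      { carrier := Set.range (fun h : ↥H => Multiplicative.toAdd (SemidirectProduct.rightHom (h : FreeByCyclic n φ))),
        add_mem' := by
          rintro x y ⟨hx, rfl⟩ ⟨hy, rfl⟩
          exact ⟨hx * hy, by push_cast [map_mul]; simp⟩
        zero_mem' := ⟨1, by simp⟩
        neg_mem' := by
          rintro x ⟨hx, rfl⟩
          exact ⟨hx⁻¹, by push_cast [map_inv]; simp⟩ } with hR
    obtain ⟨z₀, hz₀R⟩ := Int.subgroup_cyclic R
    have hz₀mem : z₀ ∈ R := by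
      rw [hz₀R]
      exact AddSubgroup.subset_closure (Set.mem_singleton z₀)
    obtain ⟨t, ht⟩ := hz₀mem
    change Multiplicative.toAdd (SemidirectProduct.rightHom ((t : FreeByCyclic n φ))) = z₀ at ht
    have hz₀ : z₀ ≠ 0 := by
      rintro rfl
      apply hh₀
      have : Multiplicative.toAdd (SemidirectProduct.rightHom (h₀ : FreeByCyclic n φ)) ∈ R :=
        ⟨h₀, rfl⟩
      rw [hz₀R] at this
      obtain ⟨k, hk⟩ := (AddSubgroup.mem_closure_singleton).1 this
      have h0 : Multiplicative.toAdd (SemidirectProduct.rightHom (h₀ : FreeByCyclic n φ)) = 0 := by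
        rw [← hk]; simp
      show SemidirectProduct.rightHom ((h₀ : FreeByCyclic n φ)) = 1
      have := congrArg Multiplicative.ofAdd h0
      simpa using this
    have htne : SemidirectProduct.rightHom ((t : FreeByCyclic n φ)) ≠ 1 := by
      intro h1
      rw [h1] at ht
      simp at ht
      exact hz₀ ht.symm
    -- every element of H maps to a power of z₀
    have hqt : ∀ h : ↥H, ∃ k : ℤ, SemidirectProduct.rightHom ((h : FreeByCyclic n φ))
        = (SemidirectProduct.rightHom ((t : FreeByCyclic n φ))) ^ k := by
      intro h
      have : Multiplicative.toAdd (SemidirectProduct.rightHom (h : FreeByCyclic n φ)) ∈ R :=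
        ⟨h, rfl⟩
      rw [hz₀R] at this
      obtain ⟨k, hk⟩ := (AddSubgroup.mem_closure_singleton).1 this
      refine ⟨k, ?_⟩
      refine Multiplicative.toAdd.injective ?_
      rw [toAdd_zpow, ht, ← hk]
    by_cases hker : ∀ b : ↥H, SemidirectProduct.rightHom ((b : FreeByCyclic n φ)) = 1 → b = 1
    · -- projection injective on H : H cyclic generated by t
      refine FBCAux.set_finite_of_gen t ?_ _
      intro x
      obtain ⟨k, hk⟩ := hqt x
      refine ⟨k, ?_⟩
      have h1 : SemidirectProduct.rightHom (((x * t ^ (-k) : ↥H) : FreeByCyclic n φ)) = 1 := by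
        push_cast
        rw [map_mul, hk]
        rw [map_zpow, ← zpow_add]
        simp
      have h2 := hker _ h1
      have h3 : x * t ^ (-k) = 1 := h2
      calc x = x * t ^ (-k) * t ^ k := by rw [mul_assoc, ← zpow_add]; simp
        _ = t ^ k := by rw [h3, one_mul]
    · push_neg at hker
      obtain ⟨b₀, hb₀ker, hb₀ne⟩ := hker
      -- generator of the fibre subgroup H ⊓ ker
      set K : Subgroup (FreeByCyclic n φ) := H ⊓ (FBCAux.pG (n := n) (φ := φ)).ker with hK
      obtain ⟨aG, haK, hgenK⟩ := FBCAux.ker_subgroup_gen K inf_le_right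
        (by
          intro u v hu hv
          obtain ⟨huH, huk⟩ := Subgroup.mem_inf.1 hu
          obtain ⟨hvH, hvk⟩ := Subgroup.mem_inf.1 hv
          have := hHcomm ⟨u, huH⟩ ⟨v, hvH⟩ huk hvk
          have h2 := congrArg (fun z : ↥H => (z : FreeByCyclic n φ)) this.eq
          exact (by simpa using h2 : u * v = v * u))
      have hb₀K : (b₀ : FreeByCyclic n φ) ∈ K :=
        Subgroup.mem_inf.2 ⟨b₀.2, MonoidHom.mem_ker.2 hb₀ker⟩
      have haG1 : aG ≠ 1 := by
        rintro rfl
        obtain ⟨i, hi⟩ := hgenK _ hb₀K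
        rw [one_zpow] at hi
        exact hb₀ne (OneMemClass.coe_eq_one.1 hi)
      set aH : ↥H := ⟨aG, (Subgroup.mem_inf.1 haK).1⟩ with haH
      have haHker : SemidirectProduct.rightHom ((aH : FreeByCyclic n φ)) = 1 :=
        MonoidHom.mem_ker.1 (Subgroup.mem_inf.1 haK).2
      have haH1 : aH ≠ 1 := fun h => haG1 (by
        have := congrArg (fun z : ↥H => (z : FreeByCyclic n φ)) h
        exact this)
      have hkerq : ∀ b : ↥H, SemidirectProduct.rightHom ((b : FreeByCyclic n φ)) = 1 →
          ∃ i : ℤ, b = aH ^ i := by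
        intro b hb
        have hbK : (b : FreeByCyclic n φ) ∈ K :=
          Subgroup.mem_inf.2 ⟨b.2, MonoidHom.mem_ker.2 hb⟩
        obtain ⟨i, hi⟩ := hgenK _ hbK
        refine ⟨i, Subtype.ext ?_⟩
        rw [hcoe_zpow]
        exact hi
      have haHinj : ∀ i j : ℤ, aH ^ i = aH ^ j → i = j := by
        intro i j hij
        have h1 := congrArg (fun z : ↥H => (z : FreeByCyclic n φ)) hij
        simp only [hcoe_zpow] at h1
        exact FBCAux.ker_zpow_inj (MonoidHom.mem_ker.2 haHker)
          (hcoe_ne_one aH haH1) h1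
      -- conjugation of aH by t
      obtain ⟨e₀, he₀⟩ : ∃ e : ℤ, t * aH * t⁻¹ = aH ^ e := by
        apply hkerq
        push_cast
        rw [hpconj]
        exact haHker
      obtain ⟨e₁, he₁⟩ : ∃ e : ℤ, t⁻¹ * aH * t = aH ^ e := by
        apply hkerq
        push_cast
        rw [show (t : FreeByCyclic n φ)⁻¹ * aH * t
          = (t : FreeByCyclic n φ)⁻¹ * aH * ((t : FreeByCyclic n φ)⁻¹)⁻¹ by group, hpconj]
        exact haHker
      have he₀pm : e₀ = 1 ∨ e₀ = -1 := by
        have hc1 : t⁻¹ * aH ^ e₀ * t = (t⁻¹ * aH * t) ^ e₀ := by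
          rw [show t⁻¹ * aH ^ e₀ * t = (MulAut.conj t⁻¹) (aH ^ e₀) by
              simp [MulAut.conj_apply], map_zpow, MulAut.conj_apply, inv_inv]
        have hrel : aH ^ (1 : ℤ) = aH ^ (e₁ * e₀) := by
          rw [zpow_one]
          calc aH = t⁻¹ * (t * aH * t⁻¹) * t := by group
            _ = t⁻¹ * aH ^ e₀ * t := by rw [he₀]
            _ = (t⁻¹ * aH * t) ^ e₀ := hc1
            _ = (aH ^ e₁) ^ e₀ := by rw [he₁]
            _ = aH ^ (e₁ * e₀) := by rw [← zpow_mul]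
        have := haHinj _ _ hrel
        rcases Int.mul_eq_one_iff_eq_one_or_neg_one.1 this.symm with ⟨-, h⟩ | ⟨-, h⟩
        · left; exact h
        · right; exact h
      -- generation of H by aH and t
      have hcl : ∀ h : ↥H, ∃ i k : ℤ, h = aH ^ i * t ^ k := by
        intro h
        obtain ⟨k, hk⟩ := hqt h
        have h1 : SemidirectProduct.rightHom (((h * t ^ (-k) : ↥H) : FreeByCyclic n φ)) = 1 := by
          push_cast
          rw [map_mul, hk, map_zpow, ← zpow_add]
          simp
        obtain ⟨i, hi⟩ := hkerq _ h1
        refine ⟨i, k, ?_⟩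
        calc h = h * t ^ (-k) * t ^ k := by rw [mul_assoc, ← zpow_add]; simp
          _ = aH ^ i * t ^ k := by rw [hi]
      have hext : ∀ ψ₁ ψ₂ : MulAut ↥H, ψ₁ aH = ψ₂ aH → ψ₁ t = ψ₂ t → ψ₁ = ψ₂ := by
        intro ψ₁ ψ₂ h1 h2
        apply MulEquiv.ext
        intro h
        obtain ⟨i, k, rfl⟩ := hcl h
        rw [map_mul, map_mul, map_zpow, map_zpow, map_zpow, map_zpow, h1, h2]
      -- signature of elements of T
      have hsiga : ∀ ψ ∈ T, ∃ ε : ℤ, (ε = 1 ∨ ε = -1) ∧ ψ aH = aH ^ ε := by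
        intro ψ hψT
        obtain ⟨x, hx, hψ⟩ := hψT
        obtain ⟨i, hi⟩ : ∃ i : ℤ, ψ aH = aH ^ i := by
          apply hkerq
          rw [hψ aH, hpconj]
          exact haHker
        obtain ⟨x', hx', hψ'⟩ := hTinv ψ ⟨x, hx, hψ⟩
        obtain ⟨j, hj⟩ : ∃ j : ℤ, ψ⁻¹ aH = aH ^ j := by
          apply hkerq
          rw [hψ' aH, hpconj]
          exact haHker
        have hrel : aH ^ (1 : ℤ) = aH ^ (j * i) := by
          rw [zpow_one]
          calc aH = ψ⁻¹ (ψ aH) := by simp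
            _ = ψ⁻¹ (aH ^ i) := by rw [hi]
            _ = (ψ⁻¹ aH) ^ i := by rw [map_zpow]
            _ = (aH ^ j) ^ i := by rw [hj]
            _ = aH ^ (j * i) := by rw [← zpow_mul]
        have := haHinj _ _ hrel
        rcases Int.mul_eq_one_iff_eq_one_or_neg_one.1 this.symm with ⟨-, h⟩ | ⟨-, h⟩
        · exact ⟨i, Or.inl h, hi⟩
        · exact ⟨i, Or.inr h, hi⟩
      have hsigt : ∀ ψ ∈ T, ∃ m : ℤ, ψ t = aH ^ m * t := by
        intro ψ hψT
        obtain ⟨x, hx, hψ⟩ := hψT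
        have h1 : SemidirectProduct.rightHom (((ψ t * t⁻¹ : ↥H) : FreeByCyclic n φ)) = 1 := by
          push_cast
          rw [map_mul, hψ t, hpconj, map_inv]
          simp
        obtain ⟨m, hm⟩ := hkerq _ h1
        refine ⟨m, ?_⟩
        have := congrArg (fun z : ↥H => z * t) hm
        simpa using this
      rcases he₀pm with he₀1 | he₀m1
      · -- abelian case: t and aH commute
        rw [he₀1, zpow_one] at he₀
        have hcommT : Commute (t : FreeByCyclic n φ) (aH : FreeByCyclic n φ) := by
          have h1 : t * aH = aH * t := by
            have := congrArg (fun z : ↥H => z * t) he₀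
            simpa [mul_assoc] using this
          have := congrArg (fun z : ↥H => (z : FreeByCyclic n φ)) h1
          exact (by simpa using this : (t : FreeByCyclic n φ) * aH = aH * t)
        have hkey : ∀ ψ ∈ T, ψ aH = aH → ψ = 1 := by
          intro ψ hψT hψa
          obtain ⟨m, hm⟩ := hsigt ψ hψT
          obtain ⟨x, hx, hψ⟩ := hψT
          have hxa : Commute x (aH : FreeByCyclic n φ) := by
            have h1 : x * (aH : FreeByCyclic n φ) * x⁻¹ = aH := by
              rw [← hψ aH, hψa]
            have h2 := congrArg (fun z => z * x) h1
            exact (by simpa [mul_assoc] using h2 : x * (aH : FreeByCyclic n φ) = aH * x)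
          have hxt : x * (t : FreeByCyclic n φ) * x⁻¹
              = (aH : FreeByCyclic n φ) ^ m * (t : FreeByCyclic n φ) := by
            rw [← hψ t, hm]
            push_cast
            rfl
          have hm0 : m = 0 := FBCAux.hard_m_eq_zero (MonoidHom.mem_ker.2 haHker)
            (hcoe_ne_one aH haH1) htne hcommT hxa hxt
          have hψt : ψ t = t := by rw [hm, hm0]; simp
          exact hext ψ 1 (by simpa using hψa) (by simpa using hψt)
        by_cases hex : ∃ ψ₀ ∈ T, ψ₀ aH = aH⁻¹
        · obtain ⟨ψ₀, hψ₀T, hψ₀a⟩ := hex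
          apply Set.Finite.subset
            ((Set.finite_singleton ((QuotientGroup.mk ψ₀ : OutG ↥H))).insert
              (QuotientGroup.mk (1 : MulAut ↥H)))
          rintro q ⟨ψ, hψT, rfl⟩
          obtain ⟨ε, hεpm, hεa⟩ := hsiga ψ hψT
          rcases hεpm with rfl | rfl
          · rw [zpow_one] at hεa
            rw [hkey ψ hψT hεa]
            exact Set.mem_insert _ _
          · have hψa : ψ aH = aH⁻¹ := by rw [hεa]; simp
            have hψ₀inv : ψ₀⁻¹ aH = aH⁻¹ := by
              have h1 : ψ₀ aH⁻¹ = aH := by rw [map_inv, hψ₀a]; simp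
              calc ψ₀⁻¹ aH = ψ₀⁻¹ (ψ₀ aH⁻¹) := by rw [h1]
                _ = aH⁻¹ := by simp
            have hδ : (ψ₀⁻¹ * ψ) aH = aH := by
              have : (ψ₀⁻¹ * ψ) aH = ψ₀⁻¹ (ψ aH) := rfl
              rw [this, hψa, map_inv, hψ₀inv]
              simp
            have hδ1 : ψ₀⁻¹ * ψ = 1 := hkey _ (hTmul _ _ (hTinv ψ₀ hψ₀T) hψT) hδ
            have : ψ = ψ₀ := by
              have := congrArg (fun z => ψ₀ * z) hδ1
              simpa using this
            rw [this]
            exact Set.mem_insert_iff.2 (Or.inr rfl)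
        · push_neg at hex
          apply Set.Finite.subset (Set.finite_singleton (QuotientGroup.mk (1 : MulAut ↥H)))
          rintro q ⟨ψ, hψT, rfl⟩
          obtain ⟨ε, hεpm, hεa⟩ := hsiga ψ hψT
          rcases hεpm with rfl | rfl
          · rw [zpow_one] at hεa
            rw [hkey ψ hψT hεa]
            rfl
          · exact absurd (by rw [hεa]; simp) (hex ψ hψT)
      · -- Klein bottle case
        rw [he₀m1] at he₀
        have he₀' : t * aH * t⁻¹ = aH⁻¹ := by rw [he₀]; simp
        have hkconj : ∀ j : ℤ, aH ^ j * t * (aH ^ j)⁻¹ = aH ^ (2 * j) * t := by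
          intro j
          have h1 : t * aH ^ (-j) * t⁻¹ = aH ^ j := by
            rw [show t * aH ^ (-j) * t⁻¹ = (MulAut.conj t) (aH ^ (-j)) by
                simp [MulAut.conj_apply], map_zpow, MulAut.conj_apply, he₀']
            rw [← zpow_neg_one, ← zpow_mul]
            ring_nf
          calc aH ^ j * t * (aH ^ j)⁻¹ = aH ^ j * (t * aH ^ (-j) * t⁻¹) * t := by
                rw [zpow_neg]; group
            _ = aH ^ j * aH ^ j * t := by rw [h1]
            _ = aH ^ (2 * j) * t := by rw [← zpow_add]; ring_nf
        set f : OutG ↥H → Prop × Prop := fun Q =>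
          if hQ : ∃ ψ ∈ T, QuotientGroup.mk ψ = Q then
            ((hQ.choose) aH = aH, ∃ j : ℤ, (hQ.choose) t = aH ^ (2 * j) * t)
          else (True, True) with hf
        have hinj : Set.InjOn f (QuotientGroup.mk '' T) := by
          rintro q1 ⟨ψ1', hψ1T', rfl⟩ q2 ⟨ψ2', hψ2T', rfl⟩ hfeq
          have hQ1 : ∃ ψ ∈ T, (QuotientGroup.mk ψ : OutG ↥H) = QuotientGroup.mk ψ1' :=
            ⟨ψ1', hψ1T', rfl⟩
          have hQ2 : ∃ ψ ∈ T, (QuotientGroup.mk ψ : OutG ↥H) = QuotientGroup.mk ψ2' :=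
            ⟨ψ2', hψ2T', rfl⟩
          set ψ1 := hQ1.choose with hψ1def
          set ψ2 := hQ2.choose with hψ2def
          obtain ⟨hψ1T, hψ1q⟩ := hQ1.choose_spec
          obtain ⟨hψ2T, hψ2q⟩ := hQ2.choose_spec
          rw [hf] at hfeq
          simp only [dif_pos hQ1, dif_pos hQ2] at hfeq
          have hfa : ((ψ1 aH = aH) : Prop) = ((ψ2 aH = aH) : Prop) :=
            congrArg Prod.fst hfeq
          have hft : ((∃ j : ℤ, ψ1 t = aH ^ (2 * j) * t) : Prop)
              = ((∃ j : ℤ, ψ2 t = aH ^ (2 * j) * t) : Prop) := congrArg Prod.snd hfeq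
          -- signatures
          obtain ⟨ε₁, hε₁pm, hε₁⟩ := hsiga ψ1 hψ1T
          obtain ⟨ε₂, hε₂pm, hε₂⟩ := hsiga ψ2 hψ2T
          obtain ⟨m₁, hm₁⟩ := hsigt ψ1 hψ1T
          obtain ⟨m₂, hm₂⟩ := hsigt ψ2 hψ2T
          have haHne : aH ≠ aH⁻¹ := by
            intro h
            have : aH ^ (1 : ℤ) = aH ^ (-1 : ℤ) := by simpa using h
            have := haHinj _ _ this
            omega
          have hεeq : ε₁ = ε₂ := by
            rcases hε₁pm with rfl | rfl <;> rcases hε₂pm with rfl | rfl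
            · rfl
            · exfalso
              rw [zpow_one] at hε₁
              have h2 : ψ2 aH = aH⁻¹ := by rw [hε₂]; simp
              rw [eq_iff_iff] at hfa
              exact haHne ((hfa.1 hε₁).symm.trans h2)
            · exfalso
              rw [zpow_one] at hε₂
              have h1 : ψ1 aH = aH⁻¹ := by rw [hε₁]; simp
              rw [eq_iff_iff] at hfa
              have := hfa.2 hε₂
              rw [h1] at this
              exact haHne this.symm
            · rfl
          -- uniqueness of the exponent m
          have hmuniq : ∀ (ψ : MulAut ↥H) (m m' : ℤ), ψ t = aH ^ m * t →
              ψ t = aH ^ m' * t → m = m' := by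
            intro ψ m m' h1 h2
            apply haHinj
            have := h1.symm.trans h2
            have h3 := congrArg (fun z : ↥H => z * t⁻¹) this
            simpa [mul_assoc] using h3
          have hpar : ∃ j : ℤ, m₂ - m₁ = 2 * j := by
            rw [eq_iff_iff] at hft
            rcases Int.even_or_odd m₁ with ⟨j₁, hj₁⟩ | ⟨j₁, hj₁⟩
            · have h1 : ∃ j : ℤ, ψ1 t = aH ^ (2 * j) * t :=
                ⟨j₁, by rw [hm₁, hj₁]; ring_nf⟩
              obtain ⟨j₂, hj₂⟩ := hft.1 h1
              have : m₂ = 2 * j₂ := hmuniq ψ2 m₂ (2 * j₂) hm₂ hj₂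
              exact ⟨j₂ - j₁, by omega⟩
            · rcases Int.even_or_odd m₂ with ⟨j₂, hj₂⟩ | ⟨j₂, hj₂⟩
              · exfalso
                have h2 : ∃ j : ℤ, ψ2 t = aH ^ (2 * j) * t :=
                  ⟨j₂, by rw [hm₂, hj₂]; ring_nf⟩
                obtain ⟨j₁', hj₁'⟩ := hft.2 h2
                have : m₁ = 2 * j₁' := hmuniq ψ1 m₁ (2 * j₁') hm₁ hj₁'
                omega
              · exact ⟨j₂ - j₁, by omega⟩
          obtain ⟨j, hj⟩ := hpar
          -- ψ1⁻¹ data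
          have hε₁sq : ε₁ * ε₁ = 1 := by rcases hε₁pm with rfl | rfl <;> ring
          have hinva : ψ1⁻¹ aH = aH ^ ε₁ := by
            have h1 : ψ1 (aH ^ ε₁) = aH := by
              rw [map_zpow, hε₁, ← zpow_mul, hε₁sq, zpow_one]
            calc ψ1⁻¹ aH = ψ1⁻¹ (ψ1 (aH ^ ε₁)) := by rw [h1]
              _ = aH ^ ε₁ := by simp
          have hinvt : ψ1⁻¹ t = aH ^ (-(ε₁ * m₁)) * t := by
            have h1 : ψ1 (aH ^ (-(ε₁ * m₁)) * t) = t := by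
              rw [map_mul, map_zpow, hε₁, hm₁, ← zpow_mul]
              rw [show ε₁ * -(ε₁ * m₁) = -(ε₁ * ε₁) * m₁ by ring, hε₁sq]
              rw [show (-(1:ℤ)) * m₁ = -m₁ by ring, ← mul_assoc, ← zpow_add]
              simp
            calc ψ1⁻¹ t = ψ1⁻¹ (ψ1 (aH ^ (-(ε₁ * m₁)) * t)) := by rw [h1]
              _ = aH ^ (-(ε₁ * m₁)) * t := by simp
          -- the difference is an inner automorphism
          have hδa : (ψ1⁻¹ * ψ2) aH = aH := by
            have h0 : (ψ1⁻¹ * ψ2) aH = ψ1⁻¹ (ψ2 aH) := rfl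
            rw [h0, hε₂, ← hεeq, map_zpow, hinva, ← zpow_mul, hε₁sq, zpow_one]
          have hδt : (ψ1⁻¹ * ψ2) t = aH ^ (2 * (ε₁ * j)) * t := by
            have h0 : (ψ1⁻¹ * ψ2) t = ψ1⁻¹ (ψ2 t) := rfl
            rw [h0, hm₂, map_mul, map_zpow, hinva, hinvt, ← zpow_mul, ← mul_assoc, ← zpow_add]
            congr 2
            rw [show ε₁ * m₂ + -(ε₁ * m₁) = ε₁ * (m₂ - m₁) by ring, hj]
            ring
          have hδconj : ψ1⁻¹ * ψ2 = MulAut.conj (aH ^ (ε₁ * j)) := by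
            apply hext
            · rw [hδa, MulAut.conj_apply]
              have : Commute (aH ^ (ε₁ * j)) aH := (Commute.refl aH).zpow_left _
              rw [this.eq]
              group
            · rw [hδt, MulAut.conj_apply, hkconj (ε₁ * j)]
          show QuotientGroup.mk ψ1' = QuotientGroup.mk ψ2'
          rw [← hψ1q, ← hψ2q]
          apply (QuotientGroup.eq).2
          rw [hδconj]
          exact ⟨aH ^ (ε₁ * j), rfl⟩
        exact Set.Finite.of_finite_image (Set.toFinite _) hinj
end

section
/- Let n ≥ 2 and let φ be an automorphism of F_n such that some positive power of φ is an inner automorphism of F_n (i.e. there exist k ≥ 1 and g ∈ F_n with φ^k equal to conjugation by g). Then the center of G = F_n ⋊_φ ℤ is an infinite cyclic group. -/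
open SemidirectProduct

section AuxCenter
open FreeGroup

lemma reduce_eq_self_iff {α : Type*} [DecidableEq α] (L : List (α × Bool)) :
    FreeGroup.reduce L = L ↔ L.Chain' (fun a b => ¬(a.1 = b.1 ∧ a.2 = !b.2)) := by
  induction L with
  | nil => simp [List.Chain', List.isChain_nil]
  | cons x L ih =>
    rw [FreeGroup.reduce.cons]
    constructor
    · intro h
      cases hL : FreeGroup.reduce L with
      | nil =>
        rw [hL] at h
        have h' : [x] = x :: L := h
        obtain rfl : L = [] := by injection h' with _ h2; exact h2.symm
        simp [List.Chain', List.isChain_singleton]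
      | cons hd tl =>
        rw [hL] at h
        have h' : (if x.1 = hd.1 ∧ x.2 = !hd.2 then tl else x :: hd :: tl) = x :: L := h
        by_cases hc : x.1 = hd.1 ∧ x.2 = !hd.2
        · rw [if_pos hc] at h'
          have hlen : (FreeGroup.reduce L).length ≤ L.length :=
            (FreeGroup.Red.length_le (FreeGroup.reduce.red))
          rw [hL] at hlen
          have := congrArg List.length h'
          simp at this hlen
          omega
        · rw [if_neg hc] at h'
          have hL' : L = hd :: tl := by injection h' with _ h2; exact h2.symm
          rw [List.Chain', List.isChain_cons]
          refine ⟨?_, ih.mp (by rw [hL, hL'])⟩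
          intro y hy
          rw [hL'] at hy
          simp at hy
          subst hy
          exact hc
    · intro h
      have hL : FreeGroup.reduce L = L := ih.mpr h.tail
      rw [hL]
      cases L with
      | nil => rfl
      | cons hd tl =>
        have hc : ¬(x.1 = hd.1 ∧ x.2 = !hd.2) := (List.isChain_cons_cons.mp h).1
        show (if x.1 = hd.1 ∧ x.2 = !hd.2 then tl else x :: hd :: tl) = x :: hd :: tl
        rw [if_neg hc]

lemma free_center_trivial {n : ℕ} (hn : 2 ≤ n) (w : FreeGroup (Fin n))
    (hw : ∀ u : FreeGroup (Fin n), w * u = u * w) : w = 1 := by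
  by_contra hw1
  set L := w.toWord with hLdef
  have hLred : FreeGroup.reduce L = L := FreeGroup.reduce_toWord w
  have hLne : L ≠ [] := fun h => hw1 (FreeGroup.toWord_eq_nil_iff.mp h)
  -- pick a letter avoiding two forbidden values
  set f1 : Fin n × Bool := ((L.head hLne).1, !(L.head hLne).2) with hf1
  set f2 : Fin n × Bool := L.getLast hLne with hf2
  have hcard : ({f1, f2} : Finset (Fin n × Bool)).card < Fintype.card (Fin n × Bool) := by
    have : ({f1, f2} : Finset (Fin n × Bool)).card ≤ 2 := Finset.card_insert_le _ _ |>.trans (by simp)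
    have h4 : 4 ≤ Fintype.card (Fin n × Bool) := by
      simp [Fintype.card_prod]
      omega
    omega
  have hne : ({f1, f2} : Finset (Fin n × Bool)) ≠ Finset.univ := by
    intro h
    rw [h] at hcard
    simp at hcard
  obtain ⟨c, -, hc⟩ := Finset.exists_of_ssubset (Finset.ssubset_univ_iff.mpr hne)
  simp only [Finset.mem_insert, Finset.mem_singleton, not_or] at hc
  obtain ⟨hcf1, hcf2⟩ := hc
  -- the conjugated word is reduced
  set M : List (Fin n × Bool) := c :: (L ++ [(c.1, !c.2)]) with hM
  have hMchain : M.Chain' (fun a b => ¬(a.1 = b.1 ∧ a.2 = !b.2)) := by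
    have hLchain := (reduce_eq_self_iff L).mp hLred
    rw [hM, List.Chain', List.isChain_cons]
    constructor
    · intro y hy
      rw [List.head?_append_of_ne_nil _ hLne] at hy
      rw [List.head?_eq_head hLne] at hy
      cases hy
      rintro ⟨h1, h2⟩
      exact hcf1 (Prod.ext h1 h2)
    · rw [List.isChain_append]
      refine ⟨hLchain, List.isChain_singleton _, ?_⟩
      intro a ha b hb
      rw [List.getLast?_eq_getLast hLne] at ha
      cases ha
      cases hb
      rintro ⟨h1, h2⟩
      apply hcf2
      rw [hf2]
      simp only [Bool.not_not] at h2
      exact Prod.ext h1.symm h2.symm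
  have hMred : FreeGroup.reduce M = M := (reduce_eq_self_iff M).mpr hMchain
  -- compute the conjugation
  have hxw : FreeGroup.mk [c] * w * (FreeGroup.mk [c])⁻¹ = w := by
    rw [← hw (FreeGroup.mk [c])]
    group
  have hmkM : FreeGroup.mk [c] * w * (FreeGroup.mk [c])⁻¹ = FreeGroup.mk M := by
    conv_lhs => rw [← FreeGroup.mk_toWord (x := w)]
    rw [FreeGroup.inv_mk, FreeGroup.mul_mk, FreeGroup.mul_mk]
    congr 1
  have hML : L = M := by
    have h0 := hxw.symm.trans hmkM
    have h2 := congrArg FreeGroup.toWord h0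
    rwa [FreeGroup.toWord_mk, hMred, ← hLdef] at h2
  have := congrArg List.length hML
  simp [hM] at this
  omega

lemma subgroup_mult_int_equiv (H : Subgroup (Multiplicative ℤ)) (hH : H ≠ ⊥) :
    Nonempty (H ≃* Multiplicative ℤ) := by
  set H' : AddSubgroup ℤ :=
    { carrier := {x : ℤ | Multiplicative.ofAdd x ∈ H}
      zero_mem' := H.one_mem
      add_mem' := fun ha hb => H.mul_mem ha hb
      neg_mem' := fun ha => H.inv_mem ha } with hH'
  obtain ⟨a, ha⟩ := Int.subgroup_cyclic H'
  have hmem : ∀ x : ℤ, Multiplicative.ofAdd x ∈ H ↔ ∃ m : ℤ, m * a = x := by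
    intro x
    constructor
    · intro hx
      have : x ∈ H' := hx
      rw [ha, AddSubgroup.mem_closure_singleton] at this
      obtain ⟨m, hm⟩ := this
      exact ⟨m, by simpa using hm⟩
    · rintro ⟨m, rfl⟩
      have : m * a ∈ H' := by
        rw [ha, AddSubgroup.mem_closure_singleton]
        exact ⟨m, by simp⟩
      exact this
  have ha0 : a ≠ 0 := by
    rintro rfl
    apply hH
    rw [Subgroup.eq_bot_iff_forall]
    intro x hx
    obtain ⟨m, hm⟩ := (hmem (Multiplicative.toAdd x)).mp (by simpa using hx)
    simp at hm
    have : Multiplicative.toAdd x = 0 := hm.symm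
    simpa using congrArg Multiplicative.ofAdd this
  refine ⟨(MulEquiv.ofBijective (MonoidHom.mk'
    (fun m : Multiplicative ℤ => (⟨Multiplicative.ofAdd (Multiplicative.toAdd m * a),
      (hmem _).mpr ⟨Multiplicative.toAdd m, rfl⟩⟩ : H)) ?_) ?_).symm⟩
  · intro m m'
    ext
    push_cast
    simp [add_mul, ofAdd_add]
  · constructor
    · intro m m' hmm
      have h1 : Multiplicative.toAdd m * a = Multiplicative.toAdd m' * a := by
        have := congrArg (fun z : H => Multiplicative.toAdd (z : Multiplicative ℤ)) hmm
        simpa using this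
      have := mul_right_cancel₀ ha0 h1
      simpa using congrArg Multiplicative.ofAdd this
    · rintro ⟨y, hy⟩
      obtain ⟨m, hm⟩ := (hmem (Multiplicative.toAdd y)).mp (by simpa using hy)
      refine ⟨Multiplicative.ofAdd m, ?_⟩
      ext
      show Multiplicative.ofAdd (Multiplicative.toAdd (Multiplicative.ofAdd m) * a) = y
      rw [toAdd_ofAdd, hm, ofAdd_toAdd]

theorem center_infinite_cyclic' (n : ℕ) (hn : 2 ≤ n) (φ : MulAut (FreeGroup (Fin n)))
    (k : ℕ) (hk : 1 ≤ k) (g : FreeGroup (Fin n))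
    (hφ : ∀ x : FreeGroup (Fin n), (φ ^ k) x = g * x * g⁻¹) :
    Nonempty (↥(Subgroup.center (FreeByCyclic n φ)) ≃* Multiplicative ℤ) := by
  -- φ fixes g
  have hφg : φ g = g := by
    have hconj : ∀ y : FreeGroup (Fin n), φ g * y * (φ g)⁻¹ = g * y * g⁻¹ := by
      intro y
      obtain ⟨x, rfl⟩ := φ.surjective y
      have h1 : φ ((φ ^ k) x) = (φ ^ k) (φ x) := by
        have h2 : φ * φ ^ k = φ ^ k * φ := (pow_succ' φ k).symm.trans (pow_succ φ k)
        calc φ ((φ ^ k) x) = (φ * φ ^ k) x := rfl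
          _ = (φ ^ k * φ) x := by rw [h2]
          _ = (φ ^ k) (φ x) := rfl
      rw [hφ x, hφ (φ x)] at h1
      simpa [_root_.map_mul, _root_.map_inv] using h1
    have hcomm : ∀ y : FreeGroup (Fin n), (g⁻¹ * φ g) * y = y * (g⁻¹ * φ g) := by
      intro y
      have := hconj y
      have h2 : φ g * y = g * y * g⁻¹ * φ g := by
        rw [← this]; group
      calc (g⁻¹ * φ g) * y = g⁻¹ * (φ g * y) := by group
        _ = g⁻¹ * (g * y * g⁻¹ * φ g) := by rw [h2]
        _ = y * (g⁻¹ * φ g) := by group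
    have h0 := free_center_trivial hn _ hcomm
    exact (inv_mul_eq_one.mp h0).symm
  have hfixn : ∀ j : ℕ, (φ ^ j) g = g := by
    intro j
    induction j with
    | zero => rfl
    | succ j ih =>
      rw [pow_succ']
      calc (φ * φ ^ j) g = φ ((φ ^ j) g) := rfl
        _ = φ g := by rw [ih]
        _ = g := hφg
  have hfix : ∀ m : ℤ, (φ ^ m) g = g := by
    intro m
    cases m with
    | ofNat j => rw [Int.ofNat_eq_coe, zpow_natCast]; exact hfixn j
    | negSucc j =>
      rw [zpow_negSucc]
      have h := hfixn (j + 1)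
      calc ((φ ^ (j+1))⁻¹) g = ((φ ^ (j+1))⁻¹) ((φ ^ (j+1)) g) := by rw [h]
        _ = g := by simp
  have hfixinv : ∀ m : ℤ, (φ ^ m) g⁻¹ = g⁻¹ := by
    intro m; rw [_root_.map_inv, hfix]
  -- the distinguished central element
  set z₀ : FreeByCyclic n φ := ⟨g⁻¹, Multiplicative.ofAdd (k : ℤ)⟩ with hz₀def
  have hz₀ : z₀ ∈ Subgroup.center (FreeByCyclic n φ) := by
    rw [Subgroup.mem_center_iff]
    intro h
    ext
    · show h.left * (zpowersHom _ φ h.right) g⁻¹ =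
        g⁻¹ * (zpowersHom _ φ (Multiplicative.ofAdd (k : ℤ))) h.left
      rw [zpowersHom_apply, zpowersHom_apply, hfixinv]
      rw [toAdd_ofAdd, zpow_natCast, hφ]
      group
    · show h.right * Multiplicative.ofAdd (k : ℤ) = Multiplicative.ofAdd (k : ℤ) * h.right
      exact mul_comm _ _
  -- the projection to ℤ is injective on the center
  set π : ↥(Subgroup.center (FreeByCyclic n φ)) →* Multiplicative ℤ :=
    SemidirectProduct.rightHom.comp (Subgroup.center (FreeByCyclic n φ)).subtype with hπ
  have hinj : Function.Injective π := by
    rw [injective_iff_map_eq_one]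
    intro z hz
    have hzr : (z : FreeByCyclic n φ).right = 1 := hz
    have hcomm : ∀ u : FreeGroup (Fin n),
        (z : FreeByCyclic n φ).left * u = u * (z : FreeByCyclic n φ).left := by
      intro u
      have := (Subgroup.mem_center_iff.mp z.2 (SemidirectProduct.inl u)).symm
      have hl := congrArg SemidirectProduct.left this
      rw [SemidirectProduct.mul_left, SemidirectProduct.mul_left] at hl
      simpa [hzr] using hl
    have hl1 : (z : FreeByCyclic n φ).left = 1 := free_center_trivial hn _ hcomm
    have : (z : FreeByCyclic n φ) = 1 := SemidirectProduct.ext hl1 hzr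
    exact Subtype.ext this
  -- conclude
  have hrange : π.range ≠ ⊥ := by
    intro hbot
    have hmem : π ⟨z₀, hz₀⟩ ∈ π.range := ⟨_, rfl⟩
    rw [hbot, Subgroup.mem_bot] at hmem
    have : π ⟨z₀, hz₀⟩ = Multiplicative.ofAdd (k : ℤ) := rfl
    rw [this] at hmem
    have : (k : ℤ) = 0 := by simpa using congrArg Multiplicative.toAdd hmem
    omega
  obtain ⟨e⟩ := subgroup_mult_int_equiv π.range hrange
  exact ⟨(MonoidHom.ofInjective hinj).trans e⟩

end AuxCenter

/-- If `n ≥ 2` and some positive power of `φ` is an inner automorphism of `F_n`, then the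
center of `F_n ⋊_φ ℤ` is infinite cyclic. -/
theorem center_infinite_cyclic (n : ℕ) (hn : 2 ≤ n) (φ : MulAut (FreeGroup (Fin n)))
    (k : ℕ) (hk : 1 ≤ k) (g : FreeGroup (Fin n))
    (hφ : ∀ x : FreeGroup (Fin n), (φ ^ k) x = g * x * g⁻¹) :
    Nonempty (↥(Subgroup.center (FreeByCyclic n φ)) ≃* Multiplicative ℤ) :=
  center_infinite_cyclic' n hn φ k hk g hφ
end

section
/- Let H be a finitely generated group that is not virtually cyclic, and let F be a normal finite-index subgroup of H which is a non-abelian free group. Let Ad : H → Aut(F) denote the conjugation homomorphism, and define Aut_H(F) := {α ∈ Aut(F) : for every h ∈ H the commutator (Ad h)⁻¹ α⁻¹ (Ad h) α is an inner automorphism of F}. Define N := {β ∈ Aut(H) : β(F) = F and β(h)h⁻¹ ∈ F for all h ∈ H}. Then N is a finite-index subgroup of Aut(H), and the restriction map N → Aut(F), β ↦ β|_F, is an injective group homomorphism whose image is exactly Aut_H(F). -/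
private lemma list_all_eq_of_concat_eq_cons {α : Type*} {x : α} :
    ∀ {l : List α}, l ++ [x] = x :: l → ∀ y ∈ l, y = x := by
  intro l
  induction l with
  | nil => simp
  | cons a t ih =>
    intro h y hy
    simp only [List.cons_append, List.cons.injEq] at h
    obtain ⟨rfl, h2⟩ := h
    rw [List.mem_cons] at hy
    rcases hy with rfl | hy
    · rfl
    · exact ih h2 y hy

private lemma toWord_mk_single_mul {α : Type*} [DecidableEq α] (d : α) (b : Bool)
    (z : FreeGroup α)
    (h : ∀ c ε tl, z.toWord = (c, ε) :: tl → ¬(d = c ∧ b = !ε)) :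
    (FreeGroup.mk [(d, b)] * z).toWord = (d, b) :: z.toWord := by
  conv_lhs => rw [← FreeGroup.mk_toWord (x := z)]
  rw [FreeGroup.mul_mk, FreeGroup.toWord_mk, List.singleton_append,
    FreeGroup.reduce.cons, FreeGroup.reduce_toWord]
  cases hw : z.toWord with
  | nil => rfl
  | cons hd tl =>
    obtain ⟨c, ε⟩ := hd
    simp only []
    rw [if_neg (h c ε tl hw)]

private lemma invRev_cons {α : Type*} (p : α × Bool) (L : List (α × Bool)) :
    FreeGroup.invRev (p :: L) = FreeGroup.invRev L ++ [(p.1, !p.2)] := by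
  simp [FreeGroup.invRev]

private lemma freeGroup_center_triv {α : Type*} (z x y : FreeGroup α)
    (hz : ∀ g, z * g = g * z) (hxy : x * y ≠ y * x) : z = 1 := by
  classical
  by_contra hz1
  have hw : z.toWord ≠ [] := fun h => hz1 (FreeGroup.toWord_eq_nil_iff.mp h)
  obtain ⟨⟨c, ε⟩, tl, hwd⟩ : ∃ hd tl, z.toWord = hd :: tl := by
    cases h : z.toWord with
    | nil => exact absurd h hw
    | cons a t => exact ⟨a, t, rfl⟩
  obtain ⟨d, hdc⟩ : ∃ d : α, d ≠ c := by
    by_contra hall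
    push_neg at hall
    apply hxy
    have key : ∀ L : List (α × Bool), FreeGroup.mk L ∈ Subgroup.zpowers (FreeGroup.of c) := by
      intro L
      induction L with
      | nil =>
        have : FreeGroup.mk ([] : List (α × Bool)) = 1 := rfl
        rw [this]; exact one_mem _
      | cons p t ih =>
        have hsplit : FreeGroup.mk (p :: t) = FreeGroup.mk [p] * FreeGroup.mk t := by
          rw [FreeGroup.mul_mk]; rfl
        rw [hsplit]
        refine mul_mem ?_ ih
        obtain ⟨a, b⟩ := p
        have ha : a = c := hall a
        subst ha
        cases b
        · have : FreeGroup.mk [(a, false)] = (FreeGroup.of a)⁻¹ := by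
            rw [show FreeGroup.of a = FreeGroup.mk [(a, true)] from rfl, FreeGroup.inv_mk]
            rfl
          rw [this]
          exact inv_mem (Subgroup.mem_zpowers _)
        · exact Subgroup.mem_zpowers _
    have hx := key x.toWord
    have hy := key y.toWord
    rw [FreeGroup.mk_toWord] at hx hy
    obtain ⟨m, hm⟩ := hx
    obtain ⟨n, hn⟩ := hy
    rw [← hm, ← hn, ← zpow_add, ← zpow_add, add_comm]
  -- key data
  have hofd : FreeGroup.of d = FreeGroup.mk [(d, true)] := rfl
  have hA : (FreeGroup.mk [(d, true)] * z).toWord = (d, true) :: z.toWord := by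
    refine toWord_mk_single_mul d true z ?_
    intro c' ε' tl' h'
    rw [hwd] at h'
    simp only [List.cons.injEq, Prod.mk.injEq] at h'
    exact fun ⟨hd1, _⟩ => hdc (hd1.trans h'.1.1.symm)
  have hcomm : z * FreeGroup.of d = FreeGroup.of d * z := hz (FreeGroup.of d)
  by_cases hcanc : ∃ t, z.toWord = t ++ [(d, false)]
  · -- cancellation case: length contradiction
    obtain ⟨t, ht⟩ := hcanc
    have h1 : z * FreeGroup.of d = FreeGroup.mk (z.toWord ++ [(d, true)]) := by
      conv_lhs => rw [← FreeGroup.mk_toWord (x := z), hofd]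
      rw [FreeGroup.mul_mk]
    have h2 : (z * FreeGroup.of d).toWord = FreeGroup.reduce (t ++ []) := by
      rw [h1, FreeGroup.toWord_mk, ht]
      have hstep : FreeGroup.Red.Step (t ++ (d, false) :: (d, !false) :: []) (t ++ []) :=
        FreeGroup.Red.Step.not
      have := FreeGroup.reduce.Step.eq hstep
      simpa using this
    have h3 : (z * FreeGroup.of d).toWord = (d, true) :: z.toWord := by
      rw [hcomm, hofd, hA]
    rw [h3] at h2
    have hlen : ((d, true) :: z.toWord).length ≤ (t ++ []).length :=
      h2 ▸ FreeGroup.Red.length_le (FreeGroup.reduce.red)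
    have : z.toWord.length = t.length + 1 := by rw [ht]; simp
    simp at hlen
    omega
  · -- no cancellation: z is a power of (of d), contradiction with first letter
    have hA' : (FreeGroup.mk [(d, false)] * z⁻¹).toWord = (d, false) :: z⁻¹.toWord := by
      refine toWord_mk_single_mul d false z⁻¹ ?_
      intro c' ε' tl' h'
      rintro ⟨rfl, hb⟩
      have hε' : ε' = true := by simpa using hb.symm
      subst hε'
      apply hcanc
      rw [FreeGroup.toWord_inv] at h'
      refine ⟨FreeGroup.invRev tl', ?_⟩
      have := congrArg FreeGroup.invRev h'
      rw [FreeGroup.invRev_invRev, invRev_cons] at this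
      simpa using this
    have hinv : FreeGroup.mk [(d, false)] = (FreeGroup.of d)⁻¹ := by
      rw [hofd, FreeGroup.inv_mk]; rfl
    have h4 : (FreeGroup.of d)⁻¹ * z⁻¹ = (FreeGroup.mk [(d, true)] * z)⁻¹ := by
      rw [← hofd, ← hcomm, mul_inv_rev]
    have h5 : ((FreeGroup.of d)⁻¹ * z⁻¹).toWord
        = FreeGroup.invRev z.toWord ++ [(d, false)] := by
      rw [h4, FreeGroup.toWord_inv, hA, invRev_cons]
      simp
    rw [← hinv] at h5
    rw [hA', FreeGroup.toWord_inv] at h5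
    have hall := list_all_eq_of_concat_eq_cons h5.symm
    have hmem : ((c, !ε) : α × Bool) ∈ FreeGroup.invRev z.toWord := by
      rw [FreeGroup.invRev, List.mem_reverse, List.mem_map]
      exact ⟨(c, ε), by rw [hwd]; exact List.mem_cons_self, rfl⟩
    have := hall _ hmem
    exact hdc (congrArg Prod.fst this).symm


private lemma finite_homs {G M : Type*} [Group G] [Group M] [Finite M]
    (hfg : Group.FG G) : Finite (G →* M) := by
  classical
  obtain ⟨S, hS⟩ := hfg.out
  refine Finite.of_injective (fun f => (fun s : S => f s.1)) ?_
  intro f g h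
  refine MonoidHom.eq_of_eqOn_dense hS ?_
  intro x hx
  exact congrFun h ⟨x, hx⟩

private lemma finite_subgroups_of_index {G : Type*} [Group G] (hfg : Group.FG G)
    (n : ℕ) (hn : n ≠ 0) : {K : Subgroup G | K.index = n}.Finite := by
  classical
  have : Finite {K : Subgroup G // K.index = n} := by
    have card_eq : ∀ K : {K : Subgroup G // K.index = n}, Nat.card (G ⧸ K.1) = n := by
      intro K; exact K.2
    have e : ∀ K : {K : Subgroup G // K.index = n}, (G ⧸ K.1) ≃ Fin n := by
      intro K
      exact (Nat.equivFinOfCardPos (by rw [card_eq K]; exact hn)).trans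
        (finCongr (card_eq K))
    have hfin : Finite ((G →* Equiv.Perm (Fin n)) × Fin n) := by
      have := finite_homs (M := Equiv.Perm (Fin n)) hfg
      infer_instance
    set Φ : {K : Subgroup G // K.index = n} → (G →* Equiv.Perm (Fin n)) × Fin n :=
      fun K =>
        (MonoidHom.comp
          (MonoidHom.mk' (fun σ => ((e K).symm.trans σ).trans (e K)) (by
            intro σ τ; ext i; simp [Equiv.Perm.mul_apply]))
          (MulAction.toPermHom G (G ⧸ K.1)),
          e K ((1 : G) : G ⧸ K.1)) with hΦ
    refine Finite.of_injective Φ ?_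
    have mem_iff : ∀ (K : {K : Subgroup G // K.index = n}) (g : G),
        g ∈ K.1 ↔ (Φ K).1 g (Φ K).2 = (Φ K).2 := by
      intro K g
      simp only [hΦ, MonoidHom.comp_apply, MonoidHom.mk'_apply, Equiv.trans_apply]
      rw [Equiv.symm_apply_apply]
      have : (MulAction.toPermHom G (G ⧸ K.1)) g ((1 : G) : G ⧸ K.1)
          = ((g : G) : G ⧸ K.1) := by
        rw [MulAction.toPermHom_apply]
        show g • ((1 : G) : G ⧸ K.1) = _
        rw [MulAction.Quotient.smul_mk, smul_eq_mul, mul_one]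
      rw [this]
      constructor
      · intro hg
        have : ((g : G) : G ⧸ K.1) = ((1 : G) : G ⧸ K.1) := by
          rw [QuotientGroup.eq]
          simpa using inv_mem hg
        rw [this]
      · intro hg
        have := (e K).injective hg
        rw [QuotientGroup.eq] at this
        simpa using this
    intro K L h
    ext g
    rw [mem_iff K g, mem_iff L g, h]
  have h2 : Finite ↑{K : Subgroup G | K.index = n} := this
  exact Set.toFinite _


section build
variable {H : Type*} [Group H] {F : Subgroup H} [F.Normal]

private lemma conj_mem' (h : H) (f : ↥F) : h * ↑f * h⁻¹ ∈ F :=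
  Subgroup.Normal.conj_mem ‹F.Normal› ↑f f.2 h

private def Pp (γ : MulAut ↥F) (h : H) (g : ↥F) : Prop :=
  ∀ f : ↥F, (g : H) * ↑(γ f) * (g : H)⁻¹ = h⁻¹ * ↑(γ ⟨h * ↑f * h⁻¹, conj_mem' h f⟩) * h

private lemma Pp_unique (hZ : ∀ z : ↥F, (∀ x : ↥F, z * x = x * z) → z = 1)
    {γ : MulAut ↥F} {h : H} {g₁ g₂ : ↥F} (h1 : Pp γ h g₁) (h2 : Pp γ h g₂) : g₁ = g₂ := by
  have key : ∀ x : ↥F, (g₂⁻¹ * g₁) * x = x * (g₂⁻¹ * g₁) := by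
    intro x
    obtain ⟨f, rfl⟩ := γ.surjective x
    have e12 : (g₁ : H) * ↑(γ f) * (g₁ : H)⁻¹ = (g₂ : H) * ↑(γ f) * (g₂ : H)⁻¹ :=
      (h1 f).trans (h2 f).symm
    rw [Subtype.ext_iff]
    push_cast
    calc ((g₂ : H)⁻¹ * ↑g₁) * ↑(γ f)
        = (g₂ : H)⁻¹ * ((g₁ : H) * ↑(γ f) * (g₁ : H)⁻¹) * g₁ := by group
      _ = (g₂ : H)⁻¹ * ((g₂ : H) * ↑(γ f) * (g₂ : H)⁻¹) * g₁ := by rw [e12]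
      _ = ↑(γ f) * ((g₂ : H)⁻¹ * ↑g₁) := by group
  exact (inv_mul_eq_one.mp (hZ _ key)).symm

private lemma Pp_exists {γ : MulAut ↥F} {h : H}
    (hγh : ∃ g : ↥F, (MulAut.conjNormal h)⁻¹ * γ * MulAut.conjNormal h * γ⁻¹ = MulAut.conj g) :
    ∃ g, Pp γ h g := by
  obtain ⟨g, hg⟩ := hγh
  refine ⟨g, fun f => ?_⟩
  have happ := MulEquiv.ext_iff.mp hg (γ f)
  simp only [MulAut.mul_apply, MulAut.inv_def, MulEquiv.symm_apply_apply,
    MulAut.conj_apply] at happ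
  have hH := congrArg (Subtype.val) happ
  rw [MulAut.conjNormal_symm_apply] at hH
  have harg : (MulAut.conjNormal h f : ↥F) = ⟨h * ↑f * h⁻¹, conj_mem' h f⟩ := by
    rw [Subtype.ext_iff, MulAut.conjNormal_apply]
  rw [harg] at hH
  push_cast at hH
  exact hH.symm

private lemma build (hZ : ∀ z : ↥F, (∀ x : ↥F, z * x = x * z) → z = 1) (γ : MulAut ↥F)
    (hγ : ∀ h : H, ∃ g : ↥F,
      (MulAut.conjNormal h)⁻¹ * γ * MulAut.conjNormal h * γ⁻¹ = MulAut.conj g) :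
    ∃ B : H →* H, (∀ h : H, ∃ g : ↥F, B h = h * ↑g) ∧ (∀ f : ↥F, B ↑f = ↑(γ f)) := by
  classical
  have hex : ∀ h, ∃ g, Pp γ h g := fun h => Pp_exists (hγ h)
  choose g hg using hex
  have gmul : ∀ h₁ h₂ : H, (g (h₁ * h₂) : H) = h₂⁻¹ * ↑(g h₁) * h₂ * ↑(g h₂) := by
    intro h₁ h₂
    have hmem : h₂⁻¹ * ↑(g h₁) * h₂ ∈ F := by
      have := conj_mem' h₂⁻¹ (g h₁); simpa using this
    have hPr : Pp γ (h₁ * h₂) (⟨h₂⁻¹ * ↑(g h₁) * h₂, hmem⟩ * g h₂) := by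
      intro f
      have e2 := hg h₂ f
      have e1 := hg h₁ ⟨h₂ * ↑f * h₂⁻¹, conj_mem' h₂ f⟩
      have harg : (⟨h₁ * ↑(⟨h₂ * ↑f * h₂⁻¹, conj_mem' h₂ f⟩ : ↥F) * h₁⁻¹,
            conj_mem' h₁ ⟨h₂ * ↑f * h₂⁻¹, conj_mem' h₂ f⟩⟩ : ↥F)
          = ⟨(h₁ * h₂) * ↑f * (h₁ * h₂)⁻¹, conj_mem' (h₁ * h₂) f⟩ := by
        rw [Subtype.ext_iff]
        show h₁ * (h₂ * ↑f * h₂⁻¹) * h₁⁻¹ = (h₁ * h₂) * ↑f * (h₁ * h₂)⁻¹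
        group
      rw [harg] at e1
      have hcoe : ((⟨h₂⁻¹ * ↑(g h₁) * h₂, hmem⟩ * g h₂ : ↥F) : H)
          = h₂⁻¹ * ↑(g h₁) * h₂ * ↑(g h₂) := rfl
      rw [hcoe]
      calc (h₂⁻¹ * ↑(g h₁) * h₂ * ↑(g h₂)) * ↑(γ f) * (h₂⁻¹ * ↑(g h₁) * h₂ * ↑(g h₂))⁻¹
          = h₂⁻¹ * ↑(g h₁) * h₂ * (↑(g h₂) * ↑(γ f) * (↑(g h₂))⁻¹) * h₂⁻¹ * (↑(g h₁))⁻¹ * h₂ := by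
            group
        _ = h₂⁻¹ * ↑(g h₁) * h₂ * (h₂⁻¹ * ↑(γ ⟨h₂ * ↑f * h₂⁻¹, conj_mem' h₂ f⟩) * h₂) * h₂⁻¹ *
              (↑(g h₁))⁻¹ * h₂ := by rw [e2]
        _ = h₂⁻¹ * (↑(g h₁) * ↑(γ ⟨h₂ * ↑f * h₂⁻¹, conj_mem' h₂ f⟩) * (↑(g h₁))⁻¹) * h₂ := by
            group
        _ = h₂⁻¹ * (h₁⁻¹ * ↑(γ ⟨(h₁ * h₂) * ↑f * (h₁ * h₂)⁻¹, conj_mem' (h₁ * h₂) f⟩) * h₁) *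
              h₂ := by rw [e1]
        _ = (h₁ * h₂)⁻¹ * ↑(γ ⟨(h₁ * h₂) * ↑f * (h₁ * h₂)⁻¹, conj_mem' (h₁ * h₂) f⟩) *
              (h₁ * h₂) := by group
    have := Pp_unique hZ (hg (h₁ * h₂)) hPr
    rw [this]
    rfl
  have hgf : ∀ f : ↥F, g ↑f = f⁻¹ * γ f := by
    intro f
    have hP : Pp γ (↑f) (f⁻¹ * γ f) := by
      intro f'
      have harg : (⟨↑f * ↑f' * (↑f : H)⁻¹, conj_mem' ↑f f'⟩ : ↥F) = f * f' * f⁻¹ := by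
        rw [Subtype.ext_iff]; push_cast; rfl
      rw [harg]
      push_cast [map_mul, map_inv]
      group
    exact Pp_unique hZ (hg ↑f) hP
  have hmap : ∀ h₁ h₂ : H, (h₁ * h₂) * ↑(g (h₁ * h₂)) = (h₁ * ↑(g h₁)) * (h₂ * ↑(g h₂)) := by
    intro h₁ h₂
    rw [gmul]
    group
  refine ⟨MonoidHom.mk' (fun h => h * ((g h : ↥F) : H)) hmap, fun h => ⟨g h, rfl⟩, fun f => ?_⟩
  show (f : H) * ((g ↑f : ↥F) : H) = ((γ f : ↥F) : H)
  rw [hgf]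
  push_cast
  group

private lemma buildUniq (hZ : ∀ z : ↥F, (∀ x : ↥F, z * x = x * z) → z = 1) (γ : MulAut ↥F)
    (B₁ B₂ : H →* H)
    (h1a : ∀ h : H, ∃ g : ↥F, B₁ h = h * ↑g) (h1b : ∀ f : ↥F, B₁ ↑f = ↑(γ f))
    (h2a : ∀ h : H, ∃ g : ↥F, B₂ h = h * ↑g) (h2b : ∀ f : ↥F, B₂ ↑f = ↑(γ f)) :
    B₁ = B₂ := by
  ext h
  obtain ⟨g₁, hg₁⟩ := h1a h
  obtain ⟨g₂, hg₂⟩ := h2a h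
  have key : ∀ (B : H →* H) (g : ↥F), B h = h * ↑g → (∀ f : ↥F, B ↑f = ↑(γ f)) → Pp γ h g := by
    intro B g hBh hBf f
    have e1 : B (h * ↑f * h⁻¹) = ↑(γ ⟨h * ↑f * h⁻¹, conj_mem' h f⟩) :=
      hBf ⟨h * ↑f * h⁻¹, conj_mem' h f⟩
    have e2 : B (h * ↑f * h⁻¹) = (h * ↑g) * ↑(γ f) * (h * ↑g)⁻¹ := by
      rw [map_mul, map_mul, hBh, hBf f, map_inv, hBh]
    have e3 : (↑(γ ⟨h * ↑f * h⁻¹, conj_mem' h f⟩) : H)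
        = h * ((g : H) * ↑(γ f) * (g : H)⁻¹) * h⁻¹ := by
      rw [← e1, e2]; group
    rw [e3]
    group
  have := Pp_unique hZ (key B₁ g₁ hg₁ h1b) (key B₂ g₂ hg₂ h2b)
  rw [hg₁, hg₂, this]

end build
open Pointwise in
/-- Let `H` be finitely generated and not virtually cyclic, and `F` a non-abelian free
normal finite-index subgroup. Then the automorphisms of `H` preserving `F` and acting
trivially on `H/F` form a finite-index subgroup `N` of `Aut(H)`, and restriction to `F`
gives an injective homomorphism `N → Aut(F)` whose image is exactly `Aut_H(F)`, the set
of automorphisms of `F` commuting with every `Ad(h)` up to inner automorphisms. -/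
theorem restriction_to_finite_index_free_subgroup {H : Type*} [Group H]
    (hfg : Group.FG H)
    (hnvc : ¬ ∃ C : Subgroup H, IsCyclic ↥C ∧ C.FiniteIndex)
    (F : Subgroup H) [F.Normal] [IsFreeGroup ↥F] (hFfi : F.FiniteIndex)
    (hnab : ∃ x y : ↥F, x * y ≠ y * x) :
    ∃ N : Subgroup (MulAut H),
      (∀ β : MulAut H, β ∈ N ↔
        ((∀ x : H, x ∈ F ↔ β x ∈ F) ∧ ∀ h : H, β h * h⁻¹ ∈ F)) ∧
      N.FiniteIndex ∧
      ∃ r : ↥N →* MulAut ↥F,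
        Function.Injective r ∧
        (∀ (β : ↥N) (x : ↥F), ((r β) x : H) = (β : MulAut H) x) ∧
        Set.range r = { α : MulAut ↥F | ∀ h : H, ∃ f : ↥F, ∀ x : ↥F,
          (MulAut.conjNormal h)⁻¹ (α⁻¹ ((MulAut.conjNormal h) (α x))) = f * x * f⁻¹ } := by
  classical
  -- trivial center of F
  have hZ : ∀ z : ↥F, (∀ x : ↥F, z * x = x * z) → z = 1 := by
    intro z hzc
    obtain ⟨x, y, hxy⟩ := hnab
    let e := IsFreeGroup.toFreeGroup (G := ↥F)
    refine e.injective ?_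
    rw [map_one]
    refine freeGroup_center_triv (e z) (e x) (e y) ?_ ?_
    · intro g
      obtain ⟨u, rfl⟩ := e.surjective g
      rw [← map_mul, ← map_mul, hzc u]
    · intro hc
      exact hxy (e.injective (by rw [map_mul, map_mul]; exact hc))
  -- the subgroup N
  let N : Subgroup (MulAut H) :=
    { carrier := {β | (∀ x : H, x ∈ F ↔ β x ∈ F) ∧ ∀ h : H, β h * h⁻¹ ∈ F}
      one_mem' := ⟨fun x => by simp, fun h => by simpa using F.one_mem⟩
      mul_mem' := by
        rintro β γ ⟨hβ1, hβ2⟩ ⟨hγ1, hγ2⟩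
        constructor
        · intro x
          rw [hγ1 x, hβ1 (γ x)]
          rfl
        · intro h
          have h1 : β (γ h) * (γ h)⁻¹ ∈ F := hβ2 (γ h)
          have h2 : γ h * h⁻¹ ∈ F := hγ2 h
          have := mul_mem h1 h2
          rw [show β (γ h) * (γ h)⁻¹ * (γ h * h⁻¹) = β (γ h) * h⁻¹ by group] at this
          exact this
      inv_mem' := by
        rintro β ⟨hβ1, hβ2⟩
        constructor
        · intro x
          rw [show (β⁻¹ : MulAut H) x = β.symm x from rfl]
          rw [hβ1 (β.symm x), MulEquiv.apply_symm_apply]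
        · intro h
          have := hβ2 (β⁻¹ h)
          rw [show β (β⁻¹ h) = h from MulEquiv.apply_symm_apply β h] at this
          have h2 := inv_mem this
          rw [show (h * (β⁻¹ h : H)⁻¹)⁻¹ = β⁻¹ h * h⁻¹ by group] at h2
          exact h2 }
  refine ⟨N, fun β => Iff.rfl, ?_, ?_⟩
  · -- finite index
    haveI := hFfi
    have horbit : (MulAction.orbit (MulAut H) F) ⊆ {K : Subgroup H | K.index = F.index} := by
      rintro K ⟨β, rfl⟩
      show (β • F).index = F.index
      have hinj : Function.Injective (MulDistribMulAction.toMonoidEnd (MulAut H) H β) := by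
        intro a b hab
        exact β.injective hab
      have hsurj : Function.Surjective (MulDistribMulAction.toMonoidEnd (MulAut H) H β) := by
        intro a
        exact ⟨β⁻¹ a, MulEquiv.apply_symm_apply β a⟩
      exact Subgroup.index_map_equiv (H := F) β
    have hfinorb : (MulAction.orbit (MulAut H) F).Finite :=
      (finite_subgroups_of_index hfg F.index hFfi.index_ne_zero).subset horbit
    set S₀ := MulAction.stabilizer (MulAut H) F with hS₀def
    have hS₀fi : S₀.FiniteIndex := by
      constructor
      rw [MulAction.index_stabilizer]
      intro h0
      rw [Set.ncard_eq_zero hfinorb] at h0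
      exact absurd (h0 ▸ MulAction.mem_orbit_self F) (Set.notMem_empty _)
    -- each β in the stabilizer maps F onto F
    have hmapF : ∀ β : ↥S₀, F.map ((β : MulAut H) : H →* H) = F := by
      intro β
      have h2 : (β : MulAut H) • F = F := β.2
      ext x
      constructor
      · rintro ⟨y, hy, rfl⟩
        rw [← h2]
        exact Subgroup.smul_mem_pointwise_smul y _ _ hy
      · intro hx
        rw [← h2, Subgroup.mem_pointwise_smul_iff_inv_smul_mem] at hx
        exact ⟨(β : MulAut H)⁻¹ x, hx, MulEquiv.apply_symm_apply _ x⟩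
    have hcongr_mk : ∀ (β : ↥S₀) (h : H),
        QuotientGroup.congr F F (β : MulAut H) (hmapF β) ((h : H) : H ⧸ F)
          = (((β : MulAut H) h : H) : H ⧸ F) := by
      intro β h
      rfl
    let φ : ↥S₀ →* MulAut (H ⧸ F) := MonoidHom.mk'
      (fun β => QuotientGroup.congr F F (β : MulAut H) (hmapF β)) (by
        intro β γ
        ext q
        induction q using QuotientGroup.induction_on with
        | H h =>
          rw [hcongr_mk, MulAut.mul_apply, hcongr_mk, hcongr_mk]
          rfl)
    haveI : Finite (MulAut (H ⧸ F)) :=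
      Finite.of_injective (fun (e : MulAut (H ⧸ F)) => ⇑e) DFunLike.coe_injective
    have hK₀fi : φ.ker.FiniteIndex := by
      constructor
      rw [Subgroup.index_ker]
      exact Nat.card_pos.ne'
    have hA_le : φ.ker.map S₀.subtype ≤ S₀ := Subgroup.map_subtype_le _
    have hAfi : (φ.ker.map S₀.subtype).FiniteIndex := by
      constructor
      have h1 := Subgroup.relIndex_mul_index hA_le
      have h2 : (φ.ker.map S₀.subtype).relIndex S₀ = φ.ker.index := by
        rw [Subgroup.relIndex]
        congr 1
        exact Subgroup.comap_map_eq_self_of_injective S₀.subtype_injective _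
      rw [← h1, h2]
      exact Nat.mul_ne_zero hK₀fi.index_ne_zero hS₀fi.index_ne_zero
    refine Subgroup.finiteIndex_of_le (H := φ.ker.map S₀.subtype) ?_
    rintro β ⟨β', hβ', rfl⟩
    constructor
    · intro x
      have h2 : (β' : MulAut H) • F = F := β'.2
      constructor
      · intro hx
        rw [← h2]
        exact Subgroup.smul_mem_pointwise_smul x _ _ hx
      · intro hx
        rw [← h2] at hx
        have h5 : (β' : MulAut H) • x ∈ (β' : MulAut H) • F := hx
        rwa [Subgroup.smul_mem_pointwise_smul_iff] at h5
    · intro h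
      have hker : φ β' = 1 := hβ'
      have : φ β' ((h : H) : H ⧸ F) = ((h : H) : H ⧸ F) := by rw [hker]; rfl
      have hmk : (((β' : MulAut H) h : H) : H ⧸ F) = ((h : H) : H ⧸ F) := by
        rw [← hcongr_mk β' h]
        exact this
      rw [QuotientGroup.eq] at hmk
      have h3 := inv_mem hmk
      rw [show (((β' : MulAut H) h)⁻¹ * h)⁻¹ = h⁻¹ * ((β' : MulAut H) h) by group] at h3
      have h4 := Subgroup.Normal.conj_mem ‹F.Normal› _ h3 h
      rw [show h * (h⁻¹ * ((β' : MulAut H) h)) * h⁻¹ = (β' : MulAut H) h * h⁻¹ by group] at h4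
      exact h4
  · -- the restriction homomorphism
    let rmap : ↥N → MulAut ↥F := fun β =>
      { toFun := fun x => ⟨(β : MulAut H) x, (β.2.1 x).mp x.2⟩
        invFun := fun x => ⟨((β : MulAut H))⁻¹ x, ((β⁻¹ : ↥N).2.1 x).mp x.2⟩
        left_inv := fun x => Subtype.ext (MulEquiv.symm_apply_apply (β : MulAut H) (x : H))
        right_inv := fun x => Subtype.ext (MulEquiv.apply_symm_apply (β : MulAut H) (x : H))
        map_mul' := fun x y => Subtype.ext (by push_cast; exact map_mul (β : MulAut H) (x : H) (y : H)) }
    let r : ↥N →* MulAut ↥F := MonoidHom.mk' rmap (by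
      intro β γ
      ext x
      rfl)
    have hval : ∀ (β : ↥N) (x : ↥F), ((r β x : ↥F) : H) = (β : MulAut H) (x : H) := fun β x => rfl
    refine ⟨r, ?_, hval, ?_⟩
    · -- injectivity
      refine (injective_iff_map_eq_one r).mpr ?_
      intro β hβ1
      have hfix : ∀ x : ↥F, (β : MulAut H) ↑x = ↑x := by
        intro x
        have h1 : r β x = x := by rw [hβ1]; rfl
        exact congrArg Subtype.val h1
      have hpt : ∀ h : H, (β : MulAut H) h = h := by
        intro h
        have hgF : (β : MulAut H) h * h⁻¹ ∈ F := β.2.2 h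
        have hc : h⁻¹ * (β : MulAut H) h ∈ F := by
          have h4 := Subgroup.Normal.conj_mem ‹F.Normal› _ hgF h⁻¹
          rw [show h⁻¹ * ((β : MulAut H) h * h⁻¹) * h⁻¹⁻¹
              = h⁻¹ * (β : MulAut H) h by group] at h4
          exact h4
        have hzc : ∀ x : ↥F, (⟨h⁻¹ * (β : MulAut H) h, hc⟩ : ↥F) * x
            = x * ⟨h⁻¹ * (β : MulAut H) h, hc⟩ := by
          intro x
          have h1 : (β : MulAut H) (h * ↑x * h⁻¹) = h * ↑x * h⁻¹ :=
            hfix ⟨h * ↑x * h⁻¹, conj_mem' h x⟩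
          have h2 : (β : MulAut H) (h * ↑x * h⁻¹)
              = (β : MulAut H) h * ↑x * ((β : MulAut H) h)⁻¹ := by
            rw [map_mul, map_mul, map_inv, hfix x]
          have h3 : (β : MulAut H) h * ↑x * ((β : MulAut H) h)⁻¹ = h * ↑x * h⁻¹ :=
            h2.symm.trans h1
          rw [Subtype.ext_iff]
          push_cast
          calc (h⁻¹ * (β : MulAut H) h) * ↑x
              = h⁻¹ * ((β : MulAut H) h * ↑x * ((β : MulAut H) h)⁻¹) * ((β : MulAut H) h) := by
                group
            _ = h⁻¹ * (h * ↑x * h⁻¹) * ((β : MulAut H) h) := by rw [h3]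
            _ = ↑x * (h⁻¹ * (β : MulAut H) h) := by group
        have hz1 := hZ _ hzc
        have h6 : h⁻¹ * (β : MulAut H) h = 1 := Subtype.ext_iff.mp hz1
        exact (inv_mul_eq_one.mp h6).symm
      have hβ1' : (β : MulAut H) = 1 := by
        ext h
        exact hpt h
      exact Subtype.ext hβ1'
    · -- the range
      ext α
      simp only [Set.mem_setOf_eq, Set.mem_range]
      constructor
      · rintro ⟨β, rfl⟩
        intro h
        have hmem : h⁻¹ * ((β : MulAut H))⁻¹ h ∈ F := by
          have h5 : ((β : MulAut H))⁻¹ h * h⁻¹ ∈ F := (β⁻¹ : ↥N).2.2 h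
          have h4 := Subgroup.Normal.conj_mem ‹F.Normal› _ h5 h⁻¹
          rw [show h⁻¹ * (((β : MulAut H))⁻¹ h * h⁻¹) * h⁻¹⁻¹
              = h⁻¹ * ((β : MulAut H))⁻¹ h by group] at h4
          exact h4
        refine ⟨⟨h⁻¹ * ((β : MulAut H))⁻¹ h, hmem⟩, fun x => ?_⟩
        rw [Subtype.ext_iff]
        push_cast
        rw [MulAut.conjNormal_inv_apply]
        rw [show ((r β)⁻¹ : MulAut ↥F) = r β⁻¹ from (map_inv r β).symm]
        rw [show (((r β⁻¹) (MulAut.conjNormal h (r β x)) : ↥F) : H)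
            = ((β⁻¹ : ↥N) : MulAut H) ↑(MulAut.conjNormal h (r β x)) from rfl]
        rw [MulAut.conjNormal_apply]
        rw [hval]
        rw [show ((β⁻¹ : ↥N) : MulAut H) = ((β : MulAut H))⁻¹ from rfl]
        rw [map_mul, map_mul, map_inv]
        rw [show ((β : MulAut H))⁻¹ ((β : MulAut H) ↑x) = ↑x
            from MulEquiv.symm_apply_apply _ _]
        group
      · intro hα
        have hQ'' : ∀ h : H, ∃ f : ↥F,
            (MulAut.conjNormal h)⁻¹ * α⁻¹ * MulAut.conjNormal h * α = MulAut.conj f := by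
          intro h
          obtain ⟨f, hf⟩ := hα h
          refine ⟨f, ?_⟩
          ext x
          simp only [MulAut.mul_apply, MulAut.conj_apply]
          exact Subtype.ext_iff.mp (hf x)
        have hconj_inv : ∀ (δ : MulAut ↥F) (f : ↥F),
            δ * (MulAut.conj f)⁻¹ * δ⁻¹ = MulAut.conj (δ f⁻¹) := by
          intro δ f
          rw [← map_inv MulAut.conj f]
          ext x
          simp only [MulAut.mul_apply, MulAut.conj_apply]
          rw [map_mul, map_mul]
          rw [show δ (δ⁻¹ x) = x from MulEquiv.apply_symm_apply _ _]
          simp only [map_inv]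
        have hQa : ∀ h : H, ∃ g : ↥F,
            (MulAut.conjNormal h)⁻¹ * α * MulAut.conjNormal h * α⁻¹ = MulAut.conj g := by
          intro h
          obtain ⟨f, hf⟩ := hQ'' h
          refine ⟨α f⁻¹, ?_⟩
          have hrw : (MulAut.conjNormal h)⁻¹ * α * MulAut.conjNormal h * α⁻¹
              = α * ((MulAut.conjNormal h)⁻¹ * α⁻¹ * MulAut.conjNormal h * α)⁻¹ * α⁻¹ := by
            group
          rw [hrw, hf, hconj_inv]
        have hQb : ∀ h : H, ∃ g : ↥F,
            (MulAut.conjNormal h)⁻¹ * α⁻¹ * MulAut.conjNormal h * (α⁻¹)⁻¹ = MulAut.conj g := by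
          intro h
          obtain ⟨f, hf⟩ := hQ'' h
          exact ⟨f, by rw [inv_inv]; exact hf⟩
        obtain ⟨B, hBa, hBb⟩ := build hZ α hQa
        obtain ⟨B', hB'a, hB'b⟩ := build hZ α⁻¹ hQb
        have hone : ∀ h : H, ∃ g : ↥F, (MonoidHom.id H) h = h * ↑g :=
          fun h => ⟨1, by simp⟩
        have honeF : ∀ f : ↥F, (MonoidHom.id H) ↑f = ↑((1 : MulAut ↥F) f) := fun f => rfl
        have hcompa : ∀ h : H, ∃ g : ↥F, (B'.comp B) h = h * ↑g := by
          intro h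
          obtain ⟨g, hg⟩ := hBa h
          obtain ⟨g', hg'⟩ := hB'a h
          refine ⟨g' * (α⁻¹ g), ?_⟩
          rw [MonoidHom.comp_apply, hg, map_mul, hg', hB'b g]
          push_cast
          group
        have hcompb : ∀ f : ↥F, (B'.comp B) ↑f = ↑((1 : MulAut ↥F) f) := by
          intro f
          rw [MonoidHom.comp_apply, hBb f, hB'b (α f)]
          rw [show α⁻¹ (α f) = f from MulEquiv.symm_apply_apply _ _]
          rfl
        have hBB' : B'.comp B = MonoidHom.id H := buildUniq hZ 1 _ _ hcompa hcompb hone honeF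
        have hcompa2 : ∀ h : H, ∃ g : ↥F, (B.comp B') h = h * ↑g := by
          intro h
          obtain ⟨g, hg⟩ := hBa h
          obtain ⟨g', hg'⟩ := hB'a h
          refine ⟨g * (α g'), ?_⟩
          rw [MonoidHom.comp_apply, hg', map_mul, hg, hBb g']
          push_cast
          group
        have hcompb2 : ∀ f : ↥F, (B.comp B') ↑f = ↑((1 : MulAut ↥F) f) := by
          intro f
          rw [MonoidHom.comp_apply, hB'b f, hBb (α⁻¹ f)]
          rw [show α (α⁻¹ f) = f from MulEquiv.apply_symm_apply _ _]
          rfl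
        have hB'B : B.comp B' = MonoidHom.id H := buildUniq hZ 1 _ _ hcompa2 hcompb2 hone honeF
        let β : MulAut H :=
          { toFun := B
            invFun := B'
            left_inv := fun h => DFunLike.congr_fun hBB' h
            right_inv := fun h => DFunLike.congr_fun hB'B h
            map_mul' := B.map_mul }
        have hβN : β ∈ N := by
          constructor
          · intro x
            constructor
            · intro hx
              show B x ∈ F
              rw [show (x : H) = ((⟨x, hx⟩ : ↥F) : H) from rfl, hBb]
              exact (α ⟨x, hx⟩).2
            · intro hx
              obtain ⟨g, hg⟩ := hBa x
              have hx' : B x ∈ F := hx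
              rw [hg] at hx'
              have h7 : x = (x * ↑g) * (↑g)⁻¹ := by group
              rw [h7]
              exact mul_mem hx' (inv_mem g.2)
          · intro h
            obtain ⟨g, hg⟩ := hBa h
            show B h * h⁻¹ ∈ F
            rw [hg, show h * ↑g * h⁻¹ = h * ↑g * h⁻¹ from rfl]
            have := Subgroup.Normal.conj_mem ‹F.Normal› _ g.2 h
            exact this
        refine ⟨⟨β, hβN⟩, ?_⟩
        ext x
        exact hBb x
end
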